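/- arXiv:2505.18410 — 11 statements merged into one kernel-verified Lean document; each statement's English description precedes it below -/
import Mathlib

section
/- Let K ≥ 1 and let Γ be a K×K matrix with entries in {0,1} that is lower triangular with unit diagonal, i.e. Γ_{k,k} = 1 for all k and Γ_{k,k'} = 0 whenever k' > k. For each k ∈ {1,…,K} let θ_k : {0,1}^K → [0,1] satisfy: θ_k(h) = θ_k(h') if and only if h_{k'} = h'_{k'} for every k' with Γ_{k,k'} = 1. Define the 2^K × 2^K real matrix M, with rows and columns indexed by x, h ∈ {0,1}^K, by M(x,h) = ∏_{k=1}^K θ_k(h)^{x_k} (1−θ_k(h))^{1−x_k}. Then M is invertible, i.e. the conditional probability table of K binary responses given K binary latent variables with triangular bipartite graph has full column rank 2^K. -/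
theorem aux0 : ∀ (K : ℕ)
    (Γ : Fin K → Fin K → Bool)
    (_hdiag : ∀ k, Γ k k = true)
    (_hupper : ∀ k k' : Fin K, k < k' → Γ k k' = false)
    (θ : Fin K → (Fin K → Bool) → ℝ)
    (_hθ : ∀ k h h', θ k h = θ k h' ↔ (∀ k', Γ k k' = true → h k' = h' k')),
    (Matrix.of fun x h : Fin K → Bool =>
        ∏ k, (if x k then θ k h else 1 - θ k h)).det ≠ 0 := by
  intro K
  induction K with
  | zero =>
    intro _ _ _ θ _
    rw [Matrix.det_unique]
    simp
  | succ K ih =>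
    intro Γ hdiag hupper θ hθ
    set Γ' : Fin K → Fin K → Bool := fun k k' => Γ k.castSucc k'.castSucc with hΓ'
    set θ' : Fin K → (Fin K → Bool) → ℝ :=
      fun k h' => θ k.castSucc (Fin.snoc h' false) with hθ'
    have key : ∀ (k : Fin K) (h' : Fin K → Bool) (b : Bool),
        θ k.castSucc (Fin.snoc h' b) = θ' k h' := by
      intro k h' b
      rw [hθ', hθ]
      intro j hj
      rcases Fin.eq_castSucc_or_eq_last j with ⟨j', rfl⟩ | rfl
      · simp
      · exact absurd hj (by simp [hupper _ _ (Fin.castSucc_lt_last k)])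
    set A : Matrix (Fin K → Bool) (Fin K → Bool) ℝ :=
      Matrix.of (fun x h : Fin K → Bool =>
        ∏ k, (if x k then θ' k h else 1 - θ' k h)) with hA
    have hAdet : A.det ≠ 0 := by
      apply ih Γ'
      · intro k; exact hdiag _
      · intro k k' hlt; exact hupper _ _ (by simpa using hlt)
      · intro k h h'
        rw [hθ', hθ]
        constructor
        · intro H k' hk'
          simpa using H k'.castSucc hk'
        · intro H j hj
          rcases Fin.eq_castSucc_or_eq_last j with ⟨j', rfl⟩ | rfl
          · simpa using H j' hj
          · simp
    set t : (Fin K → Bool) → Bool → ℝ := fun h' b => θ (Fin.last K) (Fin.snoc h' b) with ht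
    set B : (Fin K → Bool) → Matrix Bool Bool ℝ :=
      fun h' => Matrix.of (fun a b : Bool => if a then t h' b else 1 - t h' b) with hB
    set e : (Fin K → Bool) × Bool ≃ (Fin (K + 1) → Bool) :=
      { toFun := fun p => Fin.snoc p.1 p.2
        invFun := fun h => (fun k => h k.castSucc, h (Fin.last K))
        left_inv := by rintro ⟨h', b⟩; simp
        right_inv := by intro h; exact Fin.snoc_init_self h } with he
    set M : Matrix (Fin (K+1) → Bool) (Fin (K+1) → Bool) ℝ :=
      Matrix.of (fun x h : Fin (K+1) → Bool =>
        ∏ k, (if x k then θ k h else 1 - θ k h)) with hM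
    have hsub : M.submatrix e e =
        (Matrix.blockDiagonal (fun _ : Bool => A)) *
        ((Matrix.blockDiagonal B).submatrix (Equiv.prodComm _ _) (Equiv.prodComm _ _)) := by
      ext ⟨x', a⟩ ⟨h', b⟩
      have hrhs : ((Matrix.blockDiagonal (fun _ : Bool => A)) *
          ((Matrix.blockDiagonal B).submatrix (Equiv.prodComm _ _) (Equiv.prodComm _ _)))
          (x', a) (h', b) = A x' h' * B h' a b := by
        rw [Matrix.mul_apply, Fintype.sum_prod_type]
        simp [Matrix.blockDiagonal_apply, Finset.sum_ite_eq, Finset.sum_ite_eq',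
          mul_ite, ite_mul]
      rw [hrhs]
      show M (Fin.snoc x' a) (Fin.snoc h' b) = _
      rw [hM]
      simp only [Matrix.of_apply]
      rw [Fin.prod_univ_castSucc]
      simp only [Fin.snoc_castSucc, Fin.snoc_last, key]
      rfl
    have hdet : (M.submatrix e e).det ≠ 0 := by
      rw [hsub, Matrix.det_mul]
      apply mul_ne_zero
      · rw [Matrix.det_blockDiagonal]
        exact Finset.prod_ne_zero_iff.2 fun _ _ => hAdet
      · rw [Matrix.det_submatrix_equiv_self, Matrix.det_blockDiagonal]
        refine Finset.prod_ne_zero_iff.2 fun h' _ => ?_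
        have hdB : (B h').det = t h' true - t h' false := by
          rw [hB, ← Matrix.det_submatrix_equiv_self finTwoEquiv, Matrix.det_fin_two]
          simp [finTwoEquiv]
          ring
        rw [hdB, sub_ne_zero]
        intro hc
        rw [ht] at hc
        have := (hθ _ _ _).1 hc (Fin.last K) (hdiag _)
        simp at this
    rw [Matrix.det_submatrix_equiv_self] at hdet
    exact hdet


/-- If `Γ` is a `K × K` binary lower-triangular matrix with unit diagonal,
and each conditional Bernoulli parameter `θ k : {0,1}^K → [0,1]` satisfies
`θ k h = θ k h'` iff `h` and `h'` agree on the parents of `k` (those `k'` with `Γ k k' = 1`),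
then the `2^K × 2^K` conditional probability table
`M(x, h) = ∏ k, θ k h ^ (x k) * (1 - θ k h) ^ (1 - x k)` is invertible. -/
theorem stmt0 (K : ℕ) (hK : 1 ≤ K)
    (Γ : Fin K → Fin K → Bool)
    (hdiag : ∀ k, Γ k k = true)
    (hupper : ∀ k k' : Fin K, k < k' → Γ k k' = false)
    (θ : Fin K → (Fin K → Bool) → ℝ)
    (hθ01 : ∀ k h, 0 ≤ θ k h ∧ θ k h ≤ 1)
    (hθ : ∀ k h h', θ k h = θ k h' ↔ (∀ k', Γ k k' = true → h k' = h' k')) :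
    (Matrix.of fun x h : Fin K → Bool =>
        ∏ k, (if x k then θ k h else 1 - θ k h)).det ≠ 0 :=
  aux0 K Γ hdiag hupper θ hθ
end

section
/- Let K ≥ 1 and let Γ be a K×K binary matrix that is lower triangular with unit diagonal (Γ_{k,k} = 1 and Γ_{k,k'} = 0 for k' > k). For each k let θ_k : {0,1}^K → [0,1] satisfy θ_k(h) = θ_k(h') if and only if h_{k'} = h'_{k'} for every k' with Γ_{k,k'} = 1. Define the 2^K × 2^K real matrix T by T(x,h) = ∏_{k : x_k = 1} θ_k(h), with the empty product equal to 1, for x, h ∈ {0,1}^K. Then T is invertible. -/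
open Matrix Fin

/-- The reindexing equivalence splitting the hypercube by the last coordinate. -/
def splitEquiv (K : ℕ) : (Fin K → Bool) ⊕ (Fin K → Bool) ≃ (Fin (K + 1) → Bool) where
  toFun := Sum.elim (fun h => Fin.snoc h false) (fun h => Fin.snoc h true)
  invFun f := if f (Fin.last K) then .inr (f ∘ Fin.castSucc) else .inl (f ∘ Fin.castSucc)
  left_inv s := by
    rcases s with h | h <;> simp [Fin.snoc_last]
  right_inv f := by
    rcases hb : f (Fin.last K) with _ | _ <;> simp [hb] <;> funext j <;>
      induction j using Fin.lastCases <;> simp [hb]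

theorem aux1 : ∀ (K : ℕ) (Γ : Fin K → Fin K → Bool)
    (_ : ∀ k, Γ k k = true)
    (_ : ∀ k k' : Fin K, k < k' → Γ k k' = false)
    (θ : Fin K → (Fin K → Bool) → ℝ)
    (_ : ∀ k h h', θ k h = θ k h' ↔ (∀ k', Γ k k' = true → h k' = h' k')),
    (Matrix.of fun x h : Fin K → Bool =>
        ∏ k, (if x k then θ k h else 1)).det ≠ 0 := by
  intro K
  induction K with
  | zero =>
    intro Γ hdiag hupper θ hθ
    have : (Matrix.of fun x h : Fin 0 → Bool =>
        ∏ k, (if x k then θ k h else 1)).det = 1 := by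
      rw [Matrix.det_unique]
      simp
    rw [this]; norm_num
  | succ K ih =>
    intro Γ hdiag hupper θ hθ
    -- restricted data
    set Γ' : Fin K → Fin K → Bool := fun k k' => Γ k.castSucc k'.castSucc with hΓ'
    set θ' : Fin K → (Fin K → Bool) → ℝ :=
      fun k h => θ k.castSucc (Fin.snoc h false) with hθ'def
    -- independence of last coordinate for k < last
    have indep : ∀ (k : Fin K) (h : Fin K → Bool) (b : Bool),
        θ k.castSucc (Fin.snoc h b) = θ' k h := by
      intro k h b
      rw [hθ'def]
      rw [hθ]
      intro j hj
      induction j using Fin.lastCases with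
      | last =>
        have := hupper k.castSucc (Fin.last K) (Fin.castSucc_lt_last k)
        rw [this] at hj; exact absurd hj (by simp)
      | cast i => simp
    have hdiag' : ∀ k, Γ' k k = true := fun k => hdiag _
    have hupper' : ∀ k k' : Fin K, k < k' → Γ' k k' = false := by
      intro k k' hkk'
      exact hupper _ _ (by simpa using hkk')
    have hθ'' : ∀ k h h', θ' k h = θ' k h' ↔
        (∀ k', Γ' k k' = true → h k' = h' k') := by
      intro k h h'
      rw [hθ'def]; rw [hθ]
      constructor
      · intro H k' hk'
        have := H k'.castSucc hk'
        simpa using this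
      · intro H j hj
        induction j using Fin.lastCases with
        | last =>
          have := hupper k.castSucc (Fin.last K) (Fin.castSucc_lt_last k)
          rw [this] at hj; exact absurd hj (by simp)
        | cast i => simpa using H i hj
    set A : Matrix (Fin K → Bool) (Fin K → Bool) ℝ :=
      Matrix.of fun x h => ∏ k, (if x k then θ' k h else 1) with hA
    have hAdet : A.det ≠ 0 := ih Γ' hdiag' hupper' θ' hθ''
    set d : (Fin K → Bool) → ℝ :=
      fun h => θ (Fin.last K) (Fin.snoc h true) - θ (Fin.last K) (Fin.snoc h false) with hd
    have hdne : ∀ h, d h ≠ 0 := by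
      intro h
      rw [hd]
      refine sub_ne_zero.2 fun hc => ?_
      have := (hθ _ _ _).1 hc (Fin.last K) (hdiag _)
      simp at this
    set M : Matrix (Fin (K+1) → Bool) (Fin (K+1) → Bool) ℝ :=
      Matrix.of fun x h : Fin (K+1) → Bool => ∏ k, (if x k then θ k h else 1) with hM
    set D : Bool → Matrix (Fin K → Bool) (Fin K → Bool) ℝ :=
      fun b => Matrix.diagonal (fun h => θ (Fin.last K) (Fin.snoc h b)) with hD
    have entry : ∀ (x h : Fin K → Bool) (b₁ b₂ : Bool),
        M (Fin.snoc x b₁) (Fin.snoc h b₂) =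
          A x h * (if b₁ then θ (Fin.last K) (Fin.snoc h b₂) else 1) := by
      intro x h b₁ b₂
      have hMe : M (Fin.snoc x b₁) (Fin.snoc h b₂) =
          ∏ k : Fin (K+1), (if (Fin.snoc x b₁ : Fin (K+1) → Bool) k = true
            then θ k (Fin.snoc h b₂) else 1) := rfl
      rw [hMe]
      rw [Fin.prod_univ_castSucc]
      congr 1
      · apply Finset.prod_congr rfl
        intro k _
        rw [Fin.snoc_castSucc, indep k h b₂]
      · simp
    have hsub : M.submatrix (splitEquiv K) (splitEquiv K) =
        Matrix.fromBlocks A A (A * D false) (A * D true) := by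
      ext i j
      rcases i with x | x <;> rcases j with h | h <;>
        simp only [Matrix.submatrix_apply, splitEquiv, Equiv.coe_fn_mk, Sum.elim_inl,
          Sum.elim_inr, Matrix.fromBlocks_apply₁₁, Matrix.fromBlocks_apply₁₂,
          Matrix.fromBlocks_apply₂₁, Matrix.fromBlocks_apply₂₂, entry, hD,
          Matrix.mul_diagonal] <;> simp
    have hdetM : M.det = A.det * (A.det * ∏ h, d h) := by
      rw [← Matrix.det_submatrix_equiv_self (splitEquiv K) M, hsub]
      have hDadd : D false + Matrix.diagonal d = D true := by
        show Matrix.diagonal _ + Matrix.diagonal d = Matrix.diagonal _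
        rw [hd, Matrix.diagonal_add]
        congr 1
        funext h
        ring
      have hfac : Matrix.fromBlocks A A (A * D false) (A * D true) =
          Matrix.fromBlocks A 0 (A * D false) (A * Matrix.diagonal d) *
            Matrix.fromBlocks 1 1 0 1 := by
        rw [Matrix.fromBlocks_multiply]
        simp only [Matrix.mul_one, Matrix.mul_zero, Matrix.zero_mul, Matrix.one_mul,
          add_zero, zero_add]
        congr 1
        rw [← Matrix.mul_add, hDadd]
      rw [hfac, Matrix.det_mul, Matrix.det_fromBlocks_zero₁₂,
        Matrix.det_fromBlocks_zero₂₁, Matrix.det_mul, Matrix.det_diagonal, Matrix.det_one]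
      ring
    rw [hdetM]
    exact mul_ne_zero hAdet (mul_ne_zero hAdet (Finset.prod_ne_zero_iff.2 fun h _ => hdne h))

/-- With `Γ` a `K × K` binary lower-triangular matrix with unit diagonal and
`θ k : {0,1}^K → [0,1]` satisfying `θ k h = θ k h'` iff `h, h'` agree on the parents of `k`,
the "survival" table `T(x, h) = ∏_{k : x k = 1} θ k h` is invertible. -/
theorem stmt1 (K : ℕ) (hK : 1 ≤ K)
    (Γ : Fin K → Fin K → Bool)
    (hdiag : ∀ k, Γ k k = true)
    (hupper : ∀ k k' : Fin K, k < k' → Γ k k' = false)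
    (θ : Fin K → (Fin K → Bool) → ℝ)
    (hθ01 : ∀ k h, 0 ≤ θ k h ∧ θ k h ≤ 1)
    (hθ : ∀ k h h', θ k h = θ k h' ↔ (∀ k', Γ k k' = true → h k' = h' k')) :
    (Matrix.of fun x h : Fin K → Bool =>
        ∏ k, (if x k then θ k h else 1)).det ≠ 0 :=
  aux1 K Γ hdiag hupper θ hθ
end

section
/- Let K ≥ 2 and let Γ be a K×K binary matrix that is lower triangular with unit diagonal. For each k ≤ K let θ_k : {0,1}^K → ℝ depend on h only through the coordinates h_{k'} with Γ_{k,k'} = 1 (so θ_k with k < K does not depend on h_K). Index {0,1}^K by the bijection h ↦ Σ_{k=1}^K h_k 2^{k−1} and define the 2^K × 2^K matrix T(x,h) = ∏_{k : x_k = 1} θ_k(h). Let T' be the 2^{K−1} × 2^{K−1} matrix defined analogously from θ'_k(h') := θ_k(h',0) for k ≤ K−1 and h' ∈ {0,1}^{K−1}, using the leading principal (K−1)×(K−1) submatrix of Γ. Then det T = (det T')² · ∏_{h' ∈ {0,1}^{K−1}} (θ_K(h',1) − θ_K(h',0)). -/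
/-- Auxiliary equivalence splitting `Fin (n+1) → Bool` by the last coordinate. -/
def boolSnocEquiv (n : ℕ) : ((Fin n → Bool) ⊕ (Fin n → Bool)) ≃ (Fin (n + 1) → Bool) where
  toFun := Sum.elim (fun x' => Fin.snoc x' false) (fun x' => Fin.snoc x' true)
  invFun := fun x => if x (Fin.last n) then Sum.inr (x ∘ Fin.castSucc)
    else Sum.inl (x ∘ Fin.castSucc)
  left_inv := by rintro (x'|x') <;> simp [Fin.snoc_last, Fin.snoc_castSucc]
  right_inv := by
    intro x
    by_cases hx : x (Fin.last n) <;> simp only [hx, if_true, if_false,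
      Bool.false_eq_true, Sum.elim_inr, Sum.elim_inl] <;>
    · funext k
      refine Fin.lastCases ?_ (fun j => ?_) k <;>
        simp [Fin.snoc_last, Fin.snoc_castSucc, hx]

@[simp] lemma boolSnocEquiv_inl (n : ℕ) (x' : Fin n → Bool) :
    boolSnocEquiv n (Sum.inl x') = Fin.snoc x' false := rfl

@[simp] lemma boolSnocEquiv_inr (n : ℕ) (x' : Fin n → Bool) :
    boolSnocEquiv n (Sum.inr x') = Fin.snoc x' true := rfl

/-- Determinant recursion for the survival table of `K = n + 1 ≥ 2`
binary responses with a lower-triangular bipartite graph: `det T = (det T')² ·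
∏_{h'} (θ_K(h',1) − θ_K(h',0))`, where `T'` is built from the first `n` responses with the
last latent coordinate fixed to `0`. -/
theorem stmt2 (n : ℕ) (hn : 1 ≤ n)
    (Γ : Fin (n + 1) → Fin (n + 1) → Bool)
    (hdiag : ∀ k, Γ k k = true)
    (hupper : ∀ k k' : Fin (n + 1), k < k' → Γ k k' = false)
    (θ : Fin (n + 1) → (Fin (n + 1) → Bool) → ℝ)
    (hθ : ∀ k h h', (∀ k', Γ k k' = true → h k' = h' k') → θ k h = θ k h') :
    (Matrix.of fun x h : Fin (n + 1) → Bool =>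
        ∏ k, (if x k then θ k h else 1)).det
      = ((Matrix.of fun x' h' : Fin n → Bool =>
            ∏ k : Fin n, (if x' k then θ k.castSucc (Fin.snoc h' false) else 1)).det) ^ 2
        * ∏ h' : Fin n → Bool,
            (θ (Fin.last n) (Fin.snoc h' true) - θ (Fin.last n) (Fin.snoc h' false)) := by
  classical
  set M : Matrix (Fin n → Bool) (Fin n → Bool) ℝ :=
    Matrix.of fun x' h' : Fin n → Bool =>
      ∏ k : Fin n, (if x' k then θ k.castSucc (Fin.snoc h' false) else 1) with hM
  set D : Bool → Matrix (Fin n → Bool) (Fin n → Bool) ℝ :=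
    fun b => Matrix.diagonal fun h' => θ (Fin.last n) (Fin.snoc h' b) with hD
  have key : ∀ (a b : Bool) (x' h' : Fin n → Bool),
      (∏ k : Fin (n+1), (if (Fin.snoc x' a : Fin (n+1) → Bool) k then θ k (Fin.snoc h' b) else 1))
      = (if a then θ (Fin.last n) (Fin.snoc h' b) else 1) * M x' h' := by
    intro a b x' h'
    rw [Fin.prod_univ_castSucc]
    simp only [Fin.snoc_castSucc, Fin.snoc_last]
    rw [mul_comm]
    congr 1
    refine Finset.prod_congr rfl fun k _ => ?_
    by_cases hx : x' k
    · simp only [hx, if_true]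
      refine hθ _ _ _ fun k' hk' => ?_
      rcases Fin.eq_castSucc_or_eq_last k' with ⟨j, rfl⟩ | rfl
      · simp [Fin.snoc_castSucc]
      · rw [hupper k.castSucc (Fin.last n) (Fin.castSucc_lt_last k)] at hk'
        exact absurd hk' (by simp)
    · simp [hx]
  have hsub : (Matrix.of fun x h : Fin (n+1) → Bool =>
        ∏ k, (if x k then θ k h else 1)).submatrix (boolSnocEquiv n) (boolSnocEquiv n)
      = Matrix.fromBlocks M M (M * D false) (M * D true) := by
    ext i j
    rcases i with x'|x' <;> rcases j with h'|h' <;>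
      simp [Matrix.submatrix_apply, key, hD, Matrix.mul_diagonal, mul_comm]
  have hdet := Matrix.det_submatrix_equiv_self (boolSnocEquiv n)
    (Matrix.of fun x h : Fin (n+1) → Bool => ∏ k, (if x k then θ k h else 1))
  rw [← hdet, hsub]
  have hfac : Matrix.fromBlocks M M (M * D false) (M * D true)
      = Matrix.fromBlocks M 0 (M * D false) (M * (D true - D false))
        * Matrix.fromBlocks 1 1 0 1 := by
    rw [Matrix.fromBlocks_multiply]
    congr 1 <;> simp [Matrix.mul_sub] <;> abel
  rw [hfac, Matrix.det_mul, Matrix.det_fromBlocks_zero₁₂, Matrix.det_fromBlocks_zero₂₁,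
    Matrix.det_one, mul_one, mul_one, Matrix.det_mul]
  have hdd : D true - D false
      = Matrix.diagonal fun h' =>
          θ (Fin.last n) (Fin.snoc h' true) - θ (Fin.last n) (Fin.snoc h' false) := by
    simp [hD, Matrix.diagonal_sub]
  rw [hdd, Matrix.det_diagonal]
  ring
end

section
/- Let K ≥ 1 and let S1, S2 be disjoint finite index sets, each of size K. For each j ∈ S1 ∪ S2 let γ_j ∈ {0,1}^K and θ_j : {0,1}^K → [0,1] with θ_j(h) = θ_j(h') if and only if h_k = h'_k for all k with γ_{j,k} = 1. Suppose the two K×K matrices whose rows are (γ_j)_{j ∈ S1} and (γ_j)_{j ∈ S2} are each triangular. Let π : {0,1}^K → ℝ with π_h > 0 for all h. Then the 2^K × 2^K matrix N, indexed by a ∈ {0,1}^{S1} and b ∈ {0,1}^{S2}, with N(a,b) = Σ_{h ∈ {0,1}^K} π_h · ∏_{j ∈ S1} θ_j(h)^{a_j}(1−θ_j(h))^{1−a_j} · ∏_{j ∈ S2} θ_j(h)^{b_j}(1−θ_j(h))^{1−b_j}, is invertible, i.e. has rank exactly 2^K. -/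
/-- A `K × K` binary matrix is triangular if its rows and columns can be reordered
(by possibly different permutations) so that all diagonal entries equal `1` and all entries
strictly above the diagonal equal `0`. -/
def IsTriangular {K : ℕ} (M : Fin K → Fin K → Bool) : Prop :=
  ∃ ρ c : Equiv.Perm (Fin K),
    (∀ k, M (ρ k) (c k) = true) ∧ ∀ k k' : Fin K, k < k' → M (ρ k) (c k') = false

open Matrix Kronecker

lemma core_det : ∀ (K : ℕ) (f : Fin K → (Fin K → Bool) → ℝ),
    (∀ (k : Fin K) (h h' : Fin K → Bool), (∀ m, m ≤ k → h m = h' m) → f k h = f k h') →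
    (∀ (k : Fin K) (h h' : Fin K → Bool), (∀ m, m ≠ k → h m = h' m) → h k ≠ h' k →
      f k h ≠ f k h') →
    (Matrix.of fun a h : Fin K → Bool =>
      ∏ k, (if a k then f k h else 1 - f k h)).det ≠ 0 := by
  intro K
  induction K with
  | zero =>
      intro f _ _
      simp [Matrix.det_unique]
  | succ K ih =>
      intro f hdep hstrict
      classical
      set e : (Fin (K+1) → Bool) ≃ Bool × (Fin K → Bool) :=
        { toFun := fun h => (h (Fin.last K), fun k => h k.castSucc)
          invFun := fun p => Fin.snoc p.2 p.1
          left_inv := fun h => by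
            funext m
            cases m using Fin.lastCases with
            | last => simp
            | cast k => simp
          right_inv := fun p => by simp } with he
      set F : Fin K → (Fin K → Bool) → ℝ := fun k g => f k.castSucc (Fin.snoc g false) with hF
      set G : (Fin K → Bool) → Bool → ℝ := fun g t => f (Fin.last K) (Fin.snoc g t) with hG
      set A : Matrix (Fin K → Bool) (Fin K → Bool) ℝ :=
        Matrix.of (fun a g => ∏ k, (if a k then F k g else 1 - F k g)) with hA
      set B : (Fin K → Bool) → Matrix Bool Bool ℝ :=
        fun g => Matrix.of (fun s t => if s then G g t else 1 - G g t) with hB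
      have hf_cast : ∀ (k : Fin K) (g : Fin K → Bool) (t : Bool),
          f k.castSucc (Fin.snoc g t) = F k g := by
        intro k g t
        apply hdep
        intro m hm
        have hm' : m ≠ Fin.last K := (lt_of_le_of_lt hm (Fin.castSucc_lt_last k)).ne
        obtain ⟨m', rfl⟩ := Fin.exists_castSucc_eq.mpr hm'
        simp
      have hM : Matrix.reindex e e (Matrix.of fun a h : Fin (K+1) → Bool =>
            ∏ k, (if a k then f k h else 1 - f k h))
          = ((1 : Matrix Bool Bool ℝ) ⊗ₖ A) * Matrix.blockDiagonal B := by
        ext ⟨s, a⟩ ⟨t, g⟩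
        have hrhs : (((1 : Matrix Bool Bool ℝ) ⊗ₖ A) * Matrix.blockDiagonal B) (s, a) (t, g)
            = A a g * B g s t := by
          simp [Matrix.mul_apply, Fintype.sum_prod_type, Matrix.blockDiagonal_apply,
            Matrix.one_apply, ite_mul, mul_ite]
        rw [hrhs, Matrix.reindex_apply, Matrix.submatrix_apply]
        have hs' : e.symm (s, a) = Fin.snoc a s := rfl
        have hg' : e.symm (t, g) = Fin.snoc g t := rfl
        rw [hs', hg', Matrix.of_apply, Fin.prod_univ_castSucc]
        simp [hf_cast, hG, hB, hA, mul_comm]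
      have hdepF : ∀ (k : Fin K) (g g' : Fin K → Bool),
          (∀ m, m ≤ k → g m = g' m) → F k g = F k g' := by
        intro k g g' hgg
        apply hdep
        intro m hm
        have hm' : m ≠ Fin.last K := (lt_of_le_of_lt hm (Fin.castSucc_lt_last k)).ne
        obtain ⟨m', rfl⟩ := Fin.exists_castSucc_eq.mpr hm'
        simp only [Fin.snoc_castSucc]
        exact hgg m' (by simpa using hm)
      have hstrictF : ∀ (k : Fin K) (g g' : Fin K → Bool),
          (∀ m, m ≠ k → g m = g' m) → g k ≠ g' k → F k g ≠ F k g' := by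
        intro k g g' hoff hk
        apply hstrict
        · intro m hm
          cases m using Fin.lastCases with
          | last => simp
          | cast m' =>
              simp only [Fin.snoc_castSucc]
              exact hoff m' (fun hc => hm (by rw [hc]))
        · simpa using hk
      have hBdet : ∀ g, (B g).det ≠ 0 := by
        intro g
        have h2 : (B g).det = G g true - G g false := by
          rw [← Matrix.det_reindex_self finTwoEquiv.symm (B g)]
          rw [Matrix.det_fin_two]
          simp [Matrix.reindex_apply, hB, finTwoEquiv]
          ring
        rw [h2]
        refine sub_ne_zero_of_ne ?_
        apply hstrict
        · intro m hm
          cases m using Fin.lastCases with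
          | last => exact absurd rfl hm
          | cast m' => simp
        · simp
      have hdet : (Matrix.of fun a h : Fin (K+1) → Bool =>
            ∏ k, (if a k then f k h else 1 - f k h)).det = A.det ^ 2 * ∏ g, (B g).det := by
        rw [← Matrix.det_reindex_self e, hM, Matrix.det_mul, Matrix.det_kronecker,
          Matrix.det_blockDiagonal]
        simp
      rw [hdet]
      exact mul_ne_zero (pow_ne_zero _ (ih F hdepF hstrictF))
        (Finset.prod_ne_zero_iff.mpr fun g _ => hBdet g)

lemma tri_det (K : ℕ) (g : Fin K → (Fin K → Bool) → ℝ)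
    (Γ : Fin K → Fin K → Bool)
    (hcompat : ∀ (k : Fin K) (h h' : Fin K → Bool),
      g k h = g k h' ↔ ∀ m, Γ k m = true → h m = h' m)
    (htri : IsTriangular Γ) :
    (Matrix.of fun a h : Fin K → Bool =>
      ∏ k, (if a k then g k h else 1 - g k h)).det ≠ 0 := by
  obtain ⟨ρ, c, h1, h2⟩ := htri
  set f : Fin K → (Fin K → Bool) → ℝ := fun k h => g (ρ k) (fun m => h (c.symm m)) with hf
  have hdep : ∀ (k : Fin K) (h h' : Fin K → Bool), (∀ m, m ≤ k → h m = h' m) →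
      f k h = f k h' := by
    intro k h h' hm
    apply (hcompat (ρ k) _ _).mpr
    intro m hγ
    have hle : c.symm m ≤ k := by
      by_contra hlt
      have := h2 k (c.symm m) (lt_of_not_ge hlt)
      rw [c.apply_symm_apply] at this
      rw [this] at hγ
      exact Bool.false_ne_true hγ
    exact hm _ hle
  have hstrict : ∀ (k : Fin K) (h h' : Fin K → Bool), (∀ m, m ≠ k → h m = h' m) →
      h k ≠ h' k → f k h ≠ f k h' := by
    intro k h h' _ hk heq
    have := (hcompat (ρ k) _ _).mp heq (c k) (h1 k)
    rw [c.symm_apply_apply] at this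
    exact hk this
  have hcore := core_det K f hdep hstrict
  set eR : Equiv.Perm (Fin K → Bool) := Equiv.arrowCongr ρ (Equiv.refl Bool) with heR
  set eC : Equiv.Perm (Fin K → Bool) := Equiv.arrowCongr c (Equiv.refl Bool) with heC
  set σ : Equiv.Perm (Fin K → Bool) := eR.symm.trans eC with hσ
  set M : Matrix (Fin K → Bool) (Fin K → Bool) ℝ :=
    Matrix.of (fun a h : Fin K → Bool => ∏ k, (if a k then f k h else 1 - f k h)) with hMdef
  have hre : (Matrix.of fun a h : Fin K → Bool => ∏ k, (if a k then g k h else 1 - g k h))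
      = (M.submatrix ⇑eC.symm ⇑eC.symm).submatrix ⇑σ id := by
    ext a h
    rw [Matrix.submatrix_apply, Matrix.submatrix_apply]
    have hσa : eC.symm (σ a) = eR.symm a := by simp [hσ]
    rw [id_eq, hσa, hMdef, Matrix.of_apply, Matrix.of_apply]
    rw [← Equiv.prod_comp ρ (fun j => if a j then g j h else 1 - g j h)]
    apply Finset.prod_congr rfl
    intro k _
    have ha : (eR.symm a) k = a (ρ k) := rfl
    have hh : f k (eC.symm h) = g (ρ k) h := by
      simp only [hf]
      congr 1
      funext m
      simp [heC, Equiv.arrowCongr]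
    rw [ha, hh]
  rw [hre]
  have hperm : ((M.submatrix ⇑eC.symm ⇑eC.symm).submatrix ⇑σ id).det
      = Equiv.Perm.sign σ * (M.submatrix ⇑eC.symm ⇑eC.symm).det :=
    Matrix.det_permute σ _
  rw [hperm, Matrix.det_submatrix_equiv_self]
  refine mul_ne_zero ?_ hcore
  rcases Int.units_eq_one_or (Equiv.Perm.sign σ) with h | h <;> rw [h] <;> norm_num


/-- Let `S1, S2` be disjoint index sets, each of size `K` (enumerated by the
injections `s1, s2` with disjoint ranges). If the two `K × K` binary matrices with rows
`(γ_j)_{j ∈ S1}` and `(γ_j)_{j ∈ S2}` are triangular, the corresponding Bernoulli parameters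
`θ_j` are compatible with `γ_j`, and the latent proportions `π` are strictly positive, then the
joint `2^K × 2^K` probability table `N(a, b)` of the responses indexed by `S1` and `S2`
is invertible (rank exactly `2^K`). -/
theorem stmt3 (K : ℕ) (hK : 1 ≤ K) {ι : Type*}
    (s1 s2 : Fin K → ι)
    (hs1 : Function.Injective s1) (hs2 : Function.Injective s2)
    (hdisj : ∀ k k', s1 k ≠ s2 k')
    (γ : ι → Fin K → Bool)
    (θ : ι → (Fin K → Bool) → ℝ)
    (hθ01 : ∀ j ∈ Set.range s1 ∪ Set.range s2, ∀ h, 0 ≤ θ j h ∧ θ j h ≤ 1)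
    (hθ : ∀ j ∈ Set.range s1 ∪ Set.range s2, ∀ h h',
      θ j h = θ j h' ↔ (∀ k, γ j k = true → h k = h' k))
    (htri1 : IsTriangular (fun k k' => γ (s1 k) k'))
    (htri2 : IsTriangular (fun k k' => γ (s2 k) k'))
    (π : (Fin K → Bool) → ℝ) (hπ : ∀ h, 0 < π h) :
    (Matrix.of fun a b : Fin K → Bool =>
        ∑ h : Fin K → Bool, π h *
          ((∏ k, (if a k then θ (s1 k) h else 1 - θ (s1 k) h)) *
           (∏ k, (if b k then θ (s2 k) h else 1 - θ (s2 k) h)))).det ≠ 0 := by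
  classical
  set A1 : Matrix (Fin K → Bool) (Fin K → Bool) ℝ :=
    Matrix.of (fun a h => ∏ k, (if a k then θ (s1 k) h else 1 - θ (s1 k) h)) with hA1
  set A2 : Matrix (Fin K → Bool) (Fin K → Bool) ℝ :=
    Matrix.of (fun b h => ∏ k, (if b k then θ (s2 k) h else 1 - θ (s2 k) h)) with hA2
  have hdet1 : A1.det ≠ 0 :=
    tri_det K (fun k => θ (s1 k)) (fun k => γ (s1 k))
      (fun k h h' => hθ (s1 k) (Set.mem_union_left _ ⟨k, rfl⟩) h h') htri1
  have hdet2 : A2.det ≠ 0 :=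
    tri_det K (fun k => θ (s2 k)) (fun k => γ (s2 k))
      (fun k h h' => hθ (s2 k) (Set.mem_union_right _ ⟨k, rfl⟩) h h') htri2
  have hfact : (Matrix.of fun a b : Fin K → Bool =>
        ∑ h : Fin K → Bool, π h *
          ((∏ k, (if a k then θ (s1 k) h else 1 - θ (s1 k) h)) *
           (∏ k, (if b k then θ (s2 k) h else 1 - θ (s2 k) h))))
      = A1 * Matrix.diagonal π * A2.transpose := by
    ext a b
    rw [Matrix.mul_apply, Matrix.of_apply]
    apply Finset.sum_congr rfl
    intro h _
    rw [Matrix.mul_diagonal, Matrix.transpose_apply]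
    simp only [Matrix.of_apply, hA1, hA2]
    ring
  rw [hfact, Matrix.det_mul, Matrix.det_mul, Matrix.det_transpose, Matrix.det_diagonal]
  exact mul_ne_zero (mul_ne_zero hdet1 (ne_of_gt (Finset.prod_pos fun h _ => hπ h))) hdet2
end

section
/- Let Γ be a J×K binary matrix that is double triangular, for each j ∈ {1,…,J} let θ_j : {0,1}^K → [0,1] be compatible with Γ, and let π : {0,1}^K → (0,1] with Σ_h π_h = 1. Define the probability mass function P on {0,1}^J by P(x) = Σ_{h ∈ {0,1}^K} π_h ∏_{j=1}^J θ_j(h)^{x_j}(1−θ_j(h))^{1−x_j}. Then for every natural number K̃ < K there exist no weights π̃ : {0,1}^{K̃} → [0,1] with Σ_g π̃_g = 1 and no maps θ̃_j : {0,1}^{K̃} → [0,1] such that P(x) = Σ_{g ∈ {0,1}^{K̃}} π̃_g ∏_{j=1}^J θ̃_j(g)^{x_j}(1−θ̃_j(g))^{1−x_j} for all x ∈ {0,1}^J. In other words, the number K of binary latent variables of a binary-response binary latent causal model with double triangular bipartite graph is identifiable. -/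
open Finset Matrix


/-- snoc equiv -/
def snocEquiv (K : ℕ) : ((Fin K → Bool) × Bool) ≃ (Fin (K+1) → Bool) where
  toFun p := Fin.snoc p.1 p.2
  invFun h := (Fin.init h, h (Fin.last K))
  left_inv p := by simp [Fin.init_snoc]
  right_inv h := by simp [Fin.snoc_init_self]

lemma core_LI : ∀ (K : ℕ) (t : Fin K → (Fin K → Bool) → ℝ),
    (∀ k h h', (∀ i, i ≤ k → h i = h' i) → t k h = t k h') →
    (∀ (k : Fin K) h h', (∀ i, i ≠ k → h i = h' i) → h k ≠ h' k → t k h ≠ t k h') →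
    LinearIndependent ℝ (fun h : Fin K → Bool => fun a : Fin K → Bool =>
      ∏ k, (if a k then t k h else 1 - t k h)) := by
  intro K
  induction K with
  | zero =>
    intro t _ _
    rw [Fintype.linearIndependent_iff]
    intro c hc h
    have h0 := congrFun hc (fun _ => false)
    simp only [Finset.sum_apply, Pi.smul_apply, smul_eq_mul, Pi.zero_apply] at h0
    rw [Fintype.sum_subsingleton _ h] at h0
    simpa using h0
  | succ K IH =>
    intro t hP1 hP2
    rw [Fintype.linearIndependent_iff]
    intro cc hcc
    set t' : Fin K → (Fin K → Bool) → ℝ :=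
      fun k h' => t k.castSucc (Fin.snoc h' false) with ht'
    have hsnoc_agree : ∀ (k : Fin K) (h' : Fin K → Bool) (b : Bool),
        t k.castSucc (Fin.snoc h' b) = t' k h' := by
      intro k h' b
      apply hP1
      intro i hi
      have hlt : i < Fin.last K := lt_of_le_of_lt hi (Fin.castSucc_lt_last k)
      rcases Fin.exists_castSucc_eq.mpr (Fin.ne_last_of_lt hlt) with ⟨j, rfl⟩
      simp [Fin.snoc_castSucc]
    have hIH := (Fintype.linearIndependent_iff).mp (IH t'
      (by
        intro k h h' hag
        apply hP1
        intro i hi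
        have hlt : i < Fin.last K := lt_of_le_of_lt hi (Fin.castSucc_lt_last k)
        rcases Fin.exists_castSucc_eq.mpr (Fin.ne_last_of_lt hlt) with ⟨j, rfl⟩
        simp only [Fin.snoc_castSucc]
        exact hag j (by exact_mod_cast Fin.castSucc_le_castSucc_iff.mp hi))
      (by
        intro k h h' hag hne
        apply hP2
        · intro i hi
          rcases eq_or_ne i (Fin.last K) with rfl | hlast
          · simp
          · rcases Fin.exists_castSucc_eq.mpr hlast with ⟨j, rfl⟩
            simp only [Fin.snoc_castSucc]
            exact hag j (fun hh => hi (by rw [hh]))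
        · simpa using hne))
    -- key evaluation
    have key : ∀ (b : Bool) (a' : Fin K → Bool),
        ∑ h' : Fin K → Bool,
          ((cc (Fin.snoc h' false) * (if b then t (Fin.last K) (Fin.snoc h' false)
              else 1 - t (Fin.last K) (Fin.snoc h' false))
            + cc (Fin.snoc h' true) * (if b then t (Fin.last K) (Fin.snoc h' true)
              else 1 - t (Fin.last K) (Fin.snoc h' true))) *
            ∏ k, (if a' k then t' k h' else 1 - t' k h')) = 0 := by
      intro b a'
      have := congrFun hcc (Fin.snoc a' b)
      simp only [Finset.sum_apply, Pi.smul_apply, smul_eq_mul, Pi.zero_apply] at this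
      rw [← (snocEquiv K).sum_comp (M := ℝ)] at this
      rw [Fintype.sum_prod_type] at this
      convert this using 1
      apply Finset.sum_congr rfl
      intro h' _
      rw [Fintype.sum_bool]
      have hprod : ∀ bb : Bool,
          (∏ k : Fin (K+1), (if (Fin.snoc a' b : Fin (K+1) → Bool) k
              then t k (Fin.snoc h' bb) else 1 - t k (Fin.snoc h' bb)))
          = (if b then t (Fin.last K) (Fin.snoc h' bb)
              else 1 - t (Fin.last K) (Fin.snoc h' bb)) *
            ∏ k, (if a' k then t' k h' else 1 - t' k h') := by
        intro bb
        rw [Fin.prod_univ_castSucc]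
        simp only [Fin.snoc_castSucc, Fin.snoc_last]
        rw [mul_comm]
        congr 1
        apply Finset.prod_congr rfl
        intro k _
        rw [hsnoc_agree]
      simp only [snocEquiv, Equiv.coe_fn_mk, hprod]
      ring
    -- coefficients vanish
    have hvan : ∀ h' : Fin K → Bool,
        cc (Fin.snoc h' false) = 0 ∧ cc (Fin.snoc h' true) = 0 := by
      intro h'
      have h1 := hIH (fun h' => cc (Fin.snoc h' false) * t (Fin.last K) (Fin.snoc h' false)
          + cc (Fin.snoc h' true) * t (Fin.last K) (Fin.snoc h' true))
        (by
          funext a'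
          simpa using key true a') h'
      have h0 := hIH (fun h' => cc (Fin.snoc h' false) * (1 - t (Fin.last K) (Fin.snoc h' false))
          + cc (Fin.snoc h' true) * (1 - t (Fin.last K) (Fin.snoc h' true)))
        (by
          funext a'
          simpa using key false a') h'
      have hne : t (Fin.last K) (Fin.snoc h' false) ≠ t (Fin.last K) (Fin.snoc h' true) := by
        apply hP2
        · intro i hi
          rcases Fin.exists_castSucc_eq.mpr hi with ⟨j, rfl⟩
          simp
        · simp
      have hc1 : cc (Fin.snoc h' true) = - cc (Fin.snoc h' false) := by linarith
      rw [hc1] at h1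
      have h1' : cc (Fin.snoc h' false) *
          (t (Fin.last K) (Fin.snoc h' false) - t (Fin.last K) (Fin.snoc h' true)) = 0 := by
        ring_nf at h1 ⊢
        linarith
      rcases mul_eq_zero.mp h1' with hz | hz
      · exact ⟨hz, by rw [hc1, hz, neg_zero]⟩
      · exact absurd (by linarith) hne
    intro h
    have := hvan (Fin.init h)
    rcases Bool.eq_false_or_eq_true (h (Fin.last K)) with hb | hb
    · have := this.2
      rwa [← hb, Fin.snoc_init_self] at this
    · have := this.1
      rwa [← hb, Fin.snoc_init_self] at this



def precompEquiv {K : ℕ} (c : Equiv.Perm (Fin K)) : (Fin K → Bool) ≃ (Fin K → Bool) where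
  toFun h := h ∘ c
  invFun h := h ∘ c.symm
  left_inv h := funext fun k => by simp
  right_inv h := funext fun k => by simp


lemma cols_LI (J K : ℕ) (Γ : Fin J → Fin K → Bool) (θ : Fin J → (Fin K → Bool) → ℝ)
    (hθ : ∀ j h h', θ j h = θ j h' ↔ (∀ k, Γ j k = true → h k = h' k))
    (f : Fin K → Fin J) (ρ c : Equiv.Perm (Fin K))
    (hdiag : ∀ k, Γ (f (ρ k)) (c k) = true)
    (htri : ∀ k k' : Fin K, k < k' → Γ (f (ρ k)) (c k') = false) :
    LinearIndependent ℝ (fun h : Fin K → Bool => fun a : Fin K → Bool =>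
      ∏ k, (if a k then θ (f k) h else 1 - θ (f k) h)) := by
  set t : Fin K → (Fin K → Bool) → ℝ := fun k h => θ (f (ρ k)) (fun i => h (c.symm i))
    with htdef
  have hP1 : ∀ k h h', (∀ i, i ≤ k → h i = h' i) → t k h = t k h' := by
    intro k h h' hag
    apply (hθ _ _ _).mpr
    intro i hi
    apply hag
    by_contra hlt
    push_neg at hlt
    have hfalse := htri k (c.symm i) hlt
    rw [Equiv.apply_symm_apply] at hfalse
    rw [hfalse] at hi
    exact absurd hi (by simp)
  have hP2 : ∀ (k : Fin K) h h', (∀ i, i ≠ k → h i = h' i) → h k ≠ h' k → t k h ≠ t k h' := by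
    intro k h h' _ hne heq
    have := (hθ _ _ _).mp heq (c k) (hdiag k)
    rw [Equiv.symm_apply_apply] at this
    exact hne this
  have hli := core_LI K t hP1 hP2
  have hli2 := hli.comp (precompEquiv c) (precompEquiv c).injective
  have hli3 := hli2.map' (LinearEquiv.funCongrLeft ℝ ℝ (precompEquiv ρ)).toLinearMap
    (LinearEquiv.ker _)
  convert hli3 using 1
  funext h a
  show _ = (LinearEquiv.funCongrLeft ℝ ℝ (precompEquiv ρ)).toLinearMap
      ((fun h => fun a => ∏ k, (if a k then t k h else 1 - t k h)) (precompEquiv c h)) a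
  simp only [LinearEquiv.coe_coe, LinearEquiv.funCongrLeft_apply, LinearMap.funLeft_apply]
  have hteval : ∀ k, t k (precompEquiv c h) = θ (f (ρ k)) h := by
    intro k
    simp [htdef, precompEquiv]
  rw [← Equiv.prod_comp ρ (fun k => if a k then θ (f k) h else 1 - θ (f k) h)]
  apply Finset.prod_congr rfl
  intro k _
  rw [hteval]
  rfl
  all_goals rfl

lemma ysum {H : Type} [Fintype H] {J K : ℕ}
    (f g : Fin K → Fin J) (hf : Function.Injective f) (hg : Function.Injective g)
    (hdisj : ∀ k k', f k ≠ g k')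
    (θ : Fin J → H → ℝ) (π : H → ℝ) (a b : Fin K → Bool)
    (x : Fin J → Bool → Bool)
    (hxf : ∀ k cc, x (f k) cc = a k) (hxg : ∀ k cc, x (g k) cc = b k)
    (hxo : ∀ j, (∀ k, f k ≠ j) → (∀ k, g k ≠ j) → ∀ cc, x j cc = cc) :
    ∑ y : Fin J → Bool, ∑ h : H, π h * ∏ j, (if x j (y j) then θ j h else 1 - θ j h)
    = ((2:ℝ)^K * (2:ℝ)^K) * ∑ h : H, π h *
        ((∏ k, if a k then θ (f k) h else 1 - θ (f k) h) *
         (∏ k, if b k then θ (g k) h else 1 - θ (g k) h)) := by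
  classical
  rw [Finset.sum_comm, Finset.mul_sum]
  apply Finset.sum_congr rfl
  intro h _
  rw [← Finset.mul_sum]
  have hswap : ∑ y : Fin J → Bool, ∏ j, (if x j (y j) then θ j h else 1 - θ j h)
      = ∏ j, ∑ cc : Bool, (if x j cc then θ j h else 1 - θ j h) := by
    rw [Fintype.prod_sum (fun j cc => if x j cc then θ j h else 1 - θ j h)]
  rw [hswap]
  set G : Fin J → ℝ := fun j => ∑ cc : Bool, (if x j cc then θ j h else 1 - θ j h) with hGdef
  set s : Finset (Fin J) := (Finset.univ.image f) ∪ (Finset.univ.image g) with hsdef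
  have hout : ∀ j ∈ Finset.univ, j ∉ s → G j = 1 := by
    intro j _ hj
    rw [hsdef, Finset.mem_union] at hj
    push_neg at hj
    have h1 : ∀ k, f k ≠ j := by
      intro k hk
      exact hj.1 (Finset.mem_image.mpr ⟨k, Finset.mem_univ k, hk⟩)
    have h2 : ∀ k, g k ≠ j := by
      intro k hk
      exact hj.2 (Finset.mem_image.mpr ⟨k, Finset.mem_univ k, hk⟩)
    rw [hGdef]
    simp only [hxo j h1 h2]
    rw [Fintype.sum_bool]
    simp
  have hdisjset : Disjoint (Finset.univ.image f) (Finset.univ.image g) := by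
    rw [Finset.disjoint_left]
    intro j hjf hjg
    rcases Finset.mem_image.mp hjf with ⟨k, _, hk⟩
    rcases Finset.mem_image.mp hjg with ⟨k', _, hk'⟩
    exact hdisj k k' (hk.trans hk'.symm)
  rw [← Finset.prod_subset (Finset.subset_univ s) hout]
  rw [hsdef, Finset.prod_union hdisjset]
  rw [Finset.prod_image (fun k _ k' _ hh => hf hh), Finset.prod_image (fun k _ k' _ hh => hg hh)]
  have hGf : ∀ k, G (f k) = 2 * (if a k then θ (f k) h else 1 - θ (f k) h) := by
    intro k
    rw [hGdef]
    simp only [hxf k]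
    rw [Fintype.sum_bool]
    ring
  have hGg : ∀ k, G (g k) = 2 * (if b k then θ (g k) h else 1 - θ (g k) h) := by
    intro k
    rw [hGdef]
    simp only [hxg k]
    rw [Fintype.sum_bool]
    ring
  simp only [hGf, hGg]
  rw [Finset.prod_mul_distrib, Finset.prod_mul_distrib, Finset.prod_const]
  simp only [Finset.card_univ, Fintype.card_fin]
  ring

/-- A `J × K` binary matrix is double triangular if there exist disjoint row sets
`S1, S2 ⊆ {1,…,J}`, each of size `K`, such that the `K × K` submatrices of `Γ` with row sets
`S1` and `S2` are both triangular. (The sets are encoded by injections with disjoint ranges.) -/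
def IsDoubleTriangular {J K : ℕ} (Γ : Fin J → Fin K → Bool) : Prop :=
  ∃ f g : Fin K → Fin J, Function.Injective f ∧ Function.Injective g ∧
    (∀ k k', f k ≠ g k') ∧
    IsTriangular (fun k k' => Γ (f k) k') ∧ IsTriangular (fun k k' => Γ (g k) k')

lemma tri_apply {n m : Type} [Fintype n] [Fintype m] [DecidableEq m]
    (P Q : Matrix n m ℝ) (d : m → ℝ) (a b : n) :
    (P * Matrix.diagonal d * Qᵀ) a b = ∑ h, d h * (P a h * Q b h) := by
  rw [Matrix.mul_apply]
  apply Finset.sum_congr rfl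
  intro h _
  rw [Matrix.mul_diagonal, Matrix.transpose_apply]
  ring

/-- For a binary-response binary latent causal model whose bipartite graph `Γ`
is double triangular (with Bernoulli parameters `θ_j` compatible with `Γ`, and strictly positive
latent proportions `π` summing to one), there is no representation of the observed pmf as a
mixture over a strictly smaller number `K' < K` of binary latent variables: the number of
latent variables is identifiable. -/
theorem stmt4 (J K : ℕ)
    (Γ : Fin J → Fin K → Bool) (hΓ : IsDoubleTriangular Γ)
    (θ : Fin J → (Fin K → Bool) → ℝ)
    (hθ01 : ∀ j h, 0 ≤ θ j h ∧ θ j h ≤ 1)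
    (hθ : ∀ j h h', θ j h = θ j h' ↔ (∀ k, Γ j k = true → h k = h' k))
    (π : (Fin K → Bool) → ℝ) (hπpos : ∀ h, 0 < π h) (hπle : ∀ h, π h ≤ 1)
    (hπ1 : ∑ h, π h = 1)
    (K' : ℕ) (hK' : K' < K) :
    ¬ ∃ (π' : (Fin K' → Bool) → ℝ) (θ' : Fin J → (Fin K' → Bool) → ℝ),
        (∀ g, 0 ≤ π' g ∧ π' g ≤ 1) ∧ (∑ g, π' g = 1) ∧
        (∀ j g, 0 ≤ θ' j g ∧ θ' j g ≤ 1) ∧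
        ∀ x : Fin J → Bool,
          ∑ h : Fin K → Bool, π h * ∏ j, (if x j then θ j h else 1 - θ j h)
          = ∑ g : Fin K' → Bool, π' g * ∏ j, (if x j then θ' j g else 1 - θ' j g) := by
  classical
  obtain ⟨f, g, hf, hg, hdisj, ⟨ρ1, c1, hd1, ht1⟩, ⟨ρ2, c2, hd2, ht2⟩⟩ := hΓ
  rintro ⟨π', θ', hπ'01, hπ'sum, hθ'01, heq⟩
  -- the evaluation points
  set x : (Fin K → Bool) → (Fin K → Bool) → Fin J → Bool → Bool :=
    fun a b j cc => if hj : ∃ k, f k = j then a hj.choose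
      else if hj' : ∃ k, g k = j then b hj'.choose else cc with hxdef
  have hxf : ∀ a b k cc, x a b (f k) cc = a k := by
    intro a b k cc
    have hex : ∃ k', f k' = f k := ⟨k, rfl⟩
    simp only [hxdef, dif_pos hex]
    congr 1
    exact hf hex.choose_spec
  have hxg : ∀ a b k cc, x a b (g k) cc = b k := by
    intro a b k cc
    have hnex : ¬ ∃ k', f k' = g k := by rintro ⟨k', hk'⟩; exact hdisj k' k hk'
    have hex : ∃ k', g k' = g k := ⟨k, rfl⟩
    simp only [hxdef, dif_neg hnex, dif_pos hex]
    congr 1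
    exact hg hex.choose_spec
  have hxo : ∀ a b j, (∀ k, f k ≠ j) → (∀ k, g k ≠ j) → ∀ cc, x a b j cc = cc := by
    intro a b j h1 h2 cc
    have hn1 : ¬ ∃ k, f k = j := by rintro ⟨k, hk⟩; exact h1 k hk
    have hn2 : ¬ ∃ k, g k = j := by rintro ⟨k, hk⟩; exact h2 k hk
    simp only [hxdef, dif_neg hn1, dif_neg hn2]
  have key : ∀ a b : Fin K → Bool,
      ∑ h : Fin K → Bool, π h *
        ((∏ k, if a k then θ (f k) h else 1 - θ (f k) h) *
         (∏ k, if b k then θ (g k) h else 1 - θ (g k) h))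
      = ∑ gg : Fin K' → Bool, π' gg *
        ((∏ k, if a k then θ' (f k) gg else 1 - θ' (f k) gg) *
         (∏ k, if b k then θ' (g k) gg else 1 - θ' (g k) gg)) := by
    intro a b
    have h1 := ysum f g hf hg hdisj θ π a b (x a b) (hxf a b) (hxg a b) (hxo a b)
    have h2 := ysum f g hf hg hdisj θ' π' a b (x a b) (hxf a b) (hxg a b) (hxo a b)
    have hc : ((2:ℝ)^K * (2:ℝ)^K) ≠ 0 := by positivity
    apply mul_left_cancel₀ hc
    rw [← h1, ← h2]
    apply Finset.sum_congr rfl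
    intro y _
    exact heq (fun j => x a b j (y j))
  -- matrices
  set MA : Matrix (Fin K → Bool) (Fin K → Bool) ℝ :=
    Matrix.of (fun a h => ∏ k, (if a k then θ (f k) h else 1 - θ (f k) h)) with hMA
  set MB : Matrix (Fin K → Bool) (Fin K → Bool) ℝ :=
    Matrix.of (fun b h => ∏ k, (if b k then θ (g k) h else 1 - θ (g k) h)) with hMB
  set MA' : Matrix (Fin K → Bool) (Fin K' → Bool) ℝ :=
    Matrix.of (fun a gg => ∏ k, (if a k then θ' (f k) gg else 1 - θ' (f k) gg)) with hMA'
  set MB' : Matrix (Fin K → Bool) (Fin K' → Bool) ℝ :=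
    Matrix.of (fun b gg => ∏ k, (if b k then θ' (g k) gg else 1 - θ' (g k) gg)) with hMB'
  have hE : MA * Matrix.diagonal π * MBᵀ = MA' * Matrix.diagonal π' * MB'ᵀ := by
    ext a b
    rw [tri_apply, tri_apply]
    exact key a b
  have hLIA := cols_LI J K Γ θ hθ f ρ1 c1 hd1 ht1
  have hLIB := cols_LI J K Γ θ hθ g ρ2 c2 hd2 ht2
  have hUA : IsUnit MA := Matrix.linearIndependent_cols_iff_isUnit.mp hLIA
  have hUB : IsUnit MB := Matrix.linearIndependent_cols_iff_isUnit.mp hLIB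
  have hUD : IsUnit (Matrix.diagonal π) := by
    rw [Matrix.isUnit_iff_isUnit_det, Matrix.det_diagonal]
    exact (isUnit_iff_ne_zero).mpr (Finset.prod_pos (fun h _ => hπpos h)).ne'
  have hUnit : IsUnit (MA * Matrix.diagonal π * MBᵀ) :=
    (hUA.mul hUD).mul ((Matrix.isUnit_transpose MB).mpr hUB)
  have hrank1 : (MA * Matrix.diagonal π * MBᵀ).rank = Fintype.card (Fin K → Bool) :=
    Matrix.rank_of_isUnit _ hUnit
  have hrank2 : (MA' * Matrix.diagonal π' * MB'ᵀ).rank ≤ Fintype.card (Fin K' → Bool) :=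
    le_trans (Matrix.rank_mul_le_left _ _)
      (le_trans (Matrix.rank_mul_le_left _ _) (Matrix.rank_le_card_width _))
  rw [hE, hrank1] at * 
  have hcard : Fintype.card (Fin K → Bool) ≤ Fintype.card (Fin K' → Bool) := by
    rw [← hrank1]; exact hrank2
  rw [Fintype.card_fun, Fintype.card_fun, Fintype.card_fin, Fintype.card_fin,
    Fintype.card_bool] at hcard
  have := Nat.pow_lt_pow_right (a := 2) one_lt_two hK'
  omega
end

section
/- For j ∈ {1,…,J} let 𝒳_j be a separable metric space equipped with its Borel σ-algebra. Let Γ be a J×K binary matrix that is double triangular, and for each j and each h ∈ {0,1}^K let P_{j,h} be a Borel probability measure on 𝒳_j such that P_{j,h} = P_{j,h'} if and only if h ~_{Γ,j} h'. Let π_h > 0 with Σ_{h ∈ {0,1}^K} π_h = 1 and let μ := Σ_{h ∈ {0,1}^K} π_h · (P_{1,h} ⊗ ⋯ ⊗ P_{J,h}) be the corresponding mixture of product measures on ∏_{j=1}^J 𝒳_j. Then for every natural number K̃ < K there exist no nonnegative weights (π̃_g)_{g ∈ {0,1}^{K̃}} summing to 1 and no Borel probability measures Q_{j,g} on 𝒳_j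 such that μ = Σ_{g ∈ {0,1}^{K̃}} π̃_g · (Q_{1,g} ⊗ ⋯ ⊗ Q_{J,g}). -/
open MeasureTheory
open scoped ENNReal

open Finset

/-- Two distinct measures differ on some measurable set. -/
lemma exists_sep {α : Type*} [MeasurableSpace α] {μ ν : Measure α} (h : μ ≠ ν) :
    ∃ s, MeasurableSet s ∧ μ s ≠ ν s := by
  by_contra hc
  push_neg at hc
  exact h (Measure.ext fun s hs => hc s hs)

/-- Staircase family of functions: linear independence of the associated product family. -/
lemma staircase {n : ℕ} {ι : Fin n → Type*} (f : (k : Fin n) → (Fin n → Bool) → ι k → ℝ)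
    (hdep : ∀ (k : Fin n) (h h' : Fin n → Bool), (∀ i, i ≤ k → h i = h' i) → f k h = f k h')
    (hone : ∀ k : Fin n, ∃ e, ∀ h, f k h e = 1)
    (hsep : ∀ (k : Fin n) (h h' : Fin n → Bool), (∀ i, i < k → h i = h' i) → h k ≠ h' k →
      f k h ≠ f k h')
    (α : (Fin n → Bool) → ℝ)
    (h0 : ∀ a : (k : Fin n) → ι k, ∑ h : Fin n → Bool, α h * ∏ k, f k h (a k) = 0) :
    ∀ h, α h = 0 := by
  classical
  have inv : ∀ m : ℕ, m ≤ n → ∀ (p : Fin n → Bool) (a : (k : Fin n) → ι k),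
      ∑ h ∈ univ.filter (fun h : Fin n → Bool => ∀ i : Fin n, (i : ℕ) < m → h i = p i),
        α h * ∏ k ∈ univ.filter (fun k : Fin n => m ≤ (k : ℕ)), f k h (a k) = 0 := by
    intro m
    induction m with
    | zero =>
      intro _ p a
      have h1 : univ.filter (fun h : Fin n → Bool => ∀ i : Fin n, (i : ℕ) < 0 → h i = p i)
          = univ := filter_true_of_mem (fun h _ i hi => absurd hi (by omega))
      have h2 : univ.filter (fun k : Fin n => 0 ≤ (k : ℕ)) = univ :=
        filter_true_of_mem (fun k _ => Nat.zero_le _)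
      rw [h1, h2]; exact h0 a
    | succ m ih =>
      intro hm1 p a
      have hmn : m < n := by omega
      have ihm := ih (by omega)
      set km : Fin n := ⟨m, hmn⟩ with hkm
      set hb : Bool → (Fin n → Bool) := fun b i => if (i : ℕ) < m then p i else b with hhb
      obtain ⟨e, he⟩ := hone km
      have hne : f km (hb false) ≠ f km (hb true) := by
        apply hsep
        · intro i hi
          have hi' : (i : ℕ) < m := hi
          simp [hhb, hi']
        · simp [hhb, hkm]
      obtain ⟨s, hs⟩ := Function.ne_iff.mp hne
      have hfk : univ.filter (fun k : Fin n => m ≤ (k : ℕ))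
          = insert km (univ.filter (fun k : Fin n => m + 1 ≤ (k : ℕ))) := by
        ext k
        simp only [mem_filter, mem_univ, true_and, mem_insert]
        constructor
        · intro hk
          rcases eq_or_lt_of_le hk with h | h
          · left; exact (Fin.ext h.symm)
          · right; omega
        · rintro (rfl | hk)
          · simp [hkm]
          · omega
      have hkmnot : km ∉ univ.filter (fun k : Fin n => m + 1 ≤ (k : ℕ)) := by
        simp [hkm]
      set A := univ.filter (fun h : Fin n → Bool => ∀ i : Fin n, (i : ℕ) < m → h i = p i) with hA
      set F : Bool → ℝ := fun b =>
        ∑ h ∈ univ.filter (fun h : Fin n → Bool =>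
            (∀ i : Fin n, (i : ℕ) < m → h i = p i) ∧ h km = b),
          α h * ∏ k ∈ univ.filter (fun k : Fin n => m + 1 ≤ (k : ℕ)), f k h (a k) with hF
      have expand : ∀ a' : (k : Fin n) → ι k, (∀ k, k ≠ km → a' k = a k) →
          f km (hb false) (a' km) * F false + f km (hb true) (a' km) * F true = 0 := by
        intro a' ha'
        have hmain := ihm p a'
        rw [hfk] at hmain
        have step1 : ∀ h ∈ A, α h * ∏ k ∈ insert km
              (univ.filter (fun k : Fin n => m + 1 ≤ (k : ℕ))), f k h (a' k)
            = f km (hb (h km)) (a' km)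
              * (α h * ∏ k ∈ univ.filter (fun k : Fin n => m + 1 ≤ (k : ℕ)), f k h (a k)) := by
          intro h hh
          rw [prod_insert hkmnot]
          have hmem := (mem_filter.mp hh).2
          have hdephb : f km h = f km (hb (h km)) := by
            apply hdep
            intro i hi
            rcases lt_or_eq_of_le hi with h1 | h1
            · have hi' : (i : ℕ) < m := h1
              simp only [hhb, if_pos hi']
              exact hmem i hi'
            · rw [h1]
              simp [hhb, hkm]
          have hprod : (∏ k ∈ univ.filter (fun k : Fin n => m + 1 ≤ (k : ℕ)), f k h (a' k))
              = ∏ k ∈ univ.filter (fun k : Fin n => m + 1 ≤ (k : ℕ)), f k h (a k) := by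
            apply prod_congr rfl
            intro k hk
            rw [ha' k (by rintro rfl; exact hkmnot hk)]
          rw [hdephb, hprod]; ring
        rw [sum_congr hA.symm step1] at hmain
        rw [← sum_filter_add_sum_filter_not A (fun h => h km = false)] at hmain
        have e1 : ∑ h ∈ A.filter (fun h => h km = false),
              f km (hb (h km)) (a' km) * (α h * ∏ k ∈ univ.filter
                (fun k : Fin n => m + 1 ≤ (k : ℕ)), f k h (a k))
            = f km (hb false) (a' km) * F false := by
          rw [hF, mul_sum]
          apply sum_congr
          · rw [hA, filter_filter]
          · intro h hh
            rw [(mem_filter.mp hh).2.2]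
        have e2 : ∑ h ∈ A.filter (fun h => ¬ h km = false),
              f km (hb (h km)) (a' km) * (α h * ∏ k ∈ univ.filter
                (fun k : Fin n => m + 1 ≤ (k : ℕ)), f k h (a k))
            = f km (hb true) (a' km) * F true := by
          rw [hF, mul_sum]
          apply sum_congr
          · rw [hA, filter_filter]
            apply filter_congr
            intro h _
            simp
          · intro h hh
            rw [(mem_filter.mp hh).2.2]
        rw [e1, e2] at hmain
        exact hmain
      have keye := expand (Function.update a km e) (fun k hk => Function.update_of_ne hk _ _)
      rw [Function.update_self, he, he, one_mul, one_mul] at keye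
      have keys := expand (Function.update a km s) (fun k hk => Function.update_of_ne hk _ _)
      rw [Function.update_self] at keys
      have hFf : F false = 0 := by
        have h3 : (f km (hb false) s - f km (hb true) s) * F false = 0 := by
          have hFt : F true = - F false := by linarith
          rw [hFt] at keys
          nlinarith [keys]
        rcases mul_eq_zero.mp h3 with h4 | h4
        · exact absurd (by linarith : f km (hb false) s = f km (hb true) s) hs
        · exact h4
      have hFt : F true = 0 := by linarith
      have hfilt : univ.filter (fun h : Fin n → Bool => ∀ i : Fin n, (i : ℕ) < m + 1 → h i = p i)
          = univ.filter (fun h : Fin n → Bool =>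
              (∀ i : Fin n, (i : ℕ) < m → h i = p i) ∧ h km = p km) := by
        apply filter_congr
        intro h _
        constructor
        · intro hh
          exact ⟨fun i hi => hh i (by omega), hh km (Nat.lt_succ_self m)⟩
        · rintro ⟨h1, h2⟩ i hi
          rcases Nat.lt_or_ge (i : ℕ) m with h3 | h3
          · exact h1 i h3
          · have him : (i : ℕ) = m := by omega
            have hi' : i = km := Fin.ext him
            rw [hi']; exact h2
      rw [hfilt]
      have : F (p km) = 0 := by cases hpk : p km <;> simp [hpk, hFf, hFt]
      rw [hF] at this
      exact this
  intro h
  have hfin := inv n le_rfl h (fun k => (hone k).choose)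
  have h1 : univ.filter (fun h' : Fin n → Bool => ∀ i : Fin n, (i : ℕ) < n → h' i = h i)
      = {h} := by
    ext h'
    simp only [mem_filter, mem_univ, true_and, mem_singleton]
    constructor
    · intro hh; funext i; exact hh i i.isLt
    · rintro rfl; exact fun i _ => rfl
  have h2 : univ.filter (fun k : Fin n => n ≤ (k : ℕ)) = ∅ :=
    filter_false_of_mem (fun k _ => not_le.mpr k.isLt)
  rw [h1, h2] at hfin
  simpa using hfin

/-- Linear independence of the evaluation family of a triangular block. -/
lemma block_indep {J K : ℕ} {X : Fin J → Type*} [∀ j, MeasurableSpace (X j)]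
    (Γ : Fin J → Fin K → Bool)
    (P : (j : Fin J) → (Fin K → Bool) → Measure (X j))
    (hPprob : ∀ j h, IsProbabilityMeasure (P j h))
    (hPcomp : ∀ j h h', P j h = P j h' ↔ (∀ k, Γ j k = true → h k = h' k))
    (F : Fin K → Fin J) (c : Equiv.Perm (Fin K))
    (hdiag : ∀ k, Γ (F k) (c k) = true)
    (hup : ∀ k k' : Fin K, k < k' → Γ (F k) (c k') = false) :
    LinearIndependent ℝ (fun (h : Fin K → Bool)
      (a : (k : Fin K) → {s : Set (X (F k)) // MeasurableSet s}) =>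
      ∏ k, (P (F k) h ((a k).1)).toReal) := by
  classical
  rw [Fintype.linearIndependent_iff]
  intro gc hgc
  have hgc' : ∀ a : (k : Fin K) → {s : Set (X (F k)) // MeasurableSet s},
      ∑ h : Fin K → Bool, gc h * ∏ k, (P (F k) h ((a k).1)).toReal = 0 := by
    intro a
    have := congrFun hgc a
    simpa [Finset.sum_apply, smul_eq_mul] using this
  set M : (k : Fin K) → (Fin K → Bool) → {s : Set (X (F k)) // MeasurableSet s} → ℝ :=
    fun k H s => (P (F k) (fun i => H (c.symm i)) s.1).toReal with hM
  have hdep : ∀ (k : Fin K) (H H' : Fin K → Bool), (∀ i, i ≤ k → H i = H' i) →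
      M k H = M k H' := by
    intro k H H' hag
    funext s
    have heq : P (F k) (fun i => H (c.symm i)) = P (F k) (fun i => H' (c.symm i)) := by
      apply (hPcomp _ _ _).mpr
      intro i hi
      rcases le_or_gt (c.symm i) k with hle | hlt
      · exact hag _ hle
      · exfalso
        have := hup k (c.symm i) hlt
        rw [Equiv.apply_symm_apply] at this
        rw [hi] at this
        simp at this
    simp only [hM, heq]
  have hone : ∀ k : Fin K, ∃ e, ∀ H, M k H e = 1 := by
    intro k
    refine ⟨⟨Set.univ, MeasurableSet.univ⟩, fun H => ?_⟩
    haveI := hPprob (F k) (fun i => H (c.symm i))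
    simp [hM]
  have hsep : ∀ (k : Fin K) (H H' : Fin K → Bool), (∀ i, i < k → H i = H' i) → H k ≠ H' k →
      M k H ≠ M k H' := by
    intro k H H' _ hne
    have hmeasne : P (F k) (fun i => H (c.symm i)) ≠ P (F k) (fun i => H' (c.symm i)) := by
      intro heq
      have := (hPcomp _ _ _).mp heq (c k) (hdiag k)
      rw [Equiv.symm_apply_apply] at this
      exact hne this
    obtain ⟨s, hsM, hsne⟩ := exists_sep hmeasne
    intro heq
    apply hsne
    have h1 := congrFun heq ⟨s, hsM⟩
    haveI := hPprob (F k) (fun i => H (c.symm i))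
    haveI := hPprob (F k) (fun i => H' (c.symm i))
    exact (ENNReal.toReal_eq_toReal_iff' (measure_ne_top _ _) (measure_ne_top _ _)).mp h1
  have h0 : ∀ a : (k : Fin K) → {s : Set (X (F k)) // MeasurableSet s},
      ∑ H : Fin K → Bool, gc (fun i => H (c.symm i)) * ∏ k, M k H (a k) = 0 := by
    intro a
    rw [← hgc' a]
    apply Fintype.sum_equiv (Equiv.arrowCongr (c : Fin K ≃ Fin K) (Equiv.refl Bool))
    intro H
    congr 1
  have hz := staircase M hdep hone hsep (fun H => gc (fun i => H (c.symm i))) h0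
  intro h
  have := hz (fun i => h (c i))
  simpa using this

/-- Transport a measurable set along an equality of indices. -/
lemma meas_cast {J : ℕ} {X : Fin J → Type*} [∀ j, MeasurableSpace (X j)] {j j' : Fin J}
    (e : j = j') {s : Set (X j')} (hs : MeasurableSet s) :
    MeasurableSet {x : X j | e ▸ x ∈ s} := by
  subst e; exact hs

lemma block_meas {J Kk : ℕ} {X : Fin J → Type*} [∀ j, MeasurableSpace (X j)]
    (F : Fin Kk → Fin J) (a : (k : Fin Kk) → {s : Set (X (F k)) // MeasurableSet s})
    (j : Fin J) :
    MeasurableSet {x : X j | ∀ (k : Fin Kk) (e : j = F k), e ▸ x ∈ (a k).1} := by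
  have h : {x : X j | ∀ (k : Fin Kk) (e : j = F k), e ▸ x ∈ (a k).1}
      = ⋂ (k : Fin Kk), ⋂ (e : j = F k), {x : X j | e ▸ x ∈ (a k).1} := by
    ext x; simp [Set.mem_iInter, Set.mem_setOf_eq]
  rw [h]
  exact MeasurableSet.iInter fun k => MeasurableSet.iInter fun e => meas_cast e (a k).2

lemma block_eval {J Kk : ℕ} {X : Fin J → Type*}
    (F : Fin Kk → Fin J) (hFinj : Function.Injective F)
    (a : (k : Fin Kk) → Set (X (F k))) (k : Fin Kk) :
    {x : X (F k) | ∀ (k' : Fin Kk) (e : F k = F k'), e ▸ x ∈ a k'} = a k := by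
  ext x
  simp only [Set.mem_setOf_eq]
  constructor
  · intro hx; exact hx k rfl
  · intro hx k' e
    have hk : k = k' := hFinj e
    subst hk
    exact hx

lemma block_vac {J Kk : ℕ} {X : Fin J → Type*}
    (F : Fin Kk → Fin J) (a : (k : Fin Kk) → Set (X (F k))) (j : Fin J)
    (hj : ∀ k, j ≠ F k) :
    {x : X j | ∀ (k : Fin Kk) (e : j = F k), e ▸ x ∈ a k} = Set.univ := by
  apply Set.eq_univ_of_forall
  intro x k e
  exact absurd e (hj k)

/-- Let `𝒳_j` be separable metric spaces with their Borel σ-algebras, `Γ` a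
double triangular `J × K` binary bipartite graph, `P_{j,h}` Borel probability measures with
`P_{j,h} = P_{j,h'}` iff `h, h'` agree on the parents of `j`, and `π` strictly positive latent
proportions summing to one. Then the mixture of product measures
`μ = Σ_h π_h · ⊗_j P_{j,h}` admits no representation as a mixture of product measures over
`{0,1}^{K'}` with `K' < K`. -/
theorem stmt5 (J K : ℕ) (X : Fin J → Type*)
    [∀ j, MetricSpace (X j)] [∀ j, TopologicalSpace.SeparableSpace (X j)]
    [∀ j, MeasurableSpace (X j)] [∀ j, BorelSpace (X j)]
    (Γ : Fin J → Fin K → Bool) (hΓ : IsDoubleTriangular Γ)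
    (P : (j : Fin J) → (Fin K → Bool) → Measure (X j))
    (hPprob : ∀ j h, IsProbabilityMeasure (P j h))
    (hPcomp : ∀ j h h', P j h = P j h' ↔ (∀ k, Γ j k = true → h k = h' k))
    (π : (Fin K → Bool) → ℝ≥0∞) (hπpos : ∀ h, 0 < π h) (hπ1 : ∑ h, π h = 1)
    (K' : ℕ) (hK' : K' < K) :
    ¬ ∃ (π' : (Fin K' → Bool) → ℝ≥0∞)
        (Q : (j : Fin J) → (Fin K' → Bool) → Measure (X j)),
        (∑ g, π' g = 1) ∧
        (∀ j g, IsProbabilityMeasure (Q j g)) ∧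
        (∑ h : Fin K → Bool, π h • Measure.pi (fun j => P j h))
          = ∑ g : Fin K' → Bool, π' g • Measure.pi (fun j => Q j g) := by
  classical
  obtain ⟨f1, f2, hinj1, hinj2, hfg, ⟨ρ1, c1, hd1, hu1⟩, ⟨ρ2, c2, hd2, hu2⟩⟩ := hΓ
  rintro ⟨π', Q, hπ'1, hQprob, hEq⟩
  set F1 : Fin K → Fin J := fun k => f1 (ρ1 k) with hF1
  set F2 : Fin K → Fin J := fun k => f2 (ρ2 k) with hF2
  have hF1inj : Function.Injective F1 := fun a b hab => ρ1.injective (hinj1 hab)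
  have hF2inj : Function.Injective F2 := fun a b hab => ρ2.injective (hinj2 hab)
  have hF12 : ∀ k k', F1 k ≠ F2 k' := fun k k' => hfg (ρ1 k) (ρ2 k')
  -- test sets
  set SS : ((k : Fin K) → {s : Set (X (F1 k)) // MeasurableSet s}) →
      ((k : Fin K) → {s : Set (X (F2 k)) // MeasurableSet s}) → (j : Fin J) → Set (X j) :=
    fun a b j =>
      {x : X j | ∀ (k : Fin K) (e : j = F1 k), e ▸ x ∈ (a k).1} ∩
      {x : X j | ∀ (k : Fin K) (e : j = F2 k), e ▸ x ∈ (b k).1} with hSS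
  have hSSmeas : ∀ a b j, MeasurableSet (SS a b j) := by
    intro a b j
    exact (block_meas F1 a j).inter (block_meas F2 b j)
  have hSSF1 : ∀ a b k, SS a b (F1 k) = (a k).1 := by
    intro a b k
    simp only [hSS]
    rw [block_eval F1 hF1inj (fun k => (a k).1) k,
      block_vac F2 (fun k => (b k).1) (F1 k) (fun k' => hF12 k k')]
    exact Set.inter_univ _
  have hSSF2 : ∀ a b k, SS a b (F2 k) = (b k).1 := by
    intro a b k
    simp only [hSS]
    rw [block_eval F2 hF2inj (fun k => (b k).1) k,
      block_vac F1 (fun k => (a k).1) (F2 k) (fun k' => (hF12 k' k).symm)]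
    exact Set.univ_inter _
  have hSSout : ∀ a b j, (∀ k, j ≠ F1 k) → (∀ k, j ≠ F2 k) → SS a b j = Set.univ := by
    intro a b j h1 h2
    simp only [hSS]
    rw [block_vac F1 (fun k => (a k).1) j h1, block_vac F2 (fun k => (b k).1) j h2]
    exact Set.inter_univ _
  -- product splitting
  have hprodsplit : ∀ (R : ∀ j, Measure (X j)), (∀ j, IsProbabilityMeasure (R j)) →
      ∀ a b, ∏ j, R j (SS a b j)
        = (∏ k, R (F1 k) ((a k).1)) * ∏ k, R (F2 k) ((b k).1) := by
    intro R hR a b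
    have hout : ∀ j ∈ univ, j ∉ (univ.image F1 ∪ univ.image F2) → R j (SS a b j) = 1 := by
      intro j _ hj
      simp only [mem_union, mem_image, mem_univ, true_and, not_or, not_exists] at hj
      rw [hSSout a b j (fun k e => hj.1 k e.symm) (fun k e => hj.2 k e.symm)]
      haveI := hR j
      exact measure_univ
    have hdisj : Disjoint (univ.image F1) (univ.image F2) := by
      rw [Finset.disjoint_left]
      rintro x hx1 hx2
      obtain ⟨k, _, rfl⟩ := mem_image.mp hx1
      obtain ⟨k', _, he⟩ := mem_image.mp hx2
      exact hF12 k k' he.symm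
    calc ∏ j, R j (SS a b j)
        = ∏ j ∈ (univ.image F1 ∪ univ.image F2), R j (SS a b j) :=
          (Finset.prod_subset (subset_univ _) hout).symm
      _ = (∏ j ∈ univ.image F1, R j (SS a b j)) * ∏ j ∈ univ.image F2, R j (SS a b j) :=
          Finset.prod_union hdisj
      _ = (∏ k, R (F1 k) ((a k).1)) * ∏ k, R (F2 k) ((b k).1) := by
          rw [Finset.prod_image (fun k _ k' _ e => hF1inj e),
            Finset.prod_image (fun k _ k' _ e => hF2inj e)]
          congr 1
          · exact Finset.prod_congr rfl fun k _ => by rw [hSSF1]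
          · exact Finset.prod_congr rfl fun k _ => by rw [hSSF2]
  -- the main identity in ℝ≥0∞
  have hId : ∀ (a : (k : Fin K) → {s : Set (X (F1 k)) // MeasurableSet s})
      (b : (k : Fin K) → {s : Set (X (F2 k)) // MeasurableSet s}),
      ∑ h : Fin K → Bool,
        π h * ((∏ k, P (F1 k) h ((a k).1)) * ∏ k, P (F2 k) h ((b k).1))
      = ∑ g : Fin K' → Bool,
        π' g * ((∏ k, Q (F1 k) g ((a k).1)) * ∏ k, Q (F2 k) g ((b k).1)) := by
    intro a b
    have h1 : (∑ h : Fin K → Bool, π h • Measure.pi fun j => P j h)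
          (Set.pi Set.univ (SS a b))
        = (∑ g : Fin K' → Bool, π' g • Measure.pi fun j => Q j g)
          (Set.pi Set.univ (SS a b)) := by rw [hEq]
    rw [Measure.finset_sum_apply, Measure.finset_sum_apply] at h1
    have h2 : ∀ h : Fin K → Bool,
        (π h • Measure.pi fun j => P j h) (Set.pi Set.univ (SS a b))
        = π h * ((∏ k, P (F1 k) h ((a k).1)) * ∏ k, P (F2 k) h ((b k).1)) := by
      intro h
      haveI : ∀ j, SigmaFinite (P j h) := fun j => by
        haveI := hPprob j h; infer_instance
      rw [Measure.smul_apply, smul_eq_mul, Measure.pi_pi,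
        hprodsplit (fun j => P j h) (fun j => hPprob j h) a b]
    have h3 : ∀ g : Fin K' → Bool,
        (π' g • Measure.pi fun j => Q j g) (Set.pi Set.univ (SS a b))
        = π' g * ((∏ k, Q (F1 k) g ((a k).1)) * ∏ k, Q (F2 k) g ((b k).1)) := by
      intro g
      haveI : ∀ j, SigmaFinite (Q j g) := fun j => by
        haveI := hQprob j g; infer_instance
      rw [Measure.smul_apply, smul_eq_mul, Measure.pi_pi,
        hprodsplit (fun j => Q j g) (fun j => hQprob j g) a b]
    rw [Finset.sum_congr rfl (fun h _ => h2 h), Finset.sum_congr rfl (fun g _ => h3 g)] at h1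
    exact h1
  -- finiteness facts
  have hπtop : ∀ h, π h ≠ ⊤ := by
    intro h
    have hle : π h ≤ 1 := by
      rw [← hπ1]; exact Finset.single_le_sum (fun i _ => zero_le) (mem_univ h)
    exact (lt_of_le_of_lt hle ENNReal.one_lt_top).ne
  have hπ'top : ∀ g, π' g ≠ ⊤ := by
    intro g
    have hle : π' g ≤ 1 := by
      rw [← hπ'1]; exact Finset.single_le_sum (fun i _ => zero_le) (mem_univ g)
    exact (lt_of_le_of_lt hle ENNReal.one_lt_top).ne
  -- real-valued families
  set u : (Fin K → Bool) → ((k : Fin K) → {s : Set (X (F1 k)) // MeasurableSet s}) → ℝ :=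
    fun h a => ∏ k, (P (F1 k) h ((a k).1)).toReal with hu
  set v : (Fin K → Bool) → ((k : Fin K) → {s : Set (X (F2 k)) // MeasurableSet s}) → ℝ :=
    fun h b => ∏ k, (P (F2 k) h ((b k).1)).toReal with hv
  set u' : (Fin K' → Bool) → ((k : Fin K) → {s : Set (X (F1 k)) // MeasurableSet s}) → ℝ :=
    fun g a => ∏ k, (Q (F1 k) g ((a k).1)).toReal with hu'
  set v' : (Fin K' → Bool) → ((k : Fin K) → {s : Set (X (F2 k)) // MeasurableSet s}) → ℝ :=
    fun g b => ∏ k, (Q (F2 k) g ((b k).1)).toReal with hv'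
  have hIdR : ∀ a b,
      ∑ h : Fin K → Bool, (π h).toReal * (u h a * v h b)
      = ∑ g : Fin K' → Bool, (π' g).toReal * (u' g a * v' g b) := by
    intro a b
    have hfin1 : ∀ h : Fin K → Bool, h ∈ univ →
        π h * ((∏ k, P (F1 k) h ((a k).1)) * ∏ k, P (F2 k) h ((b k).1)) ≠ ⊤ := by
      intro h _
      refine ENNReal.mul_ne_top (hπtop h) (ENNReal.mul_ne_top ?_ ?_)
      · exact (ENNReal.prod_lt_top fun k _ => (measure_lt_top (P (F1 k) h) _)).ne
      · exact (ENNReal.prod_lt_top fun k _ => (measure_lt_top (P (F2 k) h) _)).ne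
    have hfin2 : ∀ g : Fin K' → Bool, g ∈ univ →
        π' g * ((∏ k, Q (F1 k) g ((a k).1)) * ∏ k, Q (F2 k) g ((b k).1)) ≠ ⊤ := by
      intro g _
      refine ENNReal.mul_ne_top (hπ'top g) (ENNReal.mul_ne_top ?_ ?_)
      · exact (ENNReal.prod_lt_top fun k _ => (measure_lt_top (Q (F1 k) g) _)).ne
      · exact (ENNReal.prod_lt_top fun k _ => (measure_lt_top (Q (F2 k) g) _)).ne
    have := congrArg ENNReal.toReal (hId a b)
    rw [ENNReal.toReal_sum hfin1, ENNReal.toReal_sum hfin2] at this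
    calc ∑ h : Fin K → Bool, (π h).toReal * (u h a * v h b)
        = ∑ h : Fin K → Bool,
            (π h * ((∏ k, P (F1 k) h ((a k).1)) * ∏ k, P (F2 k) h ((b k).1))).toReal := by
          apply Finset.sum_congr rfl; intro h _
          rw [ENNReal.toReal_mul, ENNReal.toReal_mul, ENNReal.toReal_prod, ENNReal.toReal_prod]
      _ = ∑ g : Fin K' → Bool,
            (π' g * ((∏ k, Q (F1 k) g ((a k).1)) * ∏ k, Q (F2 k) g ((b k).1))).toReal := this
      _ = ∑ g : Fin K' → Bool, (π' g).toReal * (u' g a * v' g b) := by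
          apply Finset.sum_congr rfl; intro g _
          rw [ENNReal.toReal_mul, ENNReal.toReal_mul, ENNReal.toReal_prod, ENNReal.toReal_prod]
  -- linear independence of u and v
  have huind : LinearIndependent ℝ u := by
    rw [hu]; exact block_indep Γ P hPprob hPcomp F1 c1 hd1 hu1
  have hvind : LinearIndependent ℝ v := by
    rw [hv]; exact block_indep Γ P hPprob hPcomp F2 c2 hd2 hu2
  -- the linear map T
  set T : ((Fin K → Bool) → ℝ) →ₗ[ℝ]
      (((k : Fin K) → {s : Set (X (F2 k)) // MeasurableSet s}) → ℝ) :=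
    ∑ h : Fin K → Bool, LinearMap.smulRight (LinearMap.proj h) (v h) with hT
  have hTapp : ∀ (β : (Fin K → Bool) → ℝ) b, T β b = ∑ h : Fin K → Bool, β h * v h b := by
    intro β b
    rw [hT, LinearMap.sum_apply, Finset.sum_apply]
    apply Finset.sum_congr rfl; intro h _
    rw [LinearMap.smulRight_apply, LinearMap.proj_apply, Pi.smul_apply, smul_eq_mul]
  set sgl : (Fin K → Bool) → ((Fin K → Bool) → ℝ) :=
    fun h h' => if h = h' then 1 else 0 with hsgl
  have hTsgl : ∀ h, T (sgl h) = v h := by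
    intro h
    funext b
    rw [hTapp]
    rw [Finset.sum_eq_single h]
    · simp [hsgl]
    · intro h' _ hne; simp [hsgl, (Ne.symm hne)]
    · intro habs; exact absurd (mem_univ h) habs
  set S' : Submodule ℝ (((k : Fin K) → {s : Set (X (F2 k)) // MeasurableSet s}) → ℝ) :=
    Submodule.span ℝ (Set.range v') with hS'
  set cmap : ((k : Fin K) → {s : Set (X (F1 k)) // MeasurableSet s}) → ((Fin K → Bool) → ℝ) :=
    fun a h => (π h).toReal * u h a with hcmap
  have hTc : ∀ a, T (cmap a) ∈ S' := by
    intro a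
    have hfun : T (cmap a) = ∑ g : Fin K' → Bool, ((π' g).toReal * u' g a) • v' g := by
      funext b
      rw [hTapp, Finset.sum_apply]
      calc ∑ h : Fin K → Bool, cmap a h * v h b
          = ∑ h : Fin K → Bool, (π h).toReal * (u h a * v h b) := by
            apply Finset.sum_congr rfl; intro h _; rw [hcmap]; ring
        _ = ∑ g : Fin K' → Bool, (π' g).toReal * (u' g a * v' g b) := hIdR a b
        _ = ∑ g : Fin K' → Bool, (((π' g).toReal * u' g a) • v' g) b := by
            apply Finset.sum_congr rfl; intro g _
            rw [Pi.smul_apply, smul_eq_mul]; ring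
    rw [hfun]
    exact Submodule.sum_mem _ fun g _ =>
      Submodule.smul_mem _ _ (Submodule.subset_span (Set.mem_range_self g))
  have hspan : Submodule.span ℝ (Set.range cmap) = ⊤ := by
    by_contra hne
    obtain ⟨φ, hφ0, hφbot⟩ :=
      Submodule.exists_dual_map_eq_bot_of_lt_top (lt_top_iff_ne_top.mpr hne) inferInstance
    have hφz : ∀ a, φ (cmap a) = 0 := by
      intro a
      have hmem : φ (cmap a) ∈ Submodule.map φ (Submodule.span ℝ (Set.range cmap)) :=
        Submodule.mem_map_of_mem (Submodule.subset_span (Set.mem_range_self a))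
      rw [hφbot] at hmem
      exact hmem
    set β : (Fin K → Bool) → ℝ := fun h => φ (fun j => if h = j then 1 else 0) with hβ
    have hφeq : ∀ x : (Fin K → Bool) → ℝ, φ x = ∑ h : Fin K → Bool, x h * β h := by
      intro x
      conv_lhs => rw [pi_eq_sum_univ x]
      rw [map_sum]
      apply Finset.sum_congr rfl; intro h _
      rw [_root_.map_smul, smul_eq_mul, hβ]
    have hcoefzero : (∑ h : Fin K → Bool, (β h * (π h).toReal) • u h) = 0 := by
      funext a
      rw [Finset.sum_apply]
      have h1 := hφz a
      rw [hφeq] at h1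
      calc ∑ h : Fin K → Bool, ((β h * (π h).toReal) • u h) a
          = ∑ h : Fin K → Bool, cmap a h * β h := by
            apply Finset.sum_congr rfl; intro h _
            rw [Pi.smul_apply, smul_eq_mul, hcmap]; ring
        _ = 0 := h1
    have hcoef := Fintype.linearIndependent_iff.mp huind
      (fun h => β h * (π h).toReal) hcoefzero
    have hβ0 : ∀ h, β h = 0 := by
      intro h
      have hπR : (π h).toReal ≠ 0 := ENNReal.toReal_ne_zero.mpr ⟨(hπpos h).ne', hπtop h⟩
      rcases mul_eq_zero.mp (hcoef h) with h' | h'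
      · exact h'
      · exact absurd h' hπR
    apply hφ0
    apply LinearMap.ext
    intro x
    rw [hφeq x]
    simp [hβ0]
  have hvmem : ∀ h, v h ∈ S' := by
    intro h
    have h1 : sgl h ∈ Submodule.span ℝ (Set.range cmap) := by rw [hspan]; trivial
    have h2 : T (sgl h) ∈ Submodule.map T (Submodule.span ℝ (Set.range cmap)) :=
      Submodule.mem_map_of_mem h1
    rw [Submodule.map_span] at h2
    have h3 : Submodule.span ℝ (T '' Set.range cmap) ≤ S' := by
      rw [Submodule.span_le]
      rintro x ⟨y, ⟨a, rfl⟩, rfl⟩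
      exact hTc a
    have h4 := h3 h2
    rwa [hTsgl h] at h4
  have hle : Submodule.span ℝ (Set.range v) ≤ S' :=
    Submodule.span_le.mpr (by rintro x ⟨h, rfl⟩; exact hvmem h)
  haveI : Module.Finite ℝ S' := by
    rw [hS']
    exact Module.Finite.span_of_finite ℝ (Set.finite_range v')
  have hfin1 : Module.finrank ℝ (Submodule.span ℝ (Set.range v))
      = Fintype.card (Fin K → Bool) := finrank_span_eq_card hvind
  have hfin2 : Module.finrank ℝ S' ≤ Fintype.card (Fin K' → Bool) := by
    rw [hS']
    exact finrank_range_le_card v'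
  have hmono := Submodule.finrank_mono hle
  rw [hfin1] at hmono
  have hcard : Fintype.card (Fin K → Bool) ≤ Fintype.card (Fin K' → Bool) :=
    le_trans hmono hfin2
  have hc1 : Fintype.card (Fin K → Bool) = 2 ^ K := by simp [Fintype.card_fun]
  have hc2 : Fintype.card (Fin K' → Bool) = 2 ^ K' := by simp [Fintype.card_fun]
  rw [hc1, hc2] at hcard
  have := Nat.pow_lt_pow_right (by norm_num : 1 < 2) hK'
  omega
end

section
/- Let Γ be a J×K binary matrix and Γ̃ a J×L binary matrix, both double triangular. For each j let θ_j : {0,1}^K → [0,1] be compatible with Γ and θ̃_j : {0,1}^L → [0,1] be compatible with Γ̃. Let π : {0,1}^K → (0,1] and π̃ : {0,1}^L → (0,1] be strictly positive with Σ_h π_h = Σ_g π̃_g = 1. If Σ_{h ∈ {0,1}^K} π_h ∏_{j=1}^J θ_j(h)^{x_j}(1−θ_j(h))^{1−x_j} = Σ_{g ∈ {0,1}^L} π̃_g ∏_{j=1}^J θ̃_j(g)^{x_j}(1−θ̃_j(g))^{1−x_j} for every x ∈ {0,1}^J, then K = L. That is, within the class of double triangular binary latent causal models with binary responses, the number of latent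 variables is identifiable. -/
lemma marg {J : ℕ} {ι : Type*} [Fintype ι]
    (F : ι → Fin J) (hF : Function.Injective F)
    (ψ : Fin J → Bool → ℝ) (hψ : ∀ j, ψ j false + ψ j true = 1)
    (w : ι → Bool) :
    ∑ x : Fin J → Bool, (if ∀ i, x (F i) = w i then ∏ j, ψ j (x j) else 0)
      = ∏ i, ψ (F i) (w i) := by
  classical
  set ψ' : Fin J → Bool → ℝ :=
    fun j b => (if ∀ i, F i = j → b = w i then (1:ℝ) else 0) * ψ j b with hψ'
  have step1 : ∀ x : Fin J → Bool,
      (if ∀ i, x (F i) = w i then ∏ j, ψ j (x j) else 0) = ∏ j, ψ' j (x j) := by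
    intro x
    rw [hψ', Finset.prod_mul_distrib]
    by_cases hc : ∀ i, x (F i) = w i
    · rw [if_pos hc]
      have h1 : ∀ j ∈ Finset.univ, (if ∀ i, F i = j → x j = w i then (1:ℝ) else 0) = 1 := by
        intro j _
        rw [if_pos]
        intro i hi; subst hi; exact hc i
      rw [Finset.prod_congr rfl h1, Finset.prod_const_one, one_mul]
    · rw [if_neg hc]
      push_neg at hc
      obtain ⟨i0, hi0⟩ := hc
      have h0 : (∏ j, (if ∀ i, F i = j → x j = w i then (1:ℝ) else 0)) = 0 := by
        apply Finset.prod_eq_zero (Finset.mem_univ (F i0))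
        rw [if_neg]
        intro hall
        exact hi0 (hall i0 rfl)
      rw [h0, zero_mul]
  rw [Finset.sum_congr rfl (fun x _ => step1 x)]
  have step2 : ∑ x : Fin J → Bool, ∏ j, ψ' j (x j) = ∏ j, ∑ b : Bool, ψ' j b := by
    rw [Finset.prod_univ_sum]
    exact (Finset.sum_congr (Fintype.piFinset_univ) (fun x _ => rfl)).symm
  rw [step2]
  rw [← Finset.prod_mul_prod_compl (Finset.image F Finset.univ) (fun j => ∑ b : Bool, ψ' j b)]
  have houtside : ∀ j ∈ (Finset.image F Finset.univ)ᶜ, (∑ b : Bool, ψ' j b) = 1 := by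
    intro j hj
    rw [Finset.mem_compl] at hj
    have hvac : ∀ b : Bool, ψ' j b = ψ j b := by
      intro b
      show (if ∀ i, F i = j → b = w i then (1:ℝ) else 0) * ψ j b = ψ j b
      rw [if_pos, one_mul]
      intro i hi
      exact absurd (hi ▸ Finset.mem_image_of_mem F (Finset.mem_univ i)) hj
    rw [Fintype.sum_bool, hvac, hvac, add_comm]
    exact hψ j
  rw [Finset.prod_congr rfl houtside, Finset.prod_const_one, mul_one]
  rw [Finset.prod_image (fun i _ i' _ h => hF h)]
  apply Finset.prod_congr rfl
  intro i _
  have hcond : ∀ b : Bool, (∀ i', F i' = F i → b = w i') ↔ b = w i := by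
    intro b
    constructor
    · exact fun H => H i rfl
    · intro h i' h'
      rw [hF h']; exact h
  rw [Fintype.sum_bool, hψ']
  simp only [hcond]
  cases hw : w i <;> simp

lemma sum_cons {K : ℕ} (F : (Fin (K+1) → Bool) → ℝ) :
    ∑ h, F h = ∑ b : Bool, ∑ h' : Fin K → Bool, F (Fin.cons b h') := by
  rw [← Equiv.sum_comp (Fin.consEquiv (fun _ : Fin (K+1) => Bool)) F, Fintype.sum_prod_type]
  rfl

lemma key : ∀ (K : ℕ) (t : Fin K → (Fin K → Bool) → ℝ),
    (∀ k (h h' : Fin K → Bool), (∀ k', k' ≤ k → h k' = h' k') → t k h = t k h') →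
    (∀ k (h h' : Fin K → Bool), (∀ k', k' < k → h k' = h' k') → h k ≠ h' k → t k h ≠ t k h') →
    ∀ v : (Fin K → Bool) → ℝ,
    (∀ y : Fin K → Bool, ∑ h, v h * ∏ k, (if y k then t k h else 1 - t k h) = 0) →
    ∀ h, v h = 0 := by
  intro K
  induction K with
  | zero =>
    intro t _ _ v hv h
    have := hv h
    simp at this
    exact (congrArg v (Subsingleton.elim h _)).trans this
  | succ K ih =>
    intro t hdep hsep v hv
    classical
    set αF : ℝ := t 0 (Fin.cons false (fun _ => false)) with hαF
    set αT : ℝ := t 0 (Fin.cons true (fun _ => false)) with hαT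
    have ht0 : ∀ (b : Bool) (h' : Fin K → Bool),
        t 0 (Fin.cons b h') = (if b then αT else αF) := by
      intro b h'
      cases b <;>
      · apply hdep
        intro k' hk'
        rw [Fin.le_zero_iff] at hk'
        subst hk'
        simp
    have hne : αF ≠ αT := by
      apply hsep 0
      · intro k' hk'
        exact absurd hk' (by simp [Fin.lt_iff_val_lt_val])
      · simp
    set T : Bool → (Fin K → Bool) → ℝ := fun b y' =>
      ∑ h' : Fin K → Bool, v (Fin.cons b h') *
        ∏ k : Fin K, (if y' k then t k.succ (Fin.cons b h') else 1 - t k.succ (Fin.cons b h')) with hT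
    have hsplit : ∀ (s : Bool) (y' : Fin K → Bool),
        (if s then αF else 1 - αF) * T false y' + (if s then αT else 1 - αT) * T true y' = 0 := by
      intro s y'
      have hv' := hv (Fin.cons s y')
      rw [sum_cons, Fintype.sum_bool] at hv'
      rw [← hv', hT]
      simp only [Fin.prod_univ_succ, Fin.cons_zero, Fin.cons_succ, ht0]
      rw [Finset.mul_sum, Finset.mul_sum, add_comm]
      congr 1 <;>
      · apply Finset.sum_congr rfl
        intro h' _
        cases s <;> simp <;> ring
    have hTzero : ∀ b y', T b y' = 0 := by
      intro b y'
      have h1 := hsplit false y'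
      have h2 := hsplit true y'
      simp only [if_true, if_false, Bool.false_eq_true, ite_false, ite_true] at h1 h2
      have hTT : T true y' = - T false y' := by linarith
      rw [hTT] at h2
      have hz : (αF - αT) * T false y' = 0 := by linear_combination h2
      have hTF : T false y' = 0 := by
        rcases mul_eq_zero.mp hz with h | h
        · exact absurd (sub_eq_zero.mp h) hne
        · exact h
      cases b
      · exact hTF
      · rw [hTT, hTF, neg_zero]
    have hcons : ∀ (b : Bool) (h' : Fin K → Bool), v (Fin.cons b h') = 0 := by
      intro b
      apply ih (fun k h' => t k.succ (Fin.cons b h'))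
      · intro k h' h'' hag
        apply hdep
        intro k' hk'
        induction k' using Fin.cases with
        | zero => simp
        | succ i =>
          simp only [Fin.cons_succ]
          exact hag i (Fin.succ_le_succ_iff.mp hk')
      · intro k h' h'' hag hne'
        apply hsep
        · intro k' hk'
          induction k' using Fin.cases with
          | zero => simp
          | succ i =>
            simp only [Fin.cons_succ]
            exact hag i (Fin.succ_lt_succ_iff.mp hk')
        · simpa using hne'
      · intro y'
        exact hTzero b y'
    intro h
    have hh : h = Fin.cons (h 0) (Fin.tail h) := (Fin.cons_self_tail h).symm
    rw [hh]
    exact hcons _ _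
lemma block {J K : ℕ} (Γ : Fin J → Fin K → Bool)
    (F : Fin K → Fin J) (c : Equiv.Perm (Fin K))
    (htri1 : ∀ k, Γ (F k) (c k) = true)
    (htri2 : ∀ k k', k < k' → Γ (F k) (c k') = false)
    (θ : Fin J → (Fin K → Bool) → ℝ)
    (hθ : ∀ j h h', θ j h = θ j h' ↔ (∀ k, Γ j k = true → h k = h' k))
    (w : (Fin K → Bool) → ℝ)
    (hw : ∀ y : Fin K → Bool,
      ∑ H, w H * ∏ k, (if y k then θ (F k) H else 1 - θ (F k) H) = 0) :
    ∀ H, w H = 0 := by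
  have hdep : ∀ k (h h' : Fin K → Bool), (∀ k', k' ≤ k → h k' = h' k') →
      θ (F k) (fun m => h (c.symm m)) = θ (F k) (fun m => h' (c.symm m)) := by
    intro k h h' hag
    apply (hθ (F k) _ _).mpr
    intro m hm
    have hj : c.symm m ≤ k := by
      by_contra hlt
      push_neg at hlt
      have hz := htri2 k (c.symm m) hlt
      rw [Equiv.apply_symm_apply] at hz
      rw [hz] at hm
      exact Bool.false_ne_true hm
    exact hag _ hj
  have hsep : ∀ k (h h' : Fin K → Bool), (∀ k', k' < k → h k' = h' k') → h k ≠ h' k →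
      θ (F k) (fun m => h (c.symm m)) ≠ θ (F k) (fun m => h' (c.symm m)) := by
    intro k h h' _ hne heqt
    have := (hθ (F k) _ _).mp heqt (c k) (htri1 k)
    rw [Equiv.symm_apply_apply] at this
    exact hne this
  have hv0 := key K (fun k h => θ (F k) (fun m => h (c.symm m))) hdep hsep
    (fun h => w (fun m => h (c.symm m))) ?_
  · intro H
    have hWH : w H = w (fun m => (fun k => H (c k)) (c.symm m)) := by
      congr 1
      funext m
      simp
    rw [hWH]
    exact hv0 (fun k => H (c k))
  · intro y
    have hre : ∀ h : Fin K → Bool,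
        w (fun m => h (c.symm m)) *
          ∏ k, (if y k then θ (F k) (fun m => h (c.symm m))
            else 1 - θ (F k) (fun m => h (c.symm m)))
        = (fun H => w H * ∏ k, (if y k then θ (F k) H else 1 - θ (F k) H))
            ((Equiv.arrowCongr c (Equiv.refl Bool)) h) := by
      intro h
      rfl
    rw [Finset.sum_congr rfl (fun h _ => hre h),
      Equiv.sum_comp (Equiv.arrowCongr c (Equiv.refl Bool))
        (fun H => w H * ∏ k, (if y k then θ (F k) H else 1 - θ (F k) H))]
    exact hw y
lemma entry_repr {J K M : ℕ} (F1 F2 : Fin M → Fin J)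
    (hinj : Function.Injective (Sum.elim F1 F2 : Fin M ⊕ Fin M → Fin J))
    (θ : Fin J → (Fin K → Bool) → ℝ) (π : (Fin K → Bool) → ℝ)
    (y z : Fin M → Bool) :
    ∑ x : Fin J → Bool, (if ∀ i : Fin M ⊕ Fin M, x (Sum.elim F1 F2 i) = Sum.elim y z i
        then ∑ H : Fin K → Bool, π H * ∏ j, (if x j then θ j H else 1 - θ j H) else 0)
      = ∑ H : Fin K → Bool,
          (∏ k, (if y k then θ (F1 k) H else 1 - θ (F1 k) H)) * π H *
          (∏ k, (if z k then θ (F2 k) H else 1 - θ (F2 k) H)) := by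
  classical
  have h1 : ∀ x : Fin J → Bool,
      (if ∀ i : Fin M ⊕ Fin M, x (Sum.elim F1 F2 i) = Sum.elim y z i
        then ∑ H : Fin K → Bool, π H * ∏ j, (if x j then θ j H else 1 - θ j H) else 0)
      = ∑ H : Fin K → Bool, (if ∀ i : Fin M ⊕ Fin M, x (Sum.elim F1 F2 i) = Sum.elim y z i
          then π H * ∏ j, (if x j then θ j H else 1 - θ j H) else 0) := by
    intro x
    split
    · rfl
    · rw [Finset.sum_const_zero]
  rw [Finset.sum_congr rfl (fun x _ => h1 x), Finset.sum_comm]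
  apply Finset.sum_congr rfl
  intro H _
  have hψ : ∀ j : Fin J,
      (if false then θ j H else 1 - θ j H) + (if true then θ j H else 1 - θ j H) = 1 := by
    intro j
    simp
  have hm := marg (Sum.elim F1 F2) hinj (fun j b => if b then θ j H else 1 - θ j H) hψ
    (Sum.elim y z)
  calc ∑ x : Fin J → Bool, (if ∀ i : Fin M ⊕ Fin M, x (Sum.elim F1 F2 i) = Sum.elim y z i
          then π H * ∏ j, (if x j then θ j H else 1 - θ j H) else 0)
      = π H * ∑ x : Fin J → Bool, (if ∀ i : Fin M ⊕ Fin M, x (Sum.elim F1 F2 i) = Sum.elim y z i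
          then ∏ j, (if x j then θ j H else 1 - θ j H) else 0) := by
        rw [Finset.mul_sum]
        apply Finset.sum_congr rfl
        intro x _
        rw [mul_ite, mul_zero]
    _ = π H * ∏ i : Fin M ⊕ Fin M,
          (if Sum.elim y z i then θ (Sum.elim F1 F2 i) H else 1 - θ (Sum.elim F1 F2 i) H) := by
        rw [hm]
    _ = _ := by
        rw [Fintype.prod_sum_type]
        simp only [Sum.elim_inl, Sum.elim_inr]
        rw [mul_left_comm, ← mul_assoc]
        congr

lemma dt_aux {J K L : ℕ}
    (Γ : Fin J → Fin K → Bool) (hΓ : IsDoubleTriangular Γ)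
    (θ : Fin J → (Fin K → Bool) → ℝ)
    (hθ : ∀ j h h', θ j h = θ j h' ↔ (∀ k, Γ j k = true → h k = h' k))
    (θ' : Fin J → (Fin L → Bool) → ℝ)
    (π : (Fin K → Bool) → ℝ) (hπpos : ∀ h, 0 < π h)
    (π' : (Fin L → Bool) → ℝ)
    (heq : ∀ x : Fin J → Bool,
      ∑ h : Fin K → Bool, π h * ∏ j, (if x j then θ j h else 1 - θ j h)
      = ∑ g : Fin L → Bool, π' g * ∏ j, (if x j then θ' j g else 1 - θ' j g)) :
    K ≤ L := by
  classical
  obtain ⟨f1, f2, hf1, hf2, hdisj, ⟨ρ1, c1, h11, h12⟩, ⟨ρ2, c2, h21, h22⟩⟩ := hΓ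
  have hE : Function.Injective
      (Sum.elim (fun k => f1 (ρ1 k)) (fun k => f2 (ρ2 k)) : Fin K ⊕ Fin K → Fin J) := by
    intro a b hab
    cases a with
    | inl a =>
      cases b with
      | inl b =>
        simp only [Sum.elim_inl] at hab
        exact congrArg Sum.inl (ρ1.injective (hf1 hab))
      | inr b =>
        simp only [Sum.elim_inl, Sum.elim_inr] at hab
        exact absurd hab (hdisj _ _)
    | inr a =>
      cases b with
      | inl b =>
        simp only [Sum.elim_inl, Sum.elim_inr] at hab
        exact absurd hab.symm (hdisj _ _)
      | inr b =>
        simp only [Sum.elim_inr] at hab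
        exact congrArg Sum.inr (ρ2.injective (hf2 hab))
  set A : Matrix (Fin K → Bool) (Fin K → Bool) ℝ :=
    Matrix.of (fun y H => ∏ k, (if y k then θ (f1 (ρ1 k)) H else 1 - θ (f1 (ρ1 k)) H)) with hA
  set B : Matrix (Fin K → Bool) (Fin K → Bool) ℝ :=
    Matrix.of (fun z H => ∏ k, (if z k then θ (f2 (ρ2 k)) H else 1 - θ (f2 (ρ2 k)) H)) with hB
  set U : Matrix (Fin K → Bool) (Fin L → Bool) ℝ :=
    Matrix.of (fun y G => ∏ k, (if y k then θ' (f1 (ρ1 k)) G else 1 - θ' (f1 (ρ1 k)) G)) with hU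
  set V : Matrix (Fin K → Bool) (Fin L → Bool) ℝ :=
    Matrix.of (fun z G => ∏ k, (if z k then θ' (f2 (ρ2 k)) G else 1 - θ' (f2 (ρ2 k)) G)) with hV
  have hentry : ∀ {m : Type} [Fintype m] [DecidableEq m]
      (M N : Matrix (Fin K → Bool) m ℝ) (d : m → ℝ) (y z : Fin K → Bool),
      (M * Matrix.diagonal d * N.transpose) y z = ∑ H, M y H * d H * N z H := by
    intro m _ _ M N d y z
    rw [Matrix.mul_apply]
    apply Finset.sum_congr rfl
    intro H _
    rw [Matrix.mul_diagonal, Matrix.transpose_apply]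
  have hQ : A * Matrix.diagonal π * B.transpose = U * Matrix.diagonal π' * V.transpose := by
    ext y z
    rw [hentry A B π y z, hentry U V π' y z]
    have e1 := entry_repr (fun k => f1 (ρ1 k)) (fun k => f2 (ρ2 k)) hE θ π y z
    have e2 := entry_repr (fun k => f1 (ρ1 k)) (fun k => f2 (ρ2 k)) hE θ' π' y z
    calc ∑ H, A y H * π H * B z H
        = ∑ x : Fin J → Bool,
            (if ∀ i : Fin K ⊕ Fin K,
                x (Sum.elim (fun k => f1 (ρ1 k)) (fun k => f2 (ρ2 k)) i) = Sum.elim y z i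
              then ∑ H : Fin K → Bool, π H * ∏ j, (if x j then θ j H else 1 - θ j H)
              else 0) := by
          rw [e1]
          apply Finset.sum_congr rfl
          intro H _
          simp only [hA, hB, Matrix.of_apply]
      _ = ∑ x : Fin J → Bool,
            (if ∀ i : Fin K ⊕ Fin K,
                x (Sum.elim (fun k => f1 (ρ1 k)) (fun k => f2 (ρ2 k)) i) = Sum.elim y z i
              then ∑ G : Fin L → Bool, π' G * ∏ j, (if x j then θ' j G else 1 - θ' j G)
              else 0) := by
          apply Finset.sum_congr rfl
          intro x _
          rw [heq x]
      _ = ∑ G, U y G * π' G * V z G := by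
          rw [e2]
          apply Finset.sum_congr rfl
          intro G _
          simp only [hU, hV, Matrix.of_apply]
  have hdetA : A.det ≠ 0 := by
    intro hdet
    obtain ⟨vv, hvv0, hmul⟩ := Matrix.exists_mulVec_eq_zero_iff.mpr hdet
    apply hvv0
    funext H
    refine block Γ (fun k => f1 (ρ1 k)) c1 h11 h12 θ hθ vv ?_ H
    intro y
    have h2 : ∑ H, A y H * vv H = 0 := congrFun hmul y
    calc ∑ H, vv H * ∏ k, (if y k then θ (f1 (ρ1 k)) H else 1 - θ (f1 (ρ1 k)) H)
        = ∑ H, A y H * vv H := by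
          apply Finset.sum_congr rfl
          intro H _
          simp only [hA, Matrix.of_apply]
          ring
      _ = 0 := h2
  have hdetB : B.det ≠ 0 := by
    intro hdet
    obtain ⟨vv, hvv0, hmul⟩ := Matrix.exists_mulVec_eq_zero_iff.mpr hdet
    apply hvv0
    funext H
    refine block Γ (fun k => f2 (ρ2 k)) c2 h21 h22 θ hθ vv ?_ H
    intro y
    have h2 : ∑ H, B y H * vv H = 0 := congrFun hmul y
    calc ∑ H, vv H * ∏ k, (if y k then θ (f2 (ρ2 k)) H else 1 - θ (f2 (ρ2 k)) H)
        = ∑ H, B y H * vv H := by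
          apply Finset.sum_congr rfl
          intro H _
          simp only [hB, Matrix.of_apply]
          ring
      _ = 0 := h2
  have hdetD : (Matrix.diagonal π).det ≠ 0 := by
    rw [Matrix.det_diagonal]
    exact ne_of_gt (Finset.prod_pos (fun H _ => hπpos H))
  have hdetQ : (A * Matrix.diagonal π * B.transpose).det ≠ 0 := by
    rw [Matrix.det_mul, Matrix.det_mul, Matrix.det_transpose]
    exact mul_ne_zero (mul_ne_zero hdetA hdetD) hdetB
  have hrank : (A * Matrix.diagonal π * B.transpose).rank = Fintype.card (Fin K → Bool) :=
    Matrix.rank_of_isUnit _ ((Matrix.isUnit_iff_isUnit_det _).mpr (isUnit_iff_ne_zero.mpr hdetQ))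
  have hle : (A * Matrix.diagonal π * B.transpose).rank ≤ Fintype.card (Fin L → Bool) := by
    rw [hQ, Matrix.mul_assoc]
    exact le_trans (Matrix.rank_mul_le_left U _) (Matrix.rank_le_card_width U)
  rw [hrank] at hle
  have hpow : (2:ℕ) ^ K ≤ 2 ^ L := by
    simpa [Fintype.card_fun, Fintype.card_bool, Fintype.card_fin] using hle
  exact (Nat.pow_le_pow_iff_right (by norm_num)).mp hpow

/-- Within the class of double triangular binary latent causal models with
binary responses (compatible Bernoulli parameters and strictly positive latent proportions
summing to one), two models defining the same observed pmf have the same number of latent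
variables: `K = L`. -/
theorem stmt6 (J K L : ℕ)
    (Γ : Fin J → Fin K → Bool) (hΓ : IsDoubleTriangular Γ)
    (Γ' : Fin J → Fin L → Bool) (hΓ' : IsDoubleTriangular Γ')
    (θ : Fin J → (Fin K → Bool) → ℝ)
    (hθ01 : ∀ j h, 0 ≤ θ j h ∧ θ j h ≤ 1)
    (hθ : ∀ j h h', θ j h = θ j h' ↔ (∀ k, Γ j k = true → h k = h' k))
    (θ' : Fin J → (Fin L → Bool) → ℝ)
    (hθ'01 : ∀ j g, 0 ≤ θ' j g ∧ θ' j g ≤ 1)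
    (hθ' : ∀ j g g', θ' j g = θ' j g' ↔ (∀ l, Γ' j l = true → g l = g' l))
    (π : (Fin K → Bool) → ℝ) (hπpos : ∀ h, 0 < π h) (hπle : ∀ h, π h ≤ 1)
    (hπ1 : ∑ h, π h = 1)
    (π' : (Fin L → Bool) → ℝ) (hπ'pos : ∀ g, 0 < π' g) (hπ'le : ∀ g, π' g ≤ 1)
    (hπ'1 : ∑ g, π' g = 1)
    (heq : ∀ x : Fin J → Bool,
      ∑ h : Fin K → Bool, π h * ∏ j, (if x j then θ j h else 1 - θ j h)
      = ∑ g : Fin L → Bool, π' g * ∏ j, (if x j then θ' j g else 1 - θ' j g)) :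
    K = L := by
  exact le_antisymm
    (dt_aux Γ hΓ θ hθ θ' π hπpos π' heq)
    (dt_aux Γ' hΓ' θ' hθ' θ π' hπ'pos π (fun x => (heq x).symm))
end

section
/- Let Γ and Γ̃ be J×K binary matrices and suppose there exist indices j_1, …, j_K ∈ {1,…,J} such that Γ_{j_k,k} = 1 and Γ_{j_k,k'} = 0 for all k' > k (Γ contains a triangular K×K row-submatrix). Let σ : {0,1}^K → {0,1}^K be a bijection such that for every j ∈ {1,…,J} and all h, h' ∈ {0,1}^K: h ~_{Γ,j} h' if and only if σ(h) ~_{Γ̃,j} σ(h'). Then there exists a permutation τ of {1,…,K} such that Γ̃_{j,τ(k)} = Γ_{j,k} for all j ∈ {1,…,J} and k ∈ {1,…,K}. -/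
namespace Stmt7Aux

variable {K : ℕ}

def Rel (σ : (Fin K → Bool) ≃ (Fin K → Bool)) (A B : Finset (Fin K)) : Prop :=
  ∀ h h' : Fin K → Bool, (∀ k ∈ A, h k = h' k) ↔ (∀ k ∈ B, σ h k = σ h' k)

lemma rel_empty (σ : (Fin K → Bool) ≃ (Fin K → Bool)) : Rel σ ∅ ∅ := by
  intro h h'; simp

lemma rel_union {σ : (Fin K → Bool) ≃ (Fin K → Bool)} {A B A' B' : Finset (Fin K)}
    (h1 : Rel σ A B) (h2 : Rel σ A' B') : Rel σ (A ∪ A') (B ∪ B') := by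
  intro h h'
  constructor
  · intro hh k hk
    rcases Finset.mem_union.mp hk with hk | hk
    · exact (h1 h h').mp (fun m hm => hh m (Finset.mem_union_left _ hm)) k hk
    · exact (h2 h h').mp (fun m hm => hh m (Finset.mem_union_right _ hm)) k hk
  · intro hh k hk
    rcases Finset.mem_union.mp hk with hk | hk
    · exact (h1 h h').mpr (fun m hm => hh m (Finset.mem_union_left _ hm)) k hk
    · exact (h2 h h').mpr (fun m hm => hh m (Finset.mem_union_right _ hm)) k hk

lemma rel_biUnion {σ : (Fin K → Bool) ≃ (Fin K → Bool)}
    (T : Finset (Fin K)) (f g : Fin K → Finset (Fin K))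
    (hr : ∀ i ∈ T, Rel σ (f i) (g i)) :
    Rel σ (T.biUnion f) (T.biUnion g) := by
  classical
  induction T using Finset.induction_on with
  | empty => simpa using rel_empty σ
  | insert a s hnotmem ih =>
      rw [Finset.biUnion_insert, Finset.biUnion_insert]
      exact rel_union (hr a (Finset.mem_insert_self a s))
        (ih (fun i hi => hr i (Finset.mem_insert_of_mem hi)))

lemma rel_subset {σ : (Fin K → Bool) ≃ (Fin K → Bool)} {A B A' B' : Finset (Fin K)}
    (h1 : Rel σ A B) (h2 : Rel σ A' B') (hAB : A ⊆ A') : B ⊆ B' := by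
  classical
  intro b hb
  by_contra hbB'
  -- every pair agreeing on B' agrees on B
  have key : ∀ x y : Fin K → Bool, (∀ k ∈ B', x k = y k) → (∀ k ∈ B, x k = y k) := by
    intro x y hxy
    have hA' : ∀ k ∈ A', σ.symm x k = σ.symm y k := by
      refine (h2 (σ.symm x) (σ.symm y)).mpr ?_
      simpa using hxy
    have hA : ∀ k ∈ A, σ.symm x k = σ.symm y k := fun k hk => hA' k (hAB hk)
    have := (h1 (σ.symm x) (σ.symm y)).mp hA
    simpa using this
  set x : Fin K → Bool := fun _ => false with hx
  set y : Fin K → Bool := Function.update x b true with hy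
  have hagree : ∀ k ∈ B', x k = y k := by
    intro k hk
    have hkb : k ≠ b := by rintro rfl; exact hbB' hk
    simp [hy, Function.update_of_ne hkb]
  have := key x y hagree b hb
  simp [hx, hy, Function.update_self] at this

lemma rel_card {σ : (Fin K → Bool) ≃ (Fin K → Bool)} {A B : Finset (Fin K)}
    (h1 : Rel σ A B) : A.card = B.card := by
  classical
  -- build an equivalence between (A → Bool) and (B → Bool)
  let extA : (↥A → Bool) → (Fin K → Bool) :=
    fun g k => if h : k ∈ A then g ⟨k, h⟩ else false
  let extB : (↥B → Bool) → (Fin K → Bool) :=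
    fun g k => if h : k ∈ B then g ⟨k, h⟩ else false
  have e : (↥A → Bool) ≃ (↥B → Bool) := by
    refine ⟨fun g b => σ (extA g) b.1, fun g a => σ.symm (extB g) a.1, ?_, ?_⟩
    · intro g
      funext a
      have hBagree : ∀ k ∈ B, extB (fun b => σ (extA g) b.1) k = σ (extA g) k := by
        intro k hk; simp [extB, hk]
      have hAagree : ∀ k ∈ A,
          σ.symm (extB (fun b => σ (extA g) b.1)) k = extA g k := by
        refine (h1 _ _).mpr ?_
        intro k hk
        simpa using hBagree k hk
      have := hAagree a.1 a.2
      simpa [extA] using this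
    · intro g
      funext b
      have hAagree : ∀ k ∈ A, extA (fun a => σ.symm (extB g) a.1) k = σ.symm (extB g) k := by
        intro k hk; simp [extA, hk]
      have hBagree : ∀ k ∈ B,
          σ (extA (fun a => σ.symm (extB g) a.1)) k = extB g k := by
        have := (h1 (extA (fun a => σ.symm (extB g) a.1)) (σ.symm (extB g))).mp hAagree
        simpa using this
      have := hBagree b.1 b.2
      simpa [extB] using this
  have hcard := Fintype.card_congr e
  simp only [Fintype.card_fun, Fintype.card_coe, Fintype.card_bool] at hcard
  exact Nat.pow_right_injective (le_refl 2) hcard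

end Stmt7Aux

open Stmt7Aux in
/-- Let `Γ, Γ'` be `J × K` binary matrices, where `Γ` contains a triangular
`K × K` row-submatrix (rows `jdx k` with `Γ (jdx k) k = 1` and `Γ (jdx k) k' = 0` for `k' > k`).
If a bijection `σ` of `{0,1}^K` preserves, for every row `j`, the parent-agreement equivalence
(`h ~_{Γ,j} h'` iff `σ h ~_{Γ',j} σ h'`), then the columns of `Γ'` are a permutation of the
columns of `Γ`. -/
theorem stmt7 (J K : ℕ)
    (Γ Γ' : Fin J → Fin K → Bool)
    (jdx : Fin K → Fin J)
    (htri : ∀ k, Γ (jdx k) k = true ∧ ∀ k' : Fin K, k < k' → Γ (jdx k) k' = false)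
    (σ : (Fin K → Bool) ≃ (Fin K → Bool))
    (hσ : ∀ (j : Fin J) (h h' : Fin K → Bool),
      (∀ k, Γ j k = true → h k = h' k) ↔ (∀ k, Γ' j k = true → σ h k = σ h' k)) :
    ∃ τ : Equiv.Perm (Fin K), ∀ j k, Γ' j (τ k) = Γ j k := by
  classical
  set S : Fin J → Finset (Fin K) := fun j => Finset.univ.filter (fun k => Γ j k = true) with hS
  set S' : Fin J → Finset (Fin K) := fun j => Finset.univ.filter (fun k => Γ' j k = true) with hS'
  have memS : ∀ j k, k ∈ S j ↔ Γ j k = true := by intro j k; simp [hS]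
  have memS' : ∀ j k, k ∈ S' j ↔ Γ' j k = true := by intro j k; simp [hS']
  have relrow : ∀ j, Rel σ (S j) (S' j) := by
    intro j h h'
    have := hσ j h h'
    constructor
    · intro hh k hk; exact this.mp (fun m hm => hh m ((memS j m).mpr hm)) k ((memS' j k).mp hk)
    · intro hh k hk; exact this.mpr (fun m hm => hh m ((memS' j m).mpr hm)) k ((memS j k).mp hk)
  have hSsub : ∀ i : Fin K, S (jdx i) ⊆ Finset.Iic i := by
    intro i k hk
    rw [Finset.mem_Iic]
    by_contra hik
    push_neg at hik
    have := (htri i).2 k hik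
    rw [(memS _ _).mp hk] at this
    simp at this
  have hSmem : ∀ i : Fin K, i ∈ S (jdx i) := fun i => (memS _ _).mpr (htri i).1
  set Vlt : Fin K → Finset (Fin K) := fun k => (Finset.Iio k).biUnion (fun i => S' (jdx i))
    with hVlt
  set V : Fin K → Finset (Fin K) := fun k => (Finset.Iic k).biUnion (fun i => S' (jdx i))
    with hV
  have hUlt : ∀ k : Fin K, (Finset.Iio k).biUnion (fun i => S (jdx i)) = Finset.Iio k := by
    intro k
    apply Finset.Subset.antisymm
    · intro m hm
      obtain ⟨i, hi, hmi⟩ := Finset.mem_biUnion.mp hm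
      rw [Finset.mem_Iio] at hi ⊢
      exact lt_of_le_of_lt (Finset.mem_Iic.mp (hSsub i hmi)) hi
    · intro i hi
      exact Finset.mem_biUnion.mpr ⟨i, hi, hSmem i⟩
  have hUle : ∀ k : Fin K, (Finset.Iic k).biUnion (fun i => S (jdx i)) = Finset.Iic k := by
    intro k
    apply Finset.Subset.antisymm
    · intro m hm
      obtain ⟨i, hi, hmi⟩ := Finset.mem_biUnion.mp hm
      rw [Finset.mem_Iic] at hi ⊢
      exact le_trans (Finset.mem_Iic.mp (hSsub i hmi)) hi
    · intro i hi
      exact Finset.mem_biUnion.mpr ⟨i, hi, hSmem i⟩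
  have relV : ∀ k, Rel σ (Finset.Iic k) (V k) := by
    intro k
    rw [← hUle k]
    exact rel_biUnion _ _ _ (fun i _ => relrow (jdx i))
  have relVlt : ∀ k, Rel σ (Finset.Iio k) (Vlt k) := by
    intro k
    rw [← hUlt k]
    exact rel_biUnion _ _ _ (fun i _ => relrow (jdx i))
  have cardV : ∀ k : Fin K, (V k).card = (k : ℕ) + 1 := by
    intro k
    rw [← rel_card (relV k)]
    simp [Fin.card_Iic]
  have cardVlt : ∀ k : Fin K, (Vlt k).card = (k : ℕ) := by
    intro k
    rw [← rel_card (relVlt k)]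
    simp [Fin.card_Iio]
  have hVltsubV : ∀ k, Vlt k ⊆ V k := by
    intro k
    exact Finset.biUnion_subset_biUnion_of_subset_left _ (Finset.Iio_subset_Iic_self)
  have cardD : ∀ k, (V k \ Vlt k).card = 1 := by
    intro k
    rw [Finset.card_sdiff_of_subset (hVltsubV k), cardV, cardVlt]
    omega
  have hDne : ∀ k, (V k \ Vlt k).Nonempty := by
    intro k
    rw [← Finset.card_pos, cardD]; omega
  set τ0 : Fin K → Fin K := fun k => (V k \ Vlt k).min' (hDne k) with hτ0
  have hτ0mem : ∀ k, τ0 k ∈ V k ∧ τ0 k ∉ Vlt k := by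
    intro k
    have := Finset.min'_mem (V k \ Vlt k) (hDne k)
    exact Finset.mem_sdiff.mp this
  have hVsubVlt : ∀ k k' : Fin K, k < k' → V k ⊆ Vlt k' := by
    intro k k' hkk'
    apply Finset.biUnion_subset_biUnion_of_subset_left
    intro i hi
    rw [Finset.mem_Iic] at hi
    rw [Finset.mem_Iio]
    exact lt_of_le_of_lt hi hkk'
  have τinj : Function.Injective τ0 := by
    intro a b hab
    by_contra hne
    rcases lt_or_gt_of_ne hne with hlt | hlt
    · have h3 := hVsubVlt a b hlt (hτ0mem a).1
      rw [hab] at h3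
      exact (hτ0mem b).2 h3
    · have h3 := hVsubVlt b a hlt (hτ0mem b).1
      rw [← hab] at h3
      exact (hτ0mem a).2 h3
  have hτ0S' : ∀ j k, k ∈ S j → τ0 k ∈ S' j := by
    intro j k hk
    have relU : Rel σ (S j ∪ Finset.Iio k) (S' j ∪ Vlt k) := rel_union (relrow j) (relVlt k)
    have hsubset : Finset.Iic k ⊆ S j ∪ Finset.Iio k := by
      intro m hm
      rcases eq_or_lt_of_le (Finset.mem_Iic.mp hm) with rfl | hlt
      · exact Finset.mem_union_left _ hk
      · exact Finset.mem_union_right _ (Finset.mem_Iio.mpr hlt)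
    have hVsub : V k ⊆ S' j ∪ Vlt k := rel_subset (relV k) relU hsubset
    have := hVsub (hτ0mem k).1
    rcases Finset.mem_union.mp this with h1 | h1
    · exact h1
    · exact absurd h1 (hτ0mem k).2
  have main : ∀ j, S' j = (S j).image τ0 := by
    intro j
    have hsub2 : (S j).image τ0 ⊆ S' j := by
      intro m hm
      obtain ⟨k, hk, rfl⟩ := Finset.mem_image.mp hm
      exact hτ0S' j k hk
    refine (Finset.eq_of_subset_of_card_le hsub2 ?_).symm
    rw [Finset.card_image_of_injective _ τinj]
    exact le_of_eq (rel_card (relrow j)).symm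
  refine ⟨Equiv.ofBijective τ0 (Finite.injective_iff_bijective.mp τinj), ?_⟩
  intro j k
  have h2 : τ0 k ∈ S' j ↔ k ∈ S j := by
    rw [main j, Finset.mem_image]
    constructor
    · rintro ⟨m, hm, hmk⟩
      rwa [← τinj hmk]
    · intro hk; exact ⟨k, hk, rfl⟩
  have : Γ' j (τ0 k) = true ↔ Γ j k = true := by
    rw [← memS' j, ← memS j]; exact h2
  simp only [Equiv.ofBijective_apply]
  exact Bool.eq_iff_iff.mpr this
end

section
/- Let K ≥ 2 and let Γ and Γ̃ be J×K binary matrices. Suppose there exist indices j_1, …, j_K ∈ {1,…,J} such that Γ_{j_k,k} = 1 and Γ_{j_k,k'} = 0 for all k' > k, and suppose Γ satisfies the subset condition. Let σ : {0,1}^K → {0,1}^K be a bijection such that for every j ∈ {1,…,J} and all h, h' ∈ {0,1}^K: h ~_{Γ,j} h' if and only if σ(h) ~_{Γ̃,j} σ(h'). Then there exist a permutation τ of {1,…,K} and s ∈ {0,1}^K such that Γ̃_{j,τ(k)} = Γ_{j,k} for all j, k, and σ(h)_{τ(k)} = h_k ⊕ s_k (addition modulo 2) for all h ∈ {0,1}^K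 and k ∈ {1,…,K}. That is, σ is necessarily a coordinate permutation composed with coordinatewise sign flips. -/
private lemma stmt8_splice {K : ℕ} (σ : (Fin K → Bool) ≃ (Fin K → Bool))
    (P P' Q Q' : Fin K → Prop)
    (hP : ∀ h h', (∀ m, P m → h m = h' m) ↔ (∀ m, P' m → σ h m = σ h' m))
    (hQ : ∀ h h', (∀ m, Q m → h m = h' m) ↔ (∀ m, Q' m → σ h m = σ h' m)) :
    ∀ h h', (∀ m, P m ∧ Q m → h m = h' m) ↔
      (∀ m, P' m ∧ Q' m → σ h m = σ h' m) := by
  classical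
  intro h h'
  constructor
  · intro H
    set g : Fin K → Bool := fun m => if P m then h m else h' m with hg
    have h1 : ∀ m, P' m → σ h m = σ g m := by
      refine (hP h g).mp ?_
      intro m hm; simp [hg, hm]
    have h2 : ∀ m, Q' m → σ g m = σ h' m := by
      refine (hQ g h').mp ?_
      intro m hm
      by_cases hp : P m
      · simpa [hg, hp] using H m ⟨hp, hm⟩
      · simp [hg, hp]
    intro m hm; rw [h1 m hm.1, h2 m hm.2]
  · intro H
    set g' : Fin K → Bool := fun m => if P' m then σ h m else σ h' m with hg
    have hsg : σ (σ.symm g') = g' := σ.apply_symm_apply g'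
    have h1 : ∀ m, P m → h m = σ.symm g' m := by
      refine (hP h (σ.symm g')).mpr ?_
      intro m hm; rw [hsg]; simp [hg, hm]
    have h2 : ∀ m, Q m → σ.symm g' m = h' m := by
      refine (hQ (σ.symm g') h').mpr ?_
      intro m hm; rw [hsg]
      by_cases hp : P' m
      · simpa [hg, hp] using H m ⟨hp, hm⟩
      · simp [hg, hp]
    intro m hm; rw [h1 m hm.1, h2 m hm.2]

private lemma stmt8_finset {J K : ℕ} (σ : (Fin K → Bool) ≃ (Fin K → Bool))
    (Γ Γ' : Fin J → Fin K → Bool)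
    (hσ : ∀ j h h', (∀ m, Γ j m = true → h m = h' m) ↔ (∀ m, Γ' j m = true → σ h m = σ h' m))
    (T : Finset (Fin J)) :
    ∀ h h', (∀ m, (∀ j ∈ T, Γ j m = true) → h m = h' m) ↔
      (∀ m, (∀ j ∈ T, Γ' j m = true) → σ h m = σ h' m) := by
  classical
  induction T using Finset.induction_on with
  | empty =>
    intro h h'
    simp only [Finset.notMem_empty, false_implies, implies_true, true_implies]
    constructor
    · intro H m; rw [funext H]
    · intro H m; rw [σ.injective (funext H)]
  | @insert a T hnot ih =>
    intro h h'
    simp only [Finset.forall_mem_insert]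
    exact stmt8_splice σ _ _ _ _ (hσ a) ih h h'

private lemma bxor_right_inj (a b c : Bool) : (Bool.xor a c = Bool.xor b c) ↔ a = b := by
  cases a <;> cases b <;> cases c <;> simp

/-- Let `K ≥ 2` and `Γ, Γ'` be `J × K` binary matrices, where `Γ` contains a
triangular `K × K` row-submatrix and satisfies the subset condition (for every ordered pair
`k ≠ l` there is a row `j` with `Γ j k = 1` and `Γ j l = 0`). If a bijection `σ` of `{0,1}^K`
preserves, for every row `j`, the parent-agreement equivalence, then `σ` is a coordinate
permutation composed with coordinatewise sign flips: there are a permutation `τ` and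
`s ∈ {0,1}^K` with `Γ' j (τ k) = Γ j k` and `(σ h) (τ k) = h k ⊕ s k`. -/
theorem stmt8 (J K : ℕ) (hK : 2 ≤ K)
    (Γ Γ' : Fin J → Fin K → Bool)
    (jdx : Fin K → Fin J)
    (htri : ∀ k, Γ (jdx k) k = true ∧ ∀ k' : Fin K, k < k' → Γ (jdx k) k' = false)
    (hsubset : ∀ k l : Fin K, k ≠ l → ∃ j, Γ j k = true ∧ Γ j l = false)
    (σ : (Fin K → Bool) ≃ (Fin K → Bool))
    (hσ : ∀ (j : Fin J) (h h' : Fin K → Bool),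
      (∀ k, Γ j k = true → h k = h' k) ↔ (∀ k, Γ' j k = true → σ h k = σ h' k)) :
    ∃ (τ : Equiv.Perm (Fin K)) (s : Fin K → Bool),
      (∀ j k, Γ' j (τ k) = Γ j k) ∧
      (∀ (h : Fin K → Bool) (k : Fin K), σ h (τ k) = Bool.xor (h k) (s k)) := by
  classical
  have hfinset := stmt8_finset σ Γ Γ' hσ
  -- Step 1: for each k there is a coordinate m such that σ h m depends only on h k
  have hex : ∀ k : Fin K, ∃ m : Fin K,
      ∀ h h' : Fin K → Bool, h k = h' k → σ h m = σ h' m := by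
    intro k
    set T : Finset (Fin J) := Finset.univ.filter (fun j => Γ j k = true) with hT
    have hmemk : ∀ j ∈ T, Γ j k = true := by
      intro j hj; exact (Finset.mem_filter.mp hj).2
    have honly : ∀ m : Fin K, (∀ j ∈ T, Γ j m = true) → m = k := by
      intro m hm
      by_contra hne
      obtain ⟨j, hjk, hjm⟩ := hsubset k m (fun e => hne e.symm)
      have hjT : j ∈ T := Finset.mem_filter.mpr ⟨Finset.mem_univ _, hjk⟩
      rw [hm j hjT] at hjm; exact Bool.noConfusion hjm
    by_cases hB : ∃ m : Fin K, ∀ j ∈ T, Γ' j m = true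
    · obtain ⟨m, hm⟩ := hB
      refine ⟨m, fun h h' hk => ?_⟩
      refine (hfinset T h h').mp (fun m' hm' => ?_) m hm
      rw [honly m' hm']; exact hk
    · exfalso
      push_neg at hB
      have hall : ∀ h h' : Fin K → Bool, h k = h' k := by
        intro h h'
        refine (hfinset T h h').mpr (fun m hBm => ?_) k hmemk
        obtain ⟨j, hjT, hj⟩ := hB m
        exact absurd (hBm j hjT) hj
      exact Bool.noConfusion (hall (fun _ => false) (fun _ => true))
  choose m₀ hdep using hex
  set s : Fin K → Bool := fun k => σ (fun _ => false) (m₀ k) with hs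
  -- nonconstancy: the true constant maps to the flip
  have hflip : ∀ k, σ (fun _ => true) (m₀ k) = ! (σ (fun _ => false) (m₀ k)) := by
    intro k
    by_contra hcon
    have heq : σ (fun _ => true) (m₀ k) = σ (fun _ => false) (m₀ k) := by
      revert hcon
      cases σ (fun _ => true) (m₀ k) <;> cases σ (fun _ => false) (m₀ k) <;> simp
    have hconst : ∀ h : Fin K → Bool, σ h (m₀ k) = σ (fun _ => false) (m₀ k) := by
      intro h
      cases hh : h k
      · exact hdep k h (fun _ => false) hh
      · rw [hdep k h (fun _ => true) hh, heq]
    have := hconst (σ.symm (fun _ => ! (σ (fun _ => false) (m₀ k))))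
    rw [σ.apply_symm_apply] at this
    exact (Bool.not_ne_self _) this
  have hform : ∀ (h : Fin K → Bool) (k : Fin K), σ h (m₀ k) = Bool.xor (h k) (s k) := by
    intro h k
    cases hh : h k
    · rw [hdep k h (fun _ => false) hh]; simp [hs]
    · rw [hdep k h (fun _ => true) hh, hflip k]; simp [hs]
  -- injectivity of m₀
  have hinj : Function.Injective m₀ := by
    intro k l hkl
    by_contra hne
    set h1 : Fin K → Bool := fun i => decide (i = k) with hh1
    have a := hform h1 k
    have b := hform h1 l
    have c := hform (fun _ => false) k
    have d := hform (fun _ => false) l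
    rw [hkl] at a c
    have hsl : s k = s l := by
      rw [c] at d; simpa using d
    rw [a, hsl] at b
    have hk1 : h1 k = true := by simp [hh1]
    have hl1 : h1 l = false := by simp [hh1]; exact fun e => hne e.symm
    rw [hk1, hl1] at b
    cases hsv : s l <;> rw [hsv] at b <;> exact Bool.noConfusion b
  refine ⟨Equiv.ofBijective m₀ (Finite.injective_iff_bijective.mp hinj), s, ?_, ?_⟩
  · -- Γ' j (τ k) = Γ j k
    set τ : Equiv.Perm (Fin K) := Equiv.ofBijective m₀ (Finite.injective_iff_bijective.mp hinj) with hτdef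
    have hτ : ∀ k, τ k = m₀ k := fun _ => rfl
    intro j k
    have hstep : ∀ h h' : Fin K → Bool,
        (∀ k', Γ j k' = true → h k' = h' k') ↔
        (∀ k', Γ' j (τ k') = true → h k' = h' k') := by
      intro h h'
      rw [hσ j h h']
      constructor
      · intro H k' hk'
        have := H (τ k') hk'
        rw [hτ, hform h k', hform h' k'] at this
        exact (bxor_right_inj _ _ _).mp this
      · intro H m hm
        have hmm : τ (τ.symm m) = m := τ.apply_symm_apply m
        have h2 : Γ' j (τ (τ.symm m)) = true := by rwa [hmm]
        have h3 := H (τ.symm m) h2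
        rw [← hmm, hτ, hform h (τ.symm m), hform h' (τ.symm m)]
        rw [h3]
    cases hg : Γ j k <;> cases hg' : Γ' j (τ k)
    · rfl
    · exfalso
      set h1 : Fin K → Bool := fun i => decide (i = k) with hh1
      have hrhs : ∀ k', Γ j k' = true → h1 k' = (fun _ => false) k' := by
        intro k' hk'
        by_cases hkk : k' = k
        · subst hkk; rw [hk'] at hg; exact Bool.noConfusion hg
        · simp [hh1, hkk]
      have := (hstep h1 (fun _ => false)).mp hrhs k hg'
      simp [hh1] at this
    · exfalso
      set h1 : Fin K → Bool := fun i => decide (i = k) with hh1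
      have hrhs : ∀ k', Γ' j (τ k') = true → h1 k' = (fun _ => false) k' := by
        intro k' hk'
        by_cases hkk : k' = k
        · subst hkk; rw [hk'] at hg'; exact Bool.noConfusion hg'
        · simp [hh1, hkk]
      have := (hstep h1 (fun _ => false)).mpr hrhs k hg
      simp [hh1] at this
    · rfl
  · intro h k
    exact hform h k
end

section
/- Let Γ and Γ̃ be J×K binary matrices and j_1, …, j_K ∈ {1,…,J} indices with Γ_{j_k,k} = 1 and Γ_{j_k,k'} = 0 for all k' > k. Let σ : {0,1}^K → {0,1}^K be a bijection such that for every k ∈ {1,…,K} and all h, h' ∈ {0,1}^K: h ~_{Γ,j_k} h' if and only if σ(h) ~_{Γ̃,j_k} σ(h'). For each k let 𝒫_k denote the partition of {0,1}^K into the equivalence classes of ~_{Γ̃,j_k}, and let 𝒬_k denote the common refinement of 𝒫_1, …, 𝒫_k. Then there exists a permutation τ of {1,…,K} such that for every k ∈ {1,…,K}: 𝒬_k = { σ({ h ∈ {0,1}^K : h_1 = c_1, …, h_k = c_k }) : (c_1,…,c_k) ∈ {0,1}^k } = { { g ∈ {0,1}^K : g_{τ(1)} = c_1, …, g_{τ(k)}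 = c_k } : (c_1,…,c_k) ∈ {0,1}^k }. In particular |𝒬_k| = 2^k and every block of 𝒬_k has cardinality 2^{K−k}. -/
/-- Parent-agreement relation: `h ~_{Γ,j} h'` iff `h k = h' k` for all `k` with `Γ j k = 1`. -/
def Agrees {J K : ℕ} (Γ : Fin J → Fin K → Bool) (j : Fin J) (h h' : Fin K → Bool) : Prop :=
  ∀ k, Γ j k = true → h k = h' k

/-- The common refinement `𝒬_k` of the partitions `𝒫_1, …, 𝒫_k` of `{0,1}^K` into the
equivalence classes of `~_{Γ',jdx 1}, …, ~_{Γ',jdx k}`: its blocks are the sets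
`⋂_{l ≤ k} [g]_{~_{Γ',jdx l}}` for `g ∈ {0,1}^K`. (Here `k : Fin K` encodes the index `k+1`.) -/
def RefinedPartition {J K : ℕ} (Γ' : Fin J → Fin K → Bool) (jdx : Fin K → Fin J)
    (k : Fin K) : Set (Set (Fin K → Bool)) :=
  { B | ∃ g : Fin K → Bool, B = { h | ∀ l : Fin K, l ≤ k → Agrees Γ' (jdx l) g h } }

/-! ### Auxiliary definitions and lemmas -/

/-- The set of coordinates a function must agree with `g` on, to lie in the level-`k` block
of `g`. -/
def Tset {J K : ℕ} (Γ' : Fin J → Fin K → Bool) (jdx : Fin K → Fin J) (k : Fin K) :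
    Finset (Fin K) :=
  (Finset.Iic k).biUnion (fun l => Finset.univ.filter (fun m => Γ' (jdx l) m = true))

lemma block_eq_agreeSet {J K : ℕ} (Γ' : Fin J → Fin K → Bool) (jdx : Fin K → Fin J)
    (k : Fin K) (g : Fin K → Bool) :
    { h | ∀ l : Fin K, l ≤ k → Agrees Γ' (jdx l) g h }
      = { h : Fin K → Bool | ∀ m ∈ Tset Γ' jdx k, h m = g m } := by
  ext h
  simp only [Set.mem_setOf_eq, Tset, Finset.mem_biUnion, Finset.mem_Iic, Finset.mem_filter,
    Finset.mem_univ, true_and, Agrees]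
  constructor
  · rintro H m ⟨l, hl, hm⟩; exact (H l hl m hm).symm
  · rintro H l hl m hm; exact (H m ⟨l, hl, hm⟩).symm

lemma ncard_agreeSet {K : ℕ} (T : Finset (Fin K)) (g : Fin K → Bool) :
    Set.ncard {h : Fin K → Bool | ∀ m ∈ T, h m = g m} = 2 ^ (K - T.card) := by
  classical
  have e : {h : Fin K → Bool | ∀ m ∈ T, h m = g m} ≃ ((Tᶜ : Finset (Fin K)) → Bool) :=
  { toFun := fun h m => h.1 m.1
    invFun := fun f => ⟨fun m => if hm : m ∈ T then g m else f ⟨m, Finset.mem_compl.mpr hm⟩,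
      by intro m hm; simp [hm]⟩
    left_inv := by
      rintro ⟨h, hh⟩
      ext m
      by_cases hm : m ∈ T
      · simp [hm, hh m hm]
      · simp [hm]
    right_inv := by
      intro f
      ext m
      have hm : (m : Fin K) ∉ T := Finset.mem_compl.mp m.2
      simp [hm] }
  rw [← Nat.card_coe_set_eq, Nat.card_congr e]
  simp [Nat.card_eq_fintype_card, Finset.card_compl]

/-- Under the triangularity hypothesis, the Γ-block of `g` at level `k` is a cylinder. -/
lemma blockTri_eq {J K : ℕ} (Γ : Fin J → Fin K → Bool) (jdx : Fin K → Fin J)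
    (htri : ∀ k, Γ (jdx k) k = true ∧ ∀ k' : Fin K, k < k' → Γ (jdx k) k' = false)
    (k : Fin K) (g : Fin K → Bool) :
    { h | ∀ l : Fin K, l ≤ k → Agrees Γ (jdx l) g h }
      = { h : Fin K → Bool | ∀ l : Fin K, l ≤ k → h l = g l } := by
  ext h
  simp only [Set.mem_setOf_eq, Agrees]
  constructor
  · intro H l hl
    exact (H l hl l (htri l).1).symm
  · intro H l hl m hm
    have hml : m ≤ l := by
      by_contra hml
      have := (htri l).2 m (lt_of_not_ge hml)
      simp [this] at hm
    exact (H m (le_trans hml hl)).symm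

lemma sigma_image_block {J K : ℕ} (Γ Γ' : Fin J → Fin K → Bool) (jdx : Fin K → Fin J)
    (σ : (Fin K → Bool) ≃ (Fin K → Bool))
    (hσ : ∀ (k : Fin K) (h h' : Fin K → Bool),
      Agrees Γ (jdx k) h h' ↔ Agrees Γ' (jdx k) (σ h) (σ h'))
    (k : Fin K) (g : Fin K → Bool) :
    σ '' { h | ∀ l : Fin K, l ≤ k → Agrees Γ (jdx l) g h }
      = { h | ∀ l : Fin K, l ≤ k → Agrees Γ' (jdx l) (σ g) h } := by
  ext h'
  constructor
  · rintro ⟨h, hh, rfl⟩ l hl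
    exact (hσ l g h).1 (hh l hl)
  · intro hh
    refine ⟨σ.symm h', fun l hl => (hσ l g (σ.symm h')).2 ?_, by simp⟩
    simpa using hh l hl

lemma refined_eq_sigma_cylinders {J K : ℕ} (Γ Γ' : Fin J → Fin K → Bool) (jdx : Fin K → Fin J)
    (htri : ∀ k, Γ (jdx k) k = true ∧ ∀ k' : Fin K, k < k' → Γ (jdx k) k' = false)
    (σ : (Fin K → Bool) ≃ (Fin K → Bool))
    (hσ : ∀ (k : Fin K) (h h' : Fin K → Bool),
      Agrees Γ (jdx k) h h' ↔ Agrees Γ' (jdx k) (σ h) (σ h'))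
    (k : Fin K) :
    RefinedPartition Γ' jdx k
      = { B | ∃ c : Fin K → Bool, B = σ '' { h | ∀ l : Fin K, l ≤ k → h l = c l } } := by
  ext B
  simp only [RefinedPartition, Set.mem_setOf_eq]
  constructor
  · rintro ⟨g, rfl⟩
    refine ⟨σ.symm g, ?_⟩
    rw [← blockTri_eq Γ jdx htri k (σ.symm g), sigma_image_block Γ Γ' jdx σ hσ,
      Equiv.apply_symm_apply]
  · rintro ⟨c, rfl⟩
    refine ⟨σ c, ?_⟩
    rw [← blockTri_eq Γ jdx htri k c, sigma_image_block Γ Γ' jdx σ hσ]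

lemma Tcard {J K : ℕ} (Γ Γ' : Fin J → Fin K → Bool) (jdx : Fin K → Fin J)
    (htri : ∀ k, Γ (jdx k) k = true ∧ ∀ k' : Fin K, k < k' → Γ (jdx k) k' = false)
    (σ : (Fin K → Bool) ≃ (Fin K → Bool))
    (hσ : ∀ (k : Fin K) (h h' : Fin K → Bool),
      Agrees Γ (jdx k) h h' ↔ Agrees Γ' (jdx k) (σ h) (σ h'))
    (k : Fin K) : (Tset Γ' jdx k).card = k.val + 1 := by
  have hB : ({ h | ∀ l : Fin K, l ≤ k → Agrees Γ' (jdx l) (fun _ => false) h } : Set _)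
      ∈ RefinedPartition Γ' jdx k := ⟨_, rfl⟩
  rw [refined_eq_sigma_cylinders Γ Γ' jdx htri σ hσ] at hB
  obtain ⟨c, hc⟩ := hB
  have h1 : Set.ncard { h | ∀ l : Fin K, l ≤ k → Agrees Γ' (jdx l) (fun _ => false) h }
      = 2 ^ (K - (Tset Γ' jdx k).card) := by
    rw [block_eq_agreeSet]; exact ncard_agreeSet _ _
  have h2 : Set.ncard (σ '' { h : Fin K → Bool | ∀ l : Fin K, l ≤ k → h l = c l })
      = 2 ^ (K - (k.val + 1)) := by
    rw [Set.ncard_image_of_injective _ σ.injective]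
    have hcyl : {h : Fin K → Bool | ∀ l : Fin K, l ≤ k → h l = c l}
        = {h : Fin K → Bool | ∀ m ∈ Finset.Iic k, h m = c m} := by
      ext h; simp [Finset.mem_Iic]
    rw [hcyl, ncard_agreeSet, Fin.card_Iic]
  rw [← hc] at h2
  have hinj := Nat.pow_right_injective (le_refl 2) (h1.symm.trans h2)
  have hle : (Tset Γ' jdx k).card ≤ K := by
    simpa using Finset.card_le_univ (Tset Γ' jdx k)
  have hk : k.val + 1 ≤ K := k.isLt
  omega

lemma Tmono {J K : ℕ} (Γ' : Fin J → Fin K → Bool) (jdx : Fin K → Fin J) {l k : Fin K}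
    (h : l ≤ k) : Tset Γ' jdx l ⊆ Tset Γ' jdx k :=
  Finset.biUnion_subset_biUnion_of_subset_left _ (Finset.Iic_subset_Iic.mpr h)

section
variable {J K : ℕ} (Γ' : Fin J → Fin K → Bool) (jdx : Fin K → Fin J)
  (hcard : ∀ k, (Tset Γ' jdx k).card = k.val + 1)

/-- Previously seen coordinates. -/
def Dset (k : Fin K) : Finset (Fin K) := (Finset.Iio k).biUnion (Tset Γ' jdx)

lemma Dsub (k : Fin K) : Dset Γ' jdx k ⊆ Tset Γ' jdx k :=
  Finset.biUnion_subset.mpr fun l hl => Tmono Γ' jdx (le_of_lt (Finset.mem_Iio.mp hl))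

include hcard in
lemma Dcard (k : Fin K) : (Dset Γ' jdx k).card ≤ k.val := by
  rcases Nat.eq_zero_or_pos k.val with hk0 | hk0
  · have hIio : Finset.Iio k = ∅ := by
      ext l; simp only [Finset.mem_Iio, Finset.notMem_empty, iff_false, Fin.lt_def]
      omega
    simp [Dset, hIio]
  · set k' : Fin K := ⟨k.val - 1, by omega⟩ with hk'
    have hsub : Dset Γ' jdx k ⊆ Tset Γ' jdx k' := by
      refine Finset.biUnion_subset.mpr fun l hl => Tmono Γ' jdx ?_
      have hlt : l < k := Finset.mem_Iio.mp hl
      have hlt' : l.val < k.val := hlt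
      simp only [Fin.le_def, hk']
      omega
    calc (Dset Γ' jdx k).card ≤ (Tset Γ' jdx k').card := Finset.card_le_card hsub
      _ = k'.val + 1 := hcard k'
      _ = k.val := by simp [hk']; omega

include hcard in
lemma Tsdiff_ne (k : Fin K) : (Tset Γ' jdx k \ Dset Γ' jdx k).Nonempty := by
  refine Finset.card_pos.mp ?_
  rw [Finset.card_sdiff_of_subset (Dsub Γ' jdx k), hcard k]
  have := Dcard Γ' jdx hcard k
  omega
end

/-- With `Γ` containing a triangular row-submatrix on rows `jdx 1, …, jdx K`
and a bijection `σ` of `{0,1}^K` preserving the parent-agreement equivalences of those rows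
between `Γ` and `Γ'`, there is a permutation `τ` of the latent coordinates such that for every
`k`, the common refinement `𝒬_k` consists exactly of the `σ`-images of the cylinders fixing the
first `k` coordinates, equivalently of the cylinders fixing coordinates `τ(1), …, τ(k)`; in
particular `|𝒬_k| = 2^k` and every block of `𝒬_k` has cardinality `2^{K−k}`. -/
theorem stmt9 (J K : ℕ)
    (Γ Γ' : Fin J → Fin K → Bool)
    (jdx : Fin K → Fin J)
    (htri : ∀ k, Γ (jdx k) k = true ∧ ∀ k' : Fin K, k < k' → Γ (jdx k) k' = false)
    (σ : (Fin K → Bool) ≃ (Fin K → Bool))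
    (hσ : ∀ (k : Fin K) (h h' : Fin K → Bool),
      Agrees Γ (jdx k) h h' ↔ Agrees Γ' (jdx k) (σ h) (σ h')) :
    ∃ τ : Equiv.Perm (Fin K), ∀ k : Fin K,
      (RefinedPartition Γ' jdx k
        = { B | ∃ c : Fin K → Bool,
            B = σ '' { h | ∀ l : Fin K, l ≤ k → h l = c l } }) ∧
      (RefinedPartition Γ' jdx k
        = { B | ∃ c : Fin K → Bool,
            B = { g | ∀ l : Fin K, l ≤ k → g (τ l) = c l } }) ∧
      (RefinedPartition Γ' jdx k).ncard = 2 ^ (k.val + 1) ∧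
      ∀ B ∈ RefinedPartition Γ' jdx k, B.ncard = 2 ^ (K - (k.val + 1)) := by
  classical
  have hTcard : ∀ k, (Tset Γ' jdx k).card = k.val + 1 := Tcard Γ Γ' jdx htri σ hσ
  have hne : ∀ k, (Tset Γ' jdx k \ Dset Γ' jdx k).Nonempty := Tsdiff_ne Γ' jdx hTcard
  set t : Fin K → Fin K := fun k => (Tset Γ' jdx k \ Dset Γ' jdx k).min' (hne k) with ht
  have htmem : ∀ k, t k ∈ Tset Γ' jdx k \ Dset Γ' jdx k := fun k => Finset.min'_mem _ _
  have key : ∀ a b : Fin K, a < b → t a ≠ t b := by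
    intro a b hab heq
    have h1 : t a ∈ Tset Γ' jdx a := (Finset.mem_sdiff.mp (htmem a)).1
    have h2 : t b ∉ Dset Γ' jdx b := (Finset.mem_sdiff.mp (htmem b)).2
    exact h2 (heq ▸ Finset.mem_biUnion.mpr ⟨a, Finset.mem_Iio.mpr hab, h1⟩)
  have tinj : Function.Injective t := by
    intro a b hab
    by_contra hne'
    rcases Ne.lt_or_gt hne' with hl | hl
    · exact key a b hl hab
    · exact key b a hl hab.symm
  have tbij := Finite.injective_iff_bijective.mp tinj
  refine ⟨Equiv.ofBijective t tbij, fun k => ?_⟩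
  have hτ : ∀ l, (Equiv.ofBijective t tbij) l = t l := fun l => rfl
  have hsymm : ∀ l, (Equiv.ofBijective t tbij).symm (t l) = l := fun l => by
    rw [← hτ]; exact Equiv.symm_apply_apply _ _
  have Timg : Tset Γ' jdx k = (Finset.Iic k).image t := by
    refine (Finset.eq_of_subset_of_card_le ?_ ?_).symm
    · intro m hm
      obtain ⟨l, hl, rfl⟩ := Finset.mem_image.mp hm
      exact Tmono Γ' jdx (Finset.mem_Iic.mp hl) (Finset.mem_sdiff.mp (htmem l)).1
    · rw [Finset.card_image_of_injective _ tinj, Fin.card_Iic, hTcard]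
  have eq1 := refined_eq_sigma_cylinders Γ Γ' jdx htri σ hσ k
  refine ⟨eq1, ?_, ?_, ?_⟩
  · -- second characterization via τ
    ext B
    simp only [RefinedPartition, Set.mem_setOf_eq]
    constructor
    · rintro ⟨g, rfl⟩
      refine ⟨fun l => g (t l), ?_⟩
      rw [block_eq_agreeSet Γ' jdx k g]
      ext h
      simp only [Set.mem_setOf_eq, Timg, hτ]
      constructor
      · intro H l hl
        exact H _ (Finset.mem_image_of_mem t (Finset.mem_Iic.mpr hl))
      · intro H m hm
        obtain ⟨l, hl, rfl⟩ := Finset.mem_image.mp hm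
        exact H l (Finset.mem_Iic.mp hl)
    · rintro ⟨c, rfl⟩
      refine ⟨fun m => c ((Equiv.ofBijective t tbij).symm m), ?_⟩
      rw [block_eq_agreeSet Γ' jdx k]
      ext h
      simp only [Set.mem_setOf_eq, Timg, hτ]
      constructor
      · intro H m hm
        obtain ⟨l, hl, rfl⟩ := Finset.mem_image.mp hm
        rw [hsymm l]
        exact H l (Finset.mem_Iic.mp hl)
      · intro H l hl
        have := H _ (Finset.mem_image_of_mem t (Finset.mem_Iic.mpr hl))
        rwa [hsymm l] at this
  · -- cardinality of the partition
    rw [eq1]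
    have himg : { B | ∃ c : Fin K → Bool, B = σ '' { h | ∀ l : Fin K, l ≤ k → h l = c l } }
        = (fun c : Fin K → Bool => σ '' { h | ∀ l : Fin K, l ≤ k → h l = c l }) ''
          {c : Fin K → Bool | ∀ m ∈ (Finset.Iic k)ᶜ, c m = (fun _ : Fin K => false) m} := by
      ext B
      simp only [Set.mem_setOf_eq, Set.mem_image]
      constructor
      · rintro ⟨c, rfl⟩
        refine ⟨fun m => if m ≤ k then c m else false, ?_, ?_⟩
        · intro m hm
          rw [Finset.mem_compl, Finset.mem_Iic] at hm
          simp [hm]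
        · have hsets : {h : Fin K → Bool | ∀ l : Fin K, l ≤ k →
              h l = if l ≤ k then c l else false}
              = {h : Fin K → Bool | ∀ l : Fin K, l ≤ k → h l = c l} := by
            ext h
            simp only [Set.mem_setOf_eq]
            constructor <;> intro H l hl
            · simpa [hl] using H l hl
            · simp [hl, H l hl]
          rw [hsets]
      · rintro ⟨c, _, rfl⟩; exact ⟨c, rfl⟩
    have hinjOn : Set.InjOn
        (fun c : Fin K → Bool => σ '' { h | ∀ l : Fin K, l ≤ k → h l = c l })
        {c : Fin K → Bool | ∀ m ∈ (Finset.Iic k)ᶜ, c m = (fun _ : Fin K => false) m} := by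
      intro c1 h1 c2 h2 heq
      simp only [Set.mem_setOf_eq, Finset.mem_compl, Finset.mem_Iic] at h1 h2
      have hcyl : {h : Fin K → Bool | ∀ l : Fin K, l ≤ k → h l = c1 l}
          = {h : Fin K → Bool | ∀ l : Fin K, l ≤ k → h l = c2 l} :=
        Set.image_injective.mpr σ.injective heq
      have hc1 : c1 ∈ {h : Fin K → Bool | ∀ l : Fin K, l ≤ k → h l = c2 l} := by
        rw [← hcyl]; intro l hl; rfl
      funext m
      by_cases hm : m ≤ k
      · exact hc1 m hm
      · rw [h1 m hm, h2 m hm]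
    rw [himg, Set.ncard_image_of_injOn hinjOn, ncard_agreeSet, Finset.card_compl, Fin.card_Iic]
    have hk : k.val + 1 ≤ K := k.isLt
    congr 1
    simp only [Fintype.card_fin]
    omega
  · -- cardinality of each block
    rintro B ⟨g, rfl⟩
    rw [block_eq_agreeSet Γ' jdx k g, ncard_agreeSet, hTcard k]
end

section
/- Let 𝒳_1, …, 𝒳_J be finite nonempty sets. Let Γ be a J×K binary matrix such that: (i) Γ is double triangular, witnessed by disjoint row sets S1, S2 ⊆ {1,…,J} of size K each; (ii) for every k ∈ {1,…,K} there exists j ∈ {1,…,J} \ (S1 ∪ S2) with Γ_{j,k} = 1; and (iii) Γ satisfies the subset condition. Let (P_{j,h}) be pmfs on 𝒳_j compatible with Γ and let π : {0,1}^K → (0,1] be strictly positive with Σ_h π_h = 1. Let Γ̃ be any J×K binary matrix, (Q_{j,h}) pmfs on 𝒳_j compatible with Γ̃, and π̃ : {0,1}^K → (0,1] strictly positive with Σ_h π̃_h = 1. If Σ_{h ∈ {0,1}^K} π_h ∏_{j=1}^J P_{j,h}(x_j) = Σ_{h ∈ {0,1}^K} π̃_h ∏_{j=1}^J Q_{j,h}(x_j)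 for every x ∈ ∏_j 𝒳_j, then there exist a permutation τ of {1,…,K} and s ∈ {0,1}^K such that, defining φ : {0,1}^K → {0,1}^K by φ(h)_{τ(k)} = h_k ⊕ s_k, one has Γ̃_{j,τ(k)} = Γ_{j,k}, π̃_{φ(h)} = π_h, and Q_{j,φ(h)} = P_{j,h} for all j, k, h. That is, the bipartite graph, the latent proportions, and all conditional distributions are identifiable up to latent label permutation and sign flipping. -/
open Finset Matrix

universe u


/-- Marginalization: if products of families with unit sums agree pointwise, factors agree. -/
lemma factor_eq {ι : Type*} [Fintype ι] [DecidableEq ι] {Y : ι → Type*} [∀ i, Fintype (Y i)]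
    (p q : ∀ i, Y i → ℝ) (hp : ∀ i, ∑ y, p i y = 1) (hq : ∀ i, ∑ y, q i y = 1)
    (h : ∀ x : ∀ i, Y i, ∏ i, p i (x i) = ∏ i, q i (x i)) (i0 : ι) : p i0 = q i0 := by
  classical
  funext y0
  have key : ∀ r : ∀ i, Y i → ℝ, (∀ i, ∑ y, r i y = 1) →
      ∑ x : ∀ i, Y i, (if x i0 = y0 then (1:ℝ) else 0) * ∏ i, r i (x i) = r i0 y0 := by
    intro r hr
    have hrw : ∀ x : ∀ i, Y i,
        (if x i0 = y0 then (1:ℝ) else 0) * ∏ i, r i (x i)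
          = ∏ i, (Function.update r i0 (fun y => (if y = y0 then (1:ℝ) else 0) * r i0 y)) i (x i) := by
      intro x
      rw [← Finset.mul_prod_erase univ
          (fun i => (Function.update r i0 (fun y => (if y = y0 then (1:ℝ) else 0) * r i0 y)) i (x i))
          (mem_univ i0),
        ← Finset.mul_prod_erase univ (fun i => r i (x i)) (mem_univ i0)]
      have h2 : ∀ i ∈ univ.erase i0,
          (Function.update r i0 (fun y => (if y = y0 then (1:ℝ) else 0) * r i0 y)) i (x i)
            = r i (x i) := by
        intro i hi
        rw [Function.update_of_ne (Finset.ne_of_mem_erase hi)]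
      rw [Finset.prod_congr rfl h2, Function.update_self]
      ring
    calc ∑ x : ∀ i, Y i, (if x i0 = y0 then (1:ℝ) else 0) * ∏ i, r i (x i)
        = ∑ x : ∀ i, Y i, ∏ i, (Function.update r i0
            (fun y => (if y = y0 then (1:ℝ) else 0) * r i0 y)) i (x i) := by
          exact Finset.sum_congr rfl (fun x _ => hrw x)
      _ = ∏ i, ∑ y, (Function.update r i0
            (fun y => (if y = y0 then (1:ℝ) else 0) * r i0 y)) i y := (Fintype.prod_sum _).symm
      _ = r i0 y0 := by
          rw [← Finset.mul_prod_erase univ _ (mem_univ i0), Function.update_self]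
          have h3 : ∀ i ∈ univ.erase i0, ∑ y, (Function.update r i0
              (fun y => (if y = y0 then (1:ℝ) else 0) * r i0 y)) i y = 1 := by
            intro i hi
            rw [Function.update_of_ne (Finset.ne_of_mem_erase hi)]
            exact hr i
          rw [Finset.prod_congr rfl h3, Finset.prod_const_one, mul_one]
          simp [ite_mul, hr i0]
  have := key p hp
  rw [Finset.sum_congr rfl (fun x _ => by rw [h x])] at this
  rw [key q hq] at this
  exact this.symm

/-- Dual family to a linearly independent family. -/
lemma exists_dual {R M : Type*} [AddCommGroup M] [Module ℝ M] [DecidableEq R]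
    {v : R → M} (hv : LinearIndependent ℝ v) :
    ∃ φ : R → M →ₗ[ℝ] ℝ, ∀ i j, φ i (v j) = if j = i then 1 else 0 := by
  obtain ⟨q, hq⟩ := Submodule.exists_isCompl (Submodule.span ℝ (Set.range v))
  set p := Submodule.span ℝ (Set.range v) with hp
  let proj := p.projectionOnto q hq
  let B := Module.Basis.span hv
  refine ⟨fun i => (B.coord i).comp proj, fun i j => ?_⟩
  have hmem : v j ∈ p := Submodule.subset_span ⟨j, rfl⟩
  have hproj : proj (v j) = B j := by
    have h1 : proj ((⟨v j, hmem⟩ : p) : M) = ⟨v j, hmem⟩ :=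
      Submodule.projectionOnto_apply_left hq ⟨v j, hmem⟩
    have h2 : (B j : M) = v j := congrArg Subtype.val (Module.Basis.span_apply hv j)
    apply Subtype.ext
    rw [show proj (v j) = proj ((⟨v j, hmem⟩ : p) : M) from rfl, h1]
    exact h2.symm
  simp only [LinearMap.comp_apply, hproj, Module.Basis.coord_apply, Module.Basis.repr_self,
    Finsupp.single_apply]



/-- Triangular family of conditionals gives linearly independent product vectors. -/
lemma tri_indep : ∀ (K : ℕ) (Y : Fin K → Type u) (instY : ∀ k, Fintype (Y k))
    (p : (k : Fin K) → (Fin K → Bool) → Y k → ℝ),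
    (∀ (k : Fin K) (h h' : Fin K → Bool), (∀ k', k' ≤ k → h k' = h' k') → p k h = p k h') →
    (∀ (k : Fin K) (h h' : Fin K → Bool), p k h = p k h' → h k = h' k) →
    (∀ k h, ∑ y, p k h y = 1) →
    ∀ g : (Fin K → Bool) → ℝ,
    (∀ x : ∀ k, Y k, ∑ h, g h * ∏ k, p k h (x k) = 0) → ∀ h, g h = 0 := by
  intro K
  induction K with
  | zero =>
    intro Y instY p _ _ _ g hg h
    have := hg (fun k => k.elim0)
    have h1 : ∑ h' : Fin 0 → Bool, g h' * ∏ k : Fin 0, p k h' ((fun k => k.elim0) k) = g h * 1 := by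
      apply Fintype.sum_eq_single h
      intro h' hne
      exact absurd (funext fun k => k.elim0) hne
    rw [h1, mul_one] at this
    exact this
  | succ K ih =>
    intro Y instY p hA1 hA2 hA3 g hg h
    set e : Bool → Y 0 → ℝ := fun b => p 0 (Fin.cons b (fun _ => false)) with he
    have hp0 : ∀ (b : Bool) (t : Fin K → Bool), p 0 (Fin.cons b t) = e b := by
      intro b t
      apply hA1
      intro k' hk'
      have : k' = 0 := Fin.le_zero_iff.mp hk'
      subst this
      simp
    -- the inner sums vanish
    have hS : ∀ (b : Bool) (xt : ∀ k : Fin K, Y k.succ),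
        ∑ t : Fin K → Bool, g (Fin.cons b t) * ∏ k : Fin K, p k.succ (Fin.cons b t) (xt k) = 0 := by
      intro b xt
      set S : Bool → ℝ := fun b' =>
        ∑ t : Fin K → Bool, g (Fin.cons b' t) * ∏ k : Fin K, p k.succ (Fin.cons b' t) (xt k)
        with hSdef
      have hkey : ∀ y : Y 0, e true y * S true + e false y * S false = 0 := by
        intro y
        have h0 := hg (Fin.cons y xt)
        have hre : ∑ h' : Fin (K+1) → Bool, g h' * ∏ k, p k h' (Fin.cons y xt k)
            = ∑ z : Bool × (Fin K → Bool),
                g (Fin.cons z.1 z.2) * ∏ k, p k (Fin.cons z.1 z.2) (Fin.cons y xt k) := by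
          exact (Fintype.sum_equiv (Fin.consEquiv (fun _ => Bool)) _ _ (fun z => rfl)).symm
        rw [hre, Fintype.sum_prod_type] at h0
        have hterm : ∀ (b' : Bool) (t : Fin K → Bool),
            g (Fin.cons b' t) * ∏ k, p k (Fin.cons b' t) (Fin.cons y xt k)
              = e b' y * (g (Fin.cons b' t) * ∏ k : Fin K, p k.succ (Fin.cons b' t) (xt k)) := by
          intro b' t
          rw [Fin.prod_univ_succ]
          simp only [Fin.cons_zero, Fin.cons_succ, hp0]
          ring
        calc e true y * S true + e false y * S false
            = ∑ b' : Bool, ∑ t : Fin K → Bool,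
                g (Fin.cons b' t) * ∏ k, p k (Fin.cons b' t) (Fin.cons y xt k) := by
              rw [Fintype.sum_bool]
              simp only [hSdef, Finset.mul_sum]
              congr 1 <;> exact Finset.sum_congr rfl (fun t _ => (hterm _ t).symm)
          _ = 0 := h0
      have hsum : S true + S false = 0 := by
        have := Finset.sum_congr rfl (fun y (_ : y ∈ (univ : Finset (Y 0))) => hkey y)
        rw [Finset.sum_const_zero] at this
        rw [Finset.sum_add_distrib, ← Finset.sum_mul, ← Finset.sum_mul] at this
        rw [he] at this
        rw [hA3 0 (Fin.cons true (fun _ => false)), hA3 0 (Fin.cons false (fun _ => false))] at this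
        simpa using this
      have hne : e true ≠ e false := by
        intro hcontra
        have := hA2 0 _ _ hcontra
        simp at this
      obtain ⟨y0, hy0⟩ : ∃ y0, e true y0 ≠ e false y0 := by
        by_contra hco
        push_neg at hco
        exact hne (funext hco)
      have h1 := hkey y0
      have hSf : S false = -S true := by linarith
      rw [hSf] at h1
      have : (e true y0 - e false y0) * S true = 0 := by ring_nf; ring_nf at h1; linarith
      have hst : S true = 0 := by
        rcases mul_eq_zero.mp this with h2 | h2
        · exact absurd (by linarith : e true y0 = e false y0) hy0
        · exact h2
      have hsfalse : S false = 0 := by linarith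
      cases b
      · exact hsfalse
      · exact hst
    -- apply induction hypothesis for each b
    have hIH : ∀ (b : Bool) (t : Fin K → Bool), g (Fin.cons b t) = 0 := by
      intro b
      refine ih (fun k => Y k.succ) (fun k => instY k.succ)
        (fun k t => p k.succ (Fin.cons b t)) ?_ ?_ (fun k t => hA3 k.succ _) _ (hS b)
      · intro k t t' hag
        apply hA1
        intro k' hk'
        revert hk'
        refine Fin.cases ?_ ?_ k'
        · intro _; simp
        · intro j hj
          simp only [Fin.cons_succ]
          exact hag j (Fin.succ_le_succ_iff.mp hj)
      · intro k t t' hpe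
        have := hA2 k.succ _ _ hpe
        simpa using this
    have := hIH (h 0) (Fin.tail h)
    rwa [Fin.cons_self_tail] at this

lemma block_indep_s10 {K : ℕ} (Y : Fin K → Type u) [instY : ∀ k, Fintype (Y k)]
    (Γr : Fin K → Fin K → Bool) (htri : IsTriangular Γr)
    (p : (j : Fin K) → (Fin K → Bool) → Y j → ℝ)
    (hsum : ∀ j h, ∑ y, p j h y = 1)
    (hcomp : ∀ j h h', p j h = p j h' ↔ (∀ m, Γr j m = true → h m = h' m)) :
    LinearIndependent ℝ (fun (h : Fin K → Bool) => (fun x : ∀ j, Y j => ∏ j, p j h (x j))) := by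
  obtain ⟨ρ, c, hdiag, hup⟩ := htri
  rw [Fintype.linearIndependent_iff]
  intro g hg h0
  -- the reindexed family
  set p' : (k : Fin K) → (Fin K → Bool) → Y (ρ k) → ℝ :=
    fun k h => p (ρ k) (fun m => h (c.symm m)) with hp'
  have key := tri_indep K (fun k => Y (ρ k)) (fun k => instY (ρ k)) p' ?_ ?_
      (fun k h => hsum (ρ k) _) (fun h => g (fun m => h (c.symm m))) ?_
  · have := key (fun m => h0 (c m))
    have he : (fun m => (fun m' => h0 (c m')) (c.symm m)) = h0 := by
      funext m; simp
    rwa [he] at this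
  · -- A1
    intro k h h' hag
    apply (hcomp _ _ _).mpr
    intro m hm
    have hmc : m = c (c.symm m) := (c.apply_symm_apply m).symm
    have hle : c.symm m ≤ k := by
      by_contra hlt
      push_neg at hlt
      rw [hmc] at hm
      rw [hup k (c.symm m) hlt] at hm
      exact Bool.noConfusion hm
    exact hag (c.symm m) hle
  · -- A2
    intro k h h' hpe
    have := (hcomp _ _ _).mp hpe (c k) (hdiag k)
    simpa using this
  · -- hypothesis
    intro x
    have hx2 : ∑ h, g h * ∏ j, p j h ((Equiv.piCongrLeft Y ρ) x j) = 0 := by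
      have hx := congrFun hg ((Equiv.piCongrLeft Y ρ) x)
      simpa [Finset.sum_apply, smul_eq_mul] using hx
    rw [← hx2]
    apply Fintype.sum_equiv (Equiv.arrowCongr c (Equiv.refl Bool))
    intro h
    have h4 : (Equiv.arrowCongr c (Equiv.refl Bool)) h = fun m => h (c.symm m) := by
      funext m; simp [Equiv.arrowCongr]
    rw [h4]
    have h2 : ∀ k, (Equiv.piCongrLeft Y ρ) x (ρ k) = x k :=
      fun k => Equiv.piCongrLeft_apply_apply Y ρ x k
    have h3 : ∏ j, p j (fun m => h (c.symm m)) ((Equiv.piCongrLeft Y ρ) x j)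
        = ∏ k, p (ρ k) (fun m => h (c.symm m)) ((Equiv.piCongrLeft Y ρ) x (ρ k)) :=
      (Equiv.prod_comp ρ _).symm
    rw [h3]
    congr 1
    apply Finset.prod_congr rfl
    intro k _
    rw [h2 k]

lemma core {R α β γ : Type*} [Fintype R] [DecidableEq R] [Fintype α] [Fintype β] [Fintype γ]
    (π π' : R → ℝ) (a a' : R → α → ℝ) (b b' : R → β → ℝ) (c c' : R → γ → ℝ)
    (hπ : ∀ r, 0 < π r) (hπ' : ∀ r, 0 < π' r)
    (ha : LinearIndependent ℝ a) (hb : LinearIndependent ℝ b)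
    (ha1 : ∀ r, ∑ x, a r x = 1) (ha'1 : ∀ r, ∑ x, a' r x = 1)
    (hb1 : ∀ r, ∑ x, b r x = 1) (hb'1 : ∀ r, ∑ x, b' r x = 1)
    (hc1 : ∀ r, ∑ x, c r x = 1) (hc'1 : ∀ r, ∑ x, c' r x = 1)
    (hcinj : Function.Injective c)
    (heq : ∀ xa xb xc, ∑ r, π r * (a r xa * b r xb * c r xc)
      = ∑ r, π' r * (a' r xa * b' r xb * c' r xc)) :
    ∃ σ : Equiv.Perm R, ∀ r,
      π' (σ r) = π r ∧ a' (σ r) = a r ∧ b' (σ r) = b r ∧ c' (σ r) = c r := by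
  classical
  obtain ⟨φa, hφa⟩ := exists_dual ha
  obtain ⟨φb, hφb⟩ := exists_dual hb
  set U : R → R → ℝ := fun r0 r => φa r0 (a' r) with hU
  set V : R → R → ℝ := fun r1 r => φb r1 (b' r) with hV
  -- E1 : apply φa
  have E1 : ∀ r0 xb xc, π r0 * (b r0 xb * c r0 xc)
      = ∑ r, π' r * (U r0 r * (b' r xb * c' r xc)) := by
    intro r0 xb xc
    have hfun : ∑ r, (π r * (b r xb * c r xc)) • a r
        = ∑ r, (π' r * (b' r xb * c' r xc)) • a' r := by
      funext xa
      simp only [Finset.sum_apply, Pi.smul_apply, smul_eq_mul]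
      calc ∑ r, π r * (b r xb * c r xc) * a r xa
          = ∑ r, π r * (a r xa * b r xb * c r xc) := by
            apply Finset.sum_congr rfl; intro r _; ring
        _ = ∑ r, π' r * (a' r xa * b' r xb * c' r xc) := heq xa xb xc
        _ = ∑ r, π' r * (b' r xb * c' r xc) * a' r xa := by
            apply Finset.sum_congr rfl; intro r _; ring
    have happ := congrArg (φa r0) hfun
    rw [map_sum, map_sum] at happ
    simp only [_root_.map_smul, smul_eq_mul, hφa, mul_ite, mul_one, mul_zero] at happ
    rw [Finset.sum_ite_eq' univ r0 (fun r => π r * (b r xb * c r xc))] at happ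
    simp only [mem_univ, if_true] at happ
    calc π r0 * (b r0 xb * c r0 xc) = _ := happ
      _ = ∑ r, π' r * (U r0 r * (b' r xb * c' r xc)) := by
        apply Finset.sum_congr rfl; intro r _; rw [hU]; ring
  -- E2 : apply φb
  have E2 : ∀ r1 xa xc, π r1 * (a r1 xa * c r1 xc)
      = ∑ r, π' r * (V r1 r * (a' r xa * c' r xc)) := by
    intro r1 xa xc
    have hfun : ∑ r, (π r * (a r xa * c r xc)) • b r
        = ∑ r, (π' r * (a' r xa * c' r xc)) • b' r := by
      funext xb
      simp only [Finset.sum_apply, Pi.smul_apply, smul_eq_mul]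
      calc ∑ r, π r * (a r xa * c r xc) * b r xb
          = ∑ r, π r * (a r xa * b r xb * c r xc) := by
            apply Finset.sum_congr rfl; intro r _; ring
        _ = ∑ r, π' r * (a' r xa * b' r xb * c' r xc) := heq xa xb xc
        _ = ∑ r, π' r * (a' r xa * c' r xc) * b' r xb := by
            apply Finset.sum_congr rfl; intro r _; ring
    have happ := congrArg (φb r1) hfun
    rw [map_sum, map_sum] at happ
    simp only [_root_.map_smul, smul_eq_mul, hφb, mul_ite, mul_one, mul_zero] at happ
    rw [Finset.sum_ite_eq' univ r1 (fun r => π r * (a r xa * c r xc))] at happ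
    simp only [mem_univ, if_true] at happ
    calc π r1 * (a r1 xa * c r1 xc) = _ := happ
      _ = _ := by apply Finset.sum_congr rfl; intro r _; rw [hV]; ring
  -- star : apply φa to E2
  have star : ∀ r0 r1 xc, (if r0 = r1 then π r0 * c r0 xc else 0)
      = ∑ r, π' r * (U r0 r * V r1 r * c' r xc) := by
    intro r0 r1 xc
    have hfun : (π r1 * c r1 xc) • a r1 = ∑ r, (π' r * (V r1 r * c' r xc)) • a' r := by
      funext xa
      simp only [Finset.sum_apply, Pi.smul_apply, smul_eq_mul]
      calc π r1 * c r1 xc * a r1 xa = π r1 * (a r1 xa * c r1 xc) := by ring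
        _ = ∑ r, π' r * (V r1 r * (a' r xa * c' r xc)) := E2 r1 xa xc
        _ = ∑ r, π' r * (V r1 r * c' r xc) * a' r xa := by
            apply Finset.sum_congr rfl; intro r _; ring
    have happ := congrArg (φa r0) hfun
    rw [_root_.map_smul, map_sum] at happ
    simp only [_root_.map_smul, smul_eq_mul, hφa, mul_ite, mul_one, mul_zero] at happ
    rw [show (if r1 = r0 then π r1 * c r1 xc else 0)
        = (if r0 = r1 then π r0 * c r0 xc else 0) from ?_] at happ
    · calc (if r0 = r1 then π r0 * c r0 xc else 0) = _ := happ
        _ = _ := by apply Finset.sum_congr rfl; intro r _; rw [hU]; ring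
    · by_cases hrr : r0 = r1
      · subst hrr; simp
      · rw [if_neg hrr, if_neg (Ne.symm hrr)]
  -- starstar : sum over xc
  have starstar : ∀ r0 r1, (if r0 = r1 then π r0 else 0)
      = ∑ r, π' r * (U r0 r * V r1 r) := by
    intro r0 r1
    have := Finset.sum_congr rfl (fun xc (_ : xc ∈ (univ : Finset γ)) => star r0 r1 xc)
    rw [Finset.sum_comm] at this
    have hL : ∑ xc, (if r0 = r1 then π r0 * c r0 xc else 0) = (if r0 = r1 then π r0 else 0) := by
      by_cases hrr : r0 = r1
      · simp only [if_pos hrr, ← Finset.mul_sum, hc1, mul_one]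
      · simp [hrr]
    rw [hL] at this
    rw [this]
    apply Finset.sum_congr rfl
    intro r _
    rw [← Finset.mul_sum, ← Finset.mul_sum, hc'1, mul_one]
  -- Matrices
  set MU : Matrix R R ℝ := Matrix.of U with hMU
  set MV : Matrix R R ℝ := Matrix.of (fun r r1 => V r1 r) with hMV
  have hDiag : MU * (Matrix.diagonal π' * MV) = Matrix.diagonal π := by
    ext r0 r1
    rw [Matrix.mul_apply]
    simp only [hMU, hMV, Matrix.of_apply, Matrix.diagonal_mul, Matrix.diagonal_apply]
    rw [show (if r0 = r1 then π r0 else 0) = ∑ r, π' r * (U r0 r * V r1 r) from starstar r0 r1]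
    apply Finset.sum_congr rfl; intro r _; ring
  have hπinv : Matrix.diagonal π * Matrix.diagonal (fun r => (π r)⁻¹) = 1 := by
    rw [Matrix.diagonal_mul_diagonal]
    rw [show (fun r => π r * (π r)⁻¹) = fun _ => (1:ℝ) from funext fun r => mul_inv_cancel₀ (ne_of_gt (hπ r))]
    exact Matrix.diagonal_one
  haveI hIDiag : Invertible (Matrix.diagonal π) :=
    invertibleOfRightInverse _ _ hπinv
  haveI hIMU : Invertible MU :=
    invertibleOfRightInverse _ ((Matrix.diagonal π' * MV) * ⅟(Matrix.diagonal π)) (by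
      rw [← Matrix.mul_assoc, hDiag, mul_invOf_self])
  -- injectivity of mulVec
  have hMUinj : Function.Injective MU.mulVec := by
    intro x y hxy
    have := congrArg (⅟MU).mulVec hxy
    rwa [Matrix.mulVec_mulVec, Matrix.mulVec_mulVec, invOf_mul_self,
      Matrix.one_mulVec, Matrix.one_mulVec] at this
  -- columns nonzero
  have hcolnz : ∀ r, ∃ r0, U r0 r ≠ 0 := by
    intro r
    by_contra hco
    push_neg at hco
    have h0 : MU.mulVec (Pi.single r 1) = MU.mulVec 0 := by
      rw [Matrix.mulVec_single, Matrix.mulVec_zero]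
      funext r0
      change MU r0 r * 1 = 0; rw [mul_one]
      exact hco r0
    have := hMUinj h0
    have := congrFun this r
    rw [Pi.single_eq_same] at this
    exact one_ne_zero this
  -- commutation relation
  have hMVeq : Matrix.diagonal π' * MV = ⅟MU * Matrix.diagonal π := by
    have h0 := congrArg (fun M => ⅟MU * M) hDiag
    simpa only [← Matrix.mul_assoc, invOf_mul_self, Matrix.one_mul] using h0
  haveI hIDpMV : Invertible (Matrix.diagonal π' * MV) := by
    rw [hMVeq]; exact invertibleMul _ _
  have hcomm : ∀ xc, MU * Matrix.diagonal (fun r => c' r xc)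
      = Matrix.diagonal (fun r => c r xc) * MU := by
    intro xc
    have hslice : MU * (Matrix.diagonal (fun r => π' r * c' r xc) * MV)
        = Matrix.diagonal (fun r => π r * c r xc) := by
      ext r0 r1
      rw [Matrix.mul_apply]
      simp only [hMU, hMV, Matrix.of_apply, Matrix.diagonal_mul, Matrix.diagonal_apply]
      rw [show (if r0 = r1 then π r0 * c r0 xc else 0)
        = ∑ r, π' r * (U r0 r * V r1 r * c' r xc) from star r0 r1 xc]
      apply Finset.sum_congr rfl; intro r _; ring
    have beq : (MU * Matrix.diagonal (fun r => c' r xc)) * (Matrix.diagonal π' * MV)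
        = (Matrix.diagonal (fun r => c r xc) * MU) * (Matrix.diagonal π' * MV) := by
      calc (MU * Matrix.diagonal (fun r => c' r xc)) * (Matrix.diagonal π' * MV)
          = MU * ((Matrix.diagonal (fun r => c' r xc) * Matrix.diagonal π') * MV) := by
            rw [Matrix.mul_assoc, Matrix.mul_assoc]
        _ = MU * (Matrix.diagonal (fun r => π' r * c' r xc) * MV) := by
            rw [Matrix.diagonal_mul_diagonal,
              show (fun r => c' r xc * π' r) = fun r => π' r * c' r xc from
                funext fun r => mul_comm _ _]
        _ = Matrix.diagonal (fun r => π r * c r xc) := hslice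
        _ = Matrix.diagonal (fun r => c r xc) * Matrix.diagonal π := by
            rw [Matrix.diagonal_mul_diagonal,
              show (fun r => c r xc * π r) = fun r => π r * c r xc from
                funext fun r => mul_comm _ _]
        _ = Matrix.diagonal (fun r => c r xc) * (MU * (Matrix.diagonal π' * MV)) := by
            rw [hDiag]
        _ = (Matrix.diagonal (fun r => c r xc) * MU) * (Matrix.diagonal π' * MV) := by
            rw [Matrix.mul_assoc]
    have := congrArg (fun M => M * ⅟(Matrix.diagonal π' * MV)) beq
    simpa only [Matrix.mul_assoc, mul_invOf_self, Matrix.mul_one] using this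
  -- if U r0 r ≠ 0 then columns match
  have hUent : ∀ r0 r, U r0 r ≠ 0 → c' r = c r0 := by
    intro r0 r hne
    funext xc
    have h0 := congrFun (congrFun (hcomm xc) r0) r
    have h1 : U r0 r * c' r xc = c r0 xc * U r0 r := by
      have e1 : (MU * Matrix.diagonal (fun r => c' r xc)) r0 r = U r0 r * c' r xc := by
        rw [Matrix.mul_diagonal]; rfl
      have e2 : (Matrix.diagonal (fun r => c r xc) * MU) r0 r = c r0 xc * U r0 r := by
        rw [Matrix.diagonal_mul]; rfl
      rw [← e1, ← e2, h0]
    have := mul_right_cancel₀ hne (by rw [mul_comm (c' r xc) (U r0 r)] at *; linarith [h1] : c' r xc * U r0 r = c r0 xc * U r0 r)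
    exact this
  -- pick the unique row for each column
  have hpick : ∀ r, ∃ r0, U r0 r ≠ 0 ∧ c' r = c r0 := by
    intro r
    obtain ⟨r0, h0⟩ := hcolnz r
    exact ⟨r0, h0, hUent r0 r h0⟩
  set σb : R → R := fun r => (hpick r).choose with hσb
  have hσbU : ∀ r, U (σb r) r ≠ 0 := fun r => (hpick r).choose_spec.1
  have hσbc : ∀ r, c' r = c (σb r) := fun r => (hpick r).choose_spec.2
  have hcol : ∀ r r0, U r0 r ≠ 0 → r0 = σb r := by
    intro r r0 hne
    exact hcinj ((hUent r0 r hne).symm.trans (hσbc r))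
  have hinjσ : Function.Injective σb := by
    intro r r' hrr
    by_contra hne
    set r0 := σb r with hr0
    have hw : MU.mulVec (Pi.single r (U r0 r') - Pi.single r' (U r0 r)) = 0 := by
      rw [Matrix.mulVec_sub, Matrix.mulVec_single, Matrix.mulVec_single]
      funext r1
      simp only [Pi.sub_apply, Pi.zero_apply, Pi.smul_apply, op_smul_eq_mul, Matrix.col, Matrix.transpose_apply, Matrix.of_apply, hMU]
      by_cases h1 : r1 = r0
      · subst h1; ring
      · have hz1 : U r1 r = 0 := by
          by_contra hnz; exact h1 (hcol r r1 hnz ▸ rfl)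
        have hz2 : U r1 r' = 0 := by
          by_contra hnz
          have := hcol r' r1 hnz
          rw [← hrr] at this
          exact h1 this
        rw [hz1, hz2]; ring
    have h0 : MU.mulVec (Pi.single r (U r0 r') - Pi.single r' (U r0 r)) = MU.mulVec 0 := by
      rw [hw, Matrix.mulVec_zero]
    have hv0 := hMUinj h0
    have hval := congrFun hv0 r
    rw [Pi.sub_apply, Pi.single_eq_same, Pi.single_eq_of_ne hne, sub_zero,
      Pi.zero_apply] at hval
    have hUne : U r0 r' ≠ 0 := by rw [hrr]; exact hσbU r'
    exact hUne hval
  have hbij : Function.Bijective σb := Finite.injective_iff_bijective.mp hinjσ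
  set σ0 : Equiv.Perm R := Equiv.ofBijective σb hbij with hσ0
  have hσ0app : ∀ r, σ0 r = σb r := fun r => rfl
  have hUzero : ∀ r0 r, r ≠ σ0.symm r0 → U r0 r = 0 := by
    intro r0 r hne
    by_contra hnz
    have h1 : r0 = σb r := hcol r r0 hnz
    have : σ0.symm r0 = r := by rw [h1, ← hσ0app, Equiv.symm_apply_apply]
    exact hne this.symm
  -- summed versions
  have E1s : ∀ r0 xb, π r0 * b r0 xb = ∑ r, π' r * (U r0 r * b' r xb) := by
    intro r0 xb
    have h0 := Finset.sum_congr rfl (fun xc (_ : xc ∈ (univ : Finset γ)) => E1 r0 xb xc)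
    rw [Finset.sum_comm] at h0
    have hL : ∑ xc, π r0 * (b r0 xb * c r0 xc) = π r0 * b r0 xb := by
      rw [← Finset.mul_sum, ← Finset.mul_sum, hc1, mul_one]
    have hR : ∀ r, ∑ xc, π' r * (U r0 r * (b' r xb * c' r xc))
        = π' r * (U r0 r * b' r xb) := by
      intro r
      rw [show (fun xc => π' r * (U r0 r * (b' r xb * c' r xc)))
          = fun xc => (π' r * (U r0 r * b' r xb)) * c' r xc from funext fun xc => by ring]
      rw [← Finset.mul_sum, hc'1, mul_one]
    rw [hL] at h0
    rw [h0]
    exact Finset.sum_congr rfl fun r _ => hR r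
  have E2s : ∀ r1 xa, π r1 * a r1 xa = ∑ r, π' r * (V r1 r * a' r xa) := by
    intro r1 xa
    have h0 := Finset.sum_congr rfl (fun xc (_ : xc ∈ (univ : Finset γ)) => E2 r1 xa xc)
    rw [Finset.sum_comm] at h0
    have hL : ∑ xc, π r1 * (a r1 xa * c r1 xc) = π r1 * a r1 xa := by
      rw [← Finset.mul_sum, ← Finset.mul_sum, hc1, mul_one]
    have hR : ∀ r, ∑ xc, π' r * (V r1 r * (a' r xa * c' r xc))
        = π' r * (V r1 r * a' r xa) := by
      intro r
      rw [show (fun xc => π' r * (V r1 r * (a' r xa * c' r xc)))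
          = fun xc => (π' r * (V r1 r * a' r xa)) * c' r xc from funext fun xc => by ring]
      rw [← Finset.mul_sum, hc'1, mul_one]
    rw [hL] at h0
    rw [h0]
    exact Finset.sum_congr rfl fun r _ => hR r
  -- collapse E1s
  have hbeq : ∀ r0 xb, π r0 * b r0 xb
      = π' (σ0.symm r0) * (U r0 (σ0.symm r0) * b' (σ0.symm r0) xb) := by
    intro r0 xb
    rw [E1s r0 xb]
    apply Finset.sum_eq_single (σ0.symm r0)
    · intro r _ hne
      rw [hUzero r0 r hne]; ring
    · intro habs; exact absurd (mem_univ _) habs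
  have N1 : ∀ r0, π r0 = π' (σ0.symm r0) * U r0 (σ0.symm r0) := by
    intro r0
    have h0 := Finset.sum_congr rfl (fun xb (_ : xb ∈ (univ : Finset β)) => hbeq r0 xb)
    rw [← Finset.mul_sum, hb1, mul_one] at h0
    rw [show (fun xb => π' (σ0.symm r0) * (U r0 (σ0.symm r0) * b' (σ0.symm r0) xb))
        = fun xb => (π' (σ0.symm r0) * U r0 (σ0.symm r0)) * b' (σ0.symm r0) xb
        from funext fun xb => by ring] at h0
    rw [← Finset.mul_sum, hb'1, mul_one] at h0
    exact h0
  -- V vanishing off the matching entry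
  have hVzero : ∀ r1 r, r ≠ σ0.symm r1 → V r1 r = 0 := by
    intro r1 r hne
    have h0 : σb r ≠ r1 := by
      intro hEq
      apply hne
      rw [← hEq, ← hσ0app, Equiv.symm_apply_apply]
    have h1 := starstar (σb r) r1
    rw [if_neg h0] at h1
    have h2 : ∑ r', π' r' * (U (σb r) r' * V r1 r') = π' r * (U (σb r) r * V r1 r) := by
      apply Finset.sum_eq_single r
      · intro r' _ hne'
        have : U (σb r) r' = 0 := by
          apply hUzero
          intro hEq
          apply hne'
          rw [hEq, ← hσ0app, Equiv.symm_apply_apply]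
        rw [this]; ring
      · intro habs; exact absurd (mem_univ _) habs
    rw [h2] at h1
    have hU0 : U (σb r) r ≠ 0 := hσbU r
    have hπ'0 : π' r ≠ 0 := ne_of_gt (hπ' r)
    by_contra hV0
    apply hπ'0
    have := h1.symm
    rcases mul_eq_zero.mp this with h | h
    · exact h
    · rcases mul_eq_zero.mp h with h' | h'
      · exact absurd h' hU0
      · exact absurd h' hV0
  have hV1 : ∀ r0, V r0 (σ0.symm r0) = 1 := by
    intro r0
    have h1 := starstar r0 r0
    rw [if_pos rfl] at h1
    have h2 : ∑ r, π' r * (U r0 r * V r0 r)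
        = π' (σ0.symm r0) * (U r0 (σ0.symm r0) * V r0 (σ0.symm r0)) := by
      apply Finset.sum_eq_single (σ0.symm r0)
      · intro r _ hne
        rw [hUzero r0 r hne]; ring
      · intro habs; exact absurd (mem_univ _) habs
    rw [h2] at h1
    have h3 : π r0 = (π' (σ0.symm r0) * U r0 (σ0.symm r0)) * V r0 (σ0.symm r0) := by
      rw [h1]; ring
    rw [← N1 r0] at h3
    have hπ0 : π r0 ≠ 0 := ne_of_gt (hπ r0)
    have h4 : π r0 * 1 = π r0 * V r0 (σ0.symm r0) := by rw [mul_one]; exact h3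
    exact (mul_left_cancel₀ hπ0 h4).symm
  -- collapse E2s
  have haeq : ∀ r1 xa, π r1 * a r1 xa = π' (σ0.symm r1) * a' (σ0.symm r1) xa := by
    intro r1 xa
    rw [E2s r1 xa]
    have h2 : ∑ r, π' r * (V r1 r * a' r xa)
        = π' (σ0.symm r1) * (V r1 (σ0.symm r1) * a' (σ0.symm r1) xa) := by
      apply Finset.sum_eq_single (σ0.symm r1)
      · intro r _ hne
        rw [hVzero r1 r hne]; ring
      · intro habs; exact absurd (mem_univ _) habs
    rw [h2, hV1, one_mul]
  have Nπ : ∀ r1, π' (σ0.symm r1) = π r1 := by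
    intro r1
    have h0 := Finset.sum_congr rfl (fun xa (_ : xa ∈ (univ : Finset α)) => haeq r1 xa)
    rw [← Finset.mul_sum, ha1, mul_one, ← Finset.mul_sum, ha'1, mul_one] at h0
    exact h0.symm
  -- final equalities
  refine ⟨σ0.symm, fun r => ⟨Nπ r, ?_, ?_, ?_⟩⟩
  · funext xa
    have h0 := haeq r xa
    rw [Nπ r] at h0
    exact (mul_left_cancel₀ (ne_of_gt (hπ r)) h0).symm
  · funext xb
    have hU1 : U r (σ0.symm r) = 1 := by
      have hN := N1 r
      rw [Nπ r] at hN
      have hπ0 : π r ≠ 0 := ne_of_gt (hπ r)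
      have h4 : π r * 1 = π r * U r (σ0.symm r) := by rw [mul_one]; exact hN
      exact (mul_left_cancel₀ hπ0 h4).symm
    have h0 := hbeq r xb
    rw [hU1, one_mul, Nπ r] at h0
    exact (mul_left_cancel₀ (ne_of_gt (hπ r)) h0).symm
  · rw [hσbc (σ0.symm r)]
    congr 1
    rw [← hσ0app, Equiv.apply_symm_apply]


/-- Hypercube chain lemma. -/
lemma chain {K : ℕ} (F : (Fin K → Bool) → (Fin K → Bool)) (k : Fin K) :
    ∀ (n : ℕ) (u u' : Fin K → Bool), (univ.filter (fun m => u m ≠ u' m)).card = n →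
    F u k ≠ F u' k →
    ∃ m, u m ≠ u' m ∧ ∃ w, F (Function.update w m (!(w m))) k ≠ F w k := by
  intro n
  induction n using Nat.strong_induction_on with
  | _ n ih =>
    intro u u' hcard hF
    have hne : u ≠ u' := fun e => hF (by rw [e])
    obtain ⟨m0, hm0⟩ := Function.ne_iff.mp hne
    by_cases hc : F (Function.update u m0 (!(u m0))) k = F u k
    · set u'' := Function.update u m0 (!(u m0)) with hu''
      have hFu'' : F u'' k ≠ F u' k := by rw [hc]; exact hF
      have hval : u'' m0 = u' m0 := by
        rw [hu'', Function.update_self]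
        revert hm0; cases u m0 <;> cases u' m0 <;> simp
      have hoth : ∀ m, m ≠ m0 → u'' m = u m := by
        intro m hm; rw [hu'', Function.update_of_ne hm]
      have hsub : (univ.filter fun m => u'' m ≠ u' m)
          = (univ.filter fun m => u m ≠ u' m).erase m0 := by
        ext m
        simp only [Finset.mem_erase, Finset.mem_filter, mem_univ, true_and]
        constructor
        · intro hm
          have hmm0 : m ≠ m0 := by
            intro e; rw [e, hval] at hm; exact hm rfl
          exact ⟨hmm0, by rw [← hoth m hmm0]; exact hm⟩
        · intro ⟨hmm0, hm⟩
          rw [hoth m hmm0]; exact hm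
      have hm0mem : m0 ∈ univ.filter fun m => u m ≠ u' m := by
        simp only [Finset.mem_filter, mem_univ, true_and]; exact hm0
      have hlt : (univ.filter fun m => u'' m ≠ u' m).card < n := by
        rw [hsub, ← hcard]
        exact Finset.card_erase_lt_of_mem hm0mem
      obtain ⟨m, hm, w, hw⟩ := ih _ hlt u'' u' rfl hFu''
      have hmm0 : m ≠ m0 := by
        intro e; rw [e, hval] at hm; exact hm rfl
      exact ⟨m, by rw [← hoth m hmm0]; exact hm, w, hw⟩
    · exact ⟨m0, hm0, u, hc⟩

lemma step2 {J K : ℕ} {Xt : Fin J → Type*} (Γ Γ' : Fin J → Fin K → Bool)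
    (P Q : (j : Fin J) → (Fin K → Bool) → Xt j → ℝ)
    (hPcomp : ∀ j h h', P j h = P j h' ↔ (∀ k, Γ j k = true → h k = h' k))
    (hQcomp : ∀ j h h', Q j h = Q j h' ↔ (∀ k, Γ' j k = true → h k = h' k))
    (hsubset : ∀ k l : Fin K, k ≠ l → ∃ j, Γ j k = true ∧ Γ j l = false)
    (σ : Equiv.Perm (Fin K → Bool)) (hQP : ∀ j h, Q j (σ h) = P j h) :
    ∃ (τ : Equiv.Perm (Fin K)) (s : Fin K → Bool),
      (∀ h k, σ h (τ k) = Bool.xor (h k) (s k)) ∧ (∀ j k, Γ' j (τ k) = Γ j k) := by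
  classical
  set flip : Fin K → (Fin K → Bool) → (Fin K → Bool) :=
    fun k h => Function.update h k (!(h k)) with hflipdef
  have iffE : ∀ j h h', (∀ k, Γ j k = true → h k = h' k)
      ↔ (∀ m, Γ' j m = true → σ h m = σ h' m) := by
    intro j h h'
    constructor
    · intro H
      apply (hQcomp j (σ h) (σ h')).mp
      rw [hQP, hQP]
      exact (hPcomp j h h').mpr H
    · intro H
      apply (hPcomp j h h').mp
      rw [← hQP j h, ← hQP j h']
      exact (hQcomp j (σ h) (σ h')).mpr H
  have hstable : ∀ j k m, Γ j k = false → Γ' j m = true →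
      ∀ h, σ (flip k h) m = σ h m := by
    intro j k m hjk hjm h
    have hag : ∀ k', Γ j k' = true → flip k h k' = h k' := by
      intro k' hk'
      have hkk : k' ≠ k := by
        intro e; rw [e, hjk] at hk'; exact Bool.noConfusion hk'
      exact Function.update_of_ne hkk _ _
    exact (iffE j (flip k h) h).mp hag m hjm
  have hstable' : ∀ j k m, Γ' j m = false → Γ j k = true →
      ∀ u, σ.symm (flip m u) k = σ.symm u k := by
    intro j k m hjm hjk u
    have H : ∀ m', Γ' j m' = true → σ (σ.symm (flip m u)) m' = σ (σ.symm u) m' := by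
      intro m' hm'
      rw [Equiv.apply_symm_apply, Equiv.apply_symm_apply]
      have hmm : m' ≠ m := by
        intro e; rw [e, hjm] at hm'; exact Bool.noConfusion hm'
      exact Function.update_of_ne hmm _ _
    exact (iffE j (σ.symm (flip m u)) (σ.symm u)).mpr H k hjk
  -- existence of matching coordinate
  have hexist : ∀ k, ∃ m, (∃ h, σ (flip k h) m ≠ σ h m)
      ∧ (∃ u, σ.symm (flip m u) k ≠ σ.symm u k) := by
    intro k
    set h0 : Fin K → Bool := fun _ => false with hh0
    have hFne : σ.symm (σ h0) k ≠ σ.symm (σ (flip k h0)) k := by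
      rw [Equiv.symm_apply_apply, Equiv.symm_apply_apply, hflipdef]
      simp [hh0]
    obtain ⟨m, hm, w, hw⟩ := chain (fun u => σ.symm u) k _ (σ h0) (σ (flip k h0)) rfl hFne
    exact ⟨m, ⟨h0, Ne.symm hm⟩, ⟨w, hw⟩⟩
  have hcolm : ∀ k, ∃ m, (∀ j, Γ j k = Γ' j m) := by
    intro k
    obtain ⟨m, hD, hD'⟩ := hexist k
    refine ⟨m, fun j => ?_⟩
    cases hjk : Γ j k with
    | true =>
      cases hjm : Γ' j m with
      | true => rfl
      | false =>
        exfalso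
        obtain ⟨u, hu⟩ := hD'
        exact hu (hstable' j k m hjm hjk u)
    | false =>
      cases hjm : Γ' j m with
      | false => rfl
      | true =>
        exfalso
        obtain ⟨h, hh⟩ := hD
        exact hh (hstable j k m hjk hjm h)
  set τ0 : Fin K → Fin K := fun k => (hcolm k).choose with hτ0
  have hτcol : ∀ k j, Γ j k = Γ' j (τ0 k) := fun k => (hcolm k).choose_spec
  have hτinj : Function.Injective τ0 := by
    intro k l hkl
    by_contra hne
    obtain ⟨j, hj1, hj2⟩ := hsubset k l hne
    have h1 := hτcol k j
    have h2 := hτcol l j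
    rw [hkl] at h1
    rw [hj1] at h1
    rw [← h1] at h2
    rw [hj2] at h2
    exact Bool.noConfusion h2
  set τ : Equiv.Perm (Fin K) :=
    Equiv.ofBijective τ0 (Finite.injective_iff_bijective.mp hτinj) with hτ
  have hτapp : ∀ k, τ k = τ0 k := fun k => rfl
  have honly : ∀ k m, m ≠ τ0 k → ∀ h, σ (flip k h) m = σ h m := by
    intro k m hne h
    set l := τ.symm m with hl
    have hτl : τ0 l = m := by rw [← hτapp]; exact τ.apply_symm_apply m
    have hlk : l ≠ k := by
      intro e
      rw [e] at hτl
      exact hne hτl.symm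
    obtain ⟨j, hj1, hj2⟩ := hsubset l k hlk
    have hΓ'm : Γ' j m = true := by rw [← hτl, ← hτcol l j]; exact hj1
    exact hstable j k m hj2 hΓ'm h
  have hflipne : ∀ k h, σ (flip k h) (τ0 k) = !(σ h (τ0 k)) := by
    intro k h
    have hσne : σ (flip k h) ≠ σ h := by
      intro e
      have := σ.injective e
      have := congrFun this k
      rw [hflipdef] at this
      simp only [Function.update_self] at this
      exact (Bool.not_ne_self (h k)) this
    have hneval : σ (flip k h) (τ0 k) ≠ σ h (τ0 k) := by
      intro hagree
      apply hσne
      funext m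
      by_cases hm : m = τ0 k
      · rw [hm]; exact hagree
      · exact honly k m hm h
    revert hneval
    cases σ (flip k h) (τ0 k) <;> cases σ h (τ0 k) <;> simp
  have hdep : ∀ (n : ℕ) (k : Fin K) (h h' : Fin K → Bool),
      (univ.filter fun l => h l ≠ h' l).card = n → h k = h' k →
      σ h (τ0 k) = σ h' (τ0 k) := by
    intro n
    induction n using Nat.strong_induction_on with
    | _ n ih =>
      intro k h h' hcard hk
      by_cases heq2 : h = h'
      · rw [heq2]
      obtain ⟨l, hl⟩ := Function.ne_iff.mp heq2
      have hlk : l ≠ k := by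
        intro e; rw [e] at hl; exact hl hk
      set h'' := flip l h with hh''
      have hval : h'' l = h' l := by
        rw [hh'', hflipdef]
        simp only [Function.update_self]
        revert hl; cases h l <;> cases h' l <;> simp
      have hoth : ∀ m, m ≠ l → h'' m = h m := by
        intro m hm; rw [hh'', hflipdef]; exact Function.update_of_ne hm _ _
      have h1 : σ h (τ0 k) = σ h'' (τ0 k) := by
        have hτne : τ0 k ≠ τ0 l := fun e => hlk (hτinj e.symm)
        exact (honly l (τ0 k) hτne h).symm
      have hsub : (univ.filter fun m => h'' m ≠ h' m)
          = (univ.filter fun m => h m ≠ h' m).erase l := by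
        ext m
        simp only [Finset.mem_erase, Finset.mem_filter, mem_univ, true_and]
        constructor
        · intro hm
          have hml : m ≠ l := by
            intro e; rw [e, hval] at hm; exact hm rfl
          exact ⟨hml, by rw [← hoth m hml]; exact hm⟩
        · intro ⟨hml, hm⟩
          rw [hoth m hml]; exact hm
      have hlmem : l ∈ univ.filter fun m => h m ≠ h' m := by
        simp only [Finset.mem_filter, mem_univ, true_and]; exact hl
      have hlt : (univ.filter fun m => h'' m ≠ h' m).card < n := by
        rw [hsub, ← hcard]
        exact Finset.card_erase_lt_of_mem hlmem
      have hk'' : h'' k = h' k := by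
        rw [hoth k (Ne.symm hlk)]; exact hk
      have h2 := ih _ hlt k h'' h' rfl hk''
      rw [h1, h2]
  set s : Fin K → Bool := fun k => σ (fun _ => false) (τ0 k) with hs
  refine ⟨τ, s, ?_, ?_⟩
  · intro h k
    rw [hτapp]
    cases hk : h k with
    | false =>
      have := hdep _ k h (fun _ => false) rfl hk
      rw [this, hs, Bool.false_xor]
    | true =>
      have hflipval : (flip k h) k = false := by
        rw [hflipdef]; simp only [Function.update_self, hk]; rfl
      have h1 : σ (flip k h) (τ0 k) = s k := by
        have := hdep _ k (flip k h) (fun _ => false) rfl hflipval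
        rw [this, hs]
      have h2 := hflipne k h
      rw [h1] at h2
      rw [Bool.true_xor, h2, Bool.not_not]
  · intro j k
    rw [hτapp]
    exact (hτcol k j).symm

/-- Identifiability of all model components of a binary latent causal model
with finite response spaces, when the true bipartite graph `Γ` (i) is double triangular with
witnessing disjoint row sets (the ranges of `f` and `g`), (ii) has every latent variable
measured by some row outside those sets, and (iii) satisfies the subset condition. Any
alternative model `(Γ', Q, π')` producing the same observed pmf agrees with `(Γ, P, π)` up to a
latent label permutation `τ` and sign flips `s` (via `φ(h)_{τ(k)} = h_k ⊕ s_k`). -/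
theorem stmt10 (J K : ℕ) (X : Fin J → Type*) [∀ j, Fintype (X j)] [∀ j, Nonempty (X j)]
    (Γ : Fin J → Fin K → Bool)
    (f g : Fin K → Fin J) (hf : Function.Injective f) (hg : Function.Injective g)
    (hfg : ∀ k k', f k ≠ g k')
    (htf : IsTriangular (fun k k' => Γ (f k) k'))
    (htg : IsTriangular (fun k k' => Γ (g k) k'))
    (hcover : ∀ k, ∃ j, j ∉ Set.range f ∪ Set.range g ∧ Γ j k = true)
    (hsubset : ∀ k l : Fin K, k ≠ l → ∃ j, Γ j k = true ∧ Γ j l = false)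
    (P : (j : Fin J) → (Fin K → Bool) → X j → ℝ)
    (hPnn : ∀ j h x, 0 ≤ P j h x) (hPsum : ∀ j h, ∑ x, P j h x = 1)
    (hPcomp : ∀ j h h', P j h = P j h' ↔ (∀ k, Γ j k = true → h k = h' k))
    (π : (Fin K → Bool) → ℝ) (hπpos : ∀ h, 0 < π h) (hπle : ∀ h, π h ≤ 1)
    (hπ1 : ∑ h, π h = 1)
    (Γ' : Fin J → Fin K → Bool)
    (Q : (j : Fin J) → (Fin K → Bool) → X j → ℝ)
    (hQnn : ∀ j h x, 0 ≤ Q j h x) (hQsum : ∀ j h, ∑ x, Q j h x = 1)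
    (hQcomp : ∀ j h h', Q j h = Q j h' ↔ (∀ k, Γ' j k = true → h k = h' k))
    (π' : (Fin K → Bool) → ℝ) (hπ'pos : ∀ h, 0 < π' h) (hπ'le : ∀ h, π' h ≤ 1)
    (hπ'1 : ∑ h, π' h = 1)
    (heq : ∀ x : (j : Fin J) → X j,
      ∑ h : Fin K → Bool, π h * ∏ j, P j h (x j)
        = ∑ h : Fin K → Bool, π' h * ∏ j, Q j h (x j)) :
    ∃ (τ : Equiv.Perm (Fin K)) (s : Fin K → Bool) (φ : (Fin K → Bool) → (Fin K → Bool)),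
      (∀ (h : Fin K → Bool) (k : Fin K), φ h (τ k) = Bool.xor (h k) (s k)) ∧
      (∀ j k, Γ' j (τ k) = Γ j k) ∧
      (∀ h, π' (φ h) = π h) ∧
      (∀ j h, Q j (φ h) = P j h) := by
  classical
  -- complement index type
  let pC : Fin J → Prop := fun j => (∀ k, f k ≠ j) ∧ (∀ k, g k ≠ j)
  let ιC := {j : Fin J // pC j}
  let toJ : (Fin K ⊕ (Fin K ⊕ ιC)) → Fin J := fun s =>
    match s with
    | Sum.inl k => f k
    | Sum.inr (Sum.inl k) => g k
    | Sum.inr (Sum.inr j) => j.1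
  have htoJinj : Function.Injective toJ := by
    intro s t hst
    match s, t with
    | Sum.inl k, Sum.inl k' => exact congrArg Sum.inl (hf hst)
    | Sum.inl k, Sum.inr (Sum.inl k') => exact absurd hst (hfg k k')
    | Sum.inl k, Sum.inr (Sum.inr j) => exact absurd hst (j.2.1 k)
    | Sum.inr (Sum.inl k), Sum.inl k' => exact absurd hst.symm (hfg k' k)
    | Sum.inr (Sum.inl k), Sum.inr (Sum.inl k') =>
      exact congrArg (Sum.inr ∘ Sum.inl) (hg hst)
    | Sum.inr (Sum.inl k), Sum.inr (Sum.inr j) => exact absurd hst (j.2.2 k)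
    | Sum.inr (Sum.inr j), Sum.inl k' => exact absurd hst.symm (j.2.1 k')
    | Sum.inr (Sum.inr j), Sum.inr (Sum.inl k') => exact absurd hst.symm (j.2.2 k')
    | Sum.inr (Sum.inr j), Sum.inr (Sum.inr j') =>
      exact congrArg (Sum.inr ∘ Sum.inr) (Subtype.ext hst)
  have htoJsurj : Function.Surjective toJ := by
    intro j
    by_cases h1 : ∃ k, f k = j
    · exact ⟨Sum.inl h1.choose, h1.choose_spec⟩
    by_cases h2 : ∃ k, g k = j
    · exact ⟨Sum.inr (Sum.inl h2.choose), h2.choose_spec⟩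
    · push_neg at h1 h2
      exact ⟨Sum.inr (Sum.inr ⟨j, h1, h2⟩), rfl⟩
  let eJ : (Fin K ⊕ (Fin K ⊕ ιC)) ≃ Fin J := Equiv.ofBijective toJ ⟨htoJinj, htoJsurj⟩
  -- assembled point
  let y : (∀ k, X (f k)) → (∀ k, X (g k)) → (∀ jc : ιC, X jc.1) → (∀ s, X (toJ s)) :=
    fun xa xb xc s => match s with
      | Sum.inl k => xa k
      | Sum.inr (Sum.inl k) => xb k
      | Sum.inr (Sum.inr jc) => xc jc
  -- product splitting
  have key : ∀ (R : (j : Fin J) → (Fin K → Bool) → X j → ℝ) (h : Fin K → Bool)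
      (y' : ∀ s, X (toJ s)),
      ∏ j, R j h ((Equiv.piCongrLeft X eJ) y' j)
        = (∏ k, R (f k) h (y' (Sum.inl k)))
          * ((∏ k, R (g k) h (y' (Sum.inr (Sum.inl k))))
            * (∏ jc : ιC, R jc.1 h (y' (Sum.inr (Sum.inr jc))))) := by
    intro R h y'
    calc ∏ j, R j h ((Equiv.piCongrLeft X eJ) y' j)
        = ∏ s, R (eJ s) h ((Equiv.piCongrLeft X eJ) y' (eJ s)) := (Equiv.prod_comp eJ _).symm
      _ = ∏ s, R (toJ s) h (y' s) := by
          apply Finset.prod_congr rfl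
          intro s _
          rw [show (Equiv.piCongrLeft X eJ) y' (eJ s) = y' s
            from Equiv.piCongrLeft_apply_apply X eJ y' s]
          rfl
      _ = _ := by
          rw [Fintype.prod_sum_type]
          congr 1
          rw [Fintype.prod_sum_type]
  -- block vectors
  let A : (Fin K → Bool) → (∀ k, X (f k)) → ℝ := fun h xa => ∏ k, P (f k) h (xa k)
  let A' : (Fin K → Bool) → (∀ k, X (f k)) → ℝ := fun h xa => ∏ k, Q (f k) h (xa k)
  let B : (Fin K → Bool) → (∀ k, X (g k)) → ℝ := fun h xb => ∏ k, P (g k) h (xb k)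
  let B' : (Fin K → Bool) → (∀ k, X (g k)) → ℝ := fun h xb => ∏ k, Q (g k) h (xb k)
  let C : (Fin K → Bool) → (∀ jc : ιC, X jc.1) → ℝ := fun h xc => ∏ jc : ιC, P jc.1 h (xc jc)
  let C' : (Fin K → Bool) → (∀ jc : ιC, X jc.1) → ℝ := fun h xc => ∏ jc : ιC, Q jc.1 h (xc jc)
  have heq3 : ∀ xa xb xc, ∑ h, π h * (A h xa * B h xb * C h xc)
      = ∑ h, π' h * (A' h xa * B' h xb * C' h xc) := by
    intro xa xb xc
    have h0 := heq ((Equiv.piCongrLeft X eJ) (y xa xb xc))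
    calc ∑ h, π h * (A h xa * B h xb * C h xc)
        = ∑ h, π h * ∏ j, P j h ((Equiv.piCongrLeft X eJ) (y xa xb xc) j) := by
          apply Finset.sum_congr rfl; intro h _
          rw [key P h (y xa xb xc)]
          show π h * (A h xa * B h xb * C h xc) = π h * (A h xa * (B h xb * C h xc))
          ring
      _ = ∑ h, π' h * ∏ j, Q j h ((Equiv.piCongrLeft X eJ) (y xa xb xc) j) := h0
      _ = ∑ h, π' h * (A' h xa * B' h xb * C' h xc) := by
          apply Finset.sum_congr rfl; intro h _
          rw [key Q h (y xa xb xc)]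
          show π' h * (A' h xa * (B' h xb * C' h xc)) = π' h * (A' h xa * B' h xb * C' h xc)
          ring
  -- sums equal one
  have prodsum : ∀ {ι : Type} [Fintype ι] [DecidableEq ι] (Y : ι → Type _)
      [∀ i, Fintype (Y i)] (r : (i : ι) → Y i → ℝ), (∀ i, ∑ y, r i y = 1) →
      ∑ x : ∀ i, Y i, ∏ i, r i (x i) = 1 := by
    intro ι _ _ Y _ r hr
    rw [← Fintype.prod_sum]
    calc ∏ i, ∑ y, r i y = ∏ i : ι, (1:ℝ) := Finset.prod_congr rfl (fun i _ => hr i)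
      _ = 1 := Finset.prod_const_one
  have hA1 : ∀ h, ∑ xa, A h xa = 1 := fun h => prodsum _ _ (fun k => hPsum (f k) h)
  have hA'1 : ∀ h, ∑ xa, A' h xa = 1 := fun h => prodsum _ _ (fun k => hQsum (f k) h)
  have hB1 : ∀ h, ∑ xb, B h xb = 1 := fun h => prodsum _ _ (fun k => hPsum (g k) h)
  have hB'1 : ∀ h, ∑ xb, B' h xb = 1 := fun h => prodsum _ _ (fun k => hQsum (g k) h)
  have hC1 : ∀ h, ∑ xc, C h xc = 1 := fun h => prodsum _ _ (fun jc => hPsum jc.1 h)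
  have hC'1 : ∀ h, ∑ xc, C' h xc = 1 := fun h => prodsum _ _ (fun jc => hQsum jc.1 h)
  -- linear independence
  have hAli : LinearIndependent ℝ A :=
    block_indep_s10 (fun k => X (f k)) (fun k m => Γ (f k) m) htf
      (fun k h => P (f k) h) (fun k h => hPsum (f k) h) (fun k h h' => hPcomp (f k) h h')
  have hBli : LinearIndependent ℝ B :=
    block_indep_s10 (fun k => X (g k)) (fun k m => Γ (g k) m) htg
      (fun k h => P (g k) h) (fun k h => hPsum (g k) h) (fun k h h' => hPcomp (g k) h h')
  -- injectivity of C
  have hCinj : Function.Injective C := by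
    intro h h' hCC
    by_contra hne
    obtain ⟨k, hk⟩ := Function.ne_iff.mp hne
    obtain ⟨j, hjmem, hjk⟩ := hcover k
    have hpC : pC j := by
      rw [Set.mem_union] at hjmem
      push_neg at hjmem
      obtain ⟨h1, h2⟩ := hjmem
      rw [Set.mem_range] at h1 h2
      push_neg at h1 h2
      exact ⟨h1, h2⟩
    set jc : ιC := ⟨j, hpC⟩ with hjc
    have := factor_eq (ι := ιC) (Y := fun jc => X jc.1)
      (fun jc => P jc.1 h) (fun jc => P jc.1 h')
      (fun jc => hPsum jc.1 h) (fun jc => hPsum jc.1 h')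
      (fun xc => congrFun hCC xc) jc
    have hkk := (hPcomp j h h').mp this k hjk
    exact hk hkk
  -- apply core
  obtain ⟨σ, hσ⟩ := core π π' A A' B B' C C' hπpos hπ'pos hAli hBli
    hA1 hA'1 hB1 hB'1 hC1 hC'1 hCinj heq3
  -- conditional distributions match
  have hQPall : ∀ j h, Q j (σ h) = P j h := by
    intro j h
    obtain ⟨s, hs⟩ := htoJsurj j
    match s, hs with
    | Sum.inl k, hs =>
      have := factor_eq (ι := Fin K) (Y := fun k => X (f k))
        (fun k => Q (f k) (σ h)) (fun k => P (f k) h)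
        (fun k => hQsum (f k) (σ h)) (fun k => hPsum (f k) h)
        (fun xa => congrFun ((hσ h).2.1) xa) k
      rw [← hs]; exact this
    | Sum.inr (Sum.inl k), hs =>
      have := factor_eq (ι := Fin K) (Y := fun k => X (g k))
        (fun k => Q (g k) (σ h)) (fun k => P (g k) h)
        (fun k => hQsum (g k) (σ h)) (fun k => hPsum (g k) h)
        (fun xb => congrFun ((hσ h).2.2.1) xb) k
      rw [← hs]; exact this
    | Sum.inr (Sum.inr jc), hs =>
      have := factor_eq (ι := ιC) (Y := fun jc => X jc.1)
        (fun jc => Q jc.1 (σ h)) (fun jc => P jc.1 h)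
        (fun jc => hQsum jc.1 (σ h)) (fun jc => hPsum jc.1 h)
        (fun xc => congrFun ((hσ h).2.2.2) xc) jc
      rw [← hs]; exact this
  obtain ⟨τ, s, h1, h2⟩ := step2 Γ Γ' P Q hPcomp hQcomp hsubset σ hQPall
  exact ⟨τ, s, fun h => σ h, h1, h2, fun h => (hσ h).1, hQPall⟩
end
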